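/- arXiv:math/0204353 — 4 statements merged into one kernel-verified Lean document; each statement's English description precedes it below -/
import Mathlib

section
/- Suppose the semigroup S is word hyperbolic with respect to a choice of generators Σ⁺ → S and regular combing R. Then there exists a constant δ such that for every minimal R-triangle D = (u, v, w), every vertex on the side w is at distance at most δ (in the Cayley graph metric) from some vertex on the union of the sides u and v, for every choice of basepoint p. -/
/-- Evaluation of a nonempty word in a semigroup via a map on letters;
the empty word evaluates to `none`. -/
def evalS {α S : Type*} [Semigroup S] (f : α → S) : List α → Option S
  | [] => none
  | a :: as => some (as.foldl (fun s b => s * f b) (f a))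

/-- `f : α → S` determines a choice of generators `α⁺ → S`, i.e. the induced
semigroup homomorphism from the free semigroup on `α` is surjective. -/
def IsChoice {α S : Type*} [Semigroup S] (f : α → S) : Prop :=
  ∀ s : S, ∃ w : List α, evalS f w = some s

/-- The encoding of `u#v#wʳ` as a word over `Option α`, with `none` playing the
role of the fresh symbol `#`. -/
def hashWord {α : Type*} (u v w : List α) : List (Option α) :=
  u.map some ++ none :: v.map some ++ none :: w.reverse.map some

/-- The multiplication table of the language `R` with respect to `f`:
all words `u#v#wʳ` with `u,v,w ∈ R` and `ū·v̄ = w̄`. -/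
def mulTable {α S : Type*} [Semigroup S] (f : α → S) (R : Language α) :
    Language (Option α) :=
  { x | ∃ u v w, u ∈ R ∧ v ∈ R ∧ w ∈ R ∧
      (∃ su sv, evalS f u = some su ∧ evalS f v = some sv ∧
        evalS f w = some (su * sv)) ∧ x = hashWord u v w }

/-- `R` is a combing for `S` with respect to `f`: a set of nonempty words
representing every element of `S`. -/
def IsCombing {α S : Type*} [Semigroup S] (f : α → S) (R : Language α) : Prop :=
  ([] : List α) ∉ R ∧ ∀ s : S, ∃ w ∈ R, evalS f w = some s

/-- A semigroup is word hyperbolic if for some choice of generators there is a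
regular combing whose multiplication table is context-free. -/
def WordHyperbolic (S : Type*) [Semigroup S] : Prop :=
  ∃ (α : Type) (_ : Fintype α) (f : α → S), IsChoice f ∧
    ∃ R : Language α, R.IsRegular ∧ IsCombing f R ∧ (mulTable f R).IsContextFree

/-- Evaluation of a word (possibly empty) in `S` with an identity adjoined. -/
def evalW {α S : Type*} [Semigroup S] (f : α → S) (w : List α) : WithOne S :=
  (w.map fun a => (f a : WithOne S)).prod

/-- The Cayley graph of `S` with respect to `f : α → S`: the vertex set is
`S ∪ {*}` (with `*` the adjoined identity), and for each letter `a` there is an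
undirected edge from every vertex `x` to `x·ā`. -/
def cayley {α S : Type*} [Semigroup S] (f : α → S) : SimpleGraph (WithOne S) :=
  SimpleGraph.fromRel fun x y => ∃ a : α, x * (f a : WithOne S) = y

/-- The set of vertices visited by the directed path labelled `w` starting at the
vertex `p`: namely `p` together with `p · t̄` for the nonempty prefixes `t` of `w`. -/
def pathVerts {α S : Type*} [Semigroup S] (f : α → S) (p : WithOne S) (w : List α) :
    Set (WithOne S) :=
  { q | ∃ t : List α, t <+: w ∧ q = p * evalW f t }

/-- `u` is a minimal word of `R`: it has minimum length among all words of `R`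
representing the same element of `S`. -/
def IsMinimalWord {α S : Type*} [Semigroup S] (f : α → S) (R : Language α)
    (u : List α) : Prop :=
  u ∈ R ∧ ∀ v ∈ R, evalS f v = evalS f u → u.length ≤ v.length

/-- `(u, v, w)` is a triangle: `ū·v̄ = w̄`. -/
def IsTriangle {α S : Type*} [Semigroup S] (f : α → S) (u v w : List α) : Prop :=
  ∃ su sv : S, evalS f u = some su ∧ evalS f v = some sv ∧
    evalS f w = some (su * sv)



namespace ThinTri

open ContextFreeGrammar

variable {T N : Type}

/-- Forests of parse trees, flattened into a single inductive type.
`consT a e` is a terminal leaf followed by the rest of the forest;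
`consN A ch e` is a node labelled `A` with children forest `ch`, followed by `e`. -/
inductive E (T N : Type) : Type
  | nil : E T N
  | consT : T → E T N → E T N
  | consN : N → E T N → E T N → E T N

namespace E

def yield : E T N → List T
  | .nil => []
  | .consT a e => a :: e.yield
  | .consN _ ch e => ch.yield ++ e.yield

def syms : E T N → List (Symbol T N)
  | .nil => []
  | .consT a e => .terminal a :: e.syms
  | .consN A _ e => .nonterminal A :: e.syms

def size : E T N → ℕ
  | .nil => 0
  | .consT _ e => 1 + e.size
  | .consN _ ch e => 1 + ch.size + e.size

def append : E T N → E T N → E T N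
  | .nil, e' => e'
  | .consT a e, e' => .consT a (e.append e')
  | .consN A ch e, e' => .consN A ch (e.append e')

@[simp] lemma append_syms (e e' : E T N) : (e.append e').syms = e.syms ++ e'.syms := by
  induction e with
  | nil => rfl
  | consT a e ih => simp [append, syms, ih]
  | consN A ch e ih1 ih2 => simp [append, syms, ih2]

@[simp] lemma append_yield (e e' : E T N) : (e.append e').yield = e.yield ++ e'.yield := by
  induction e with
  | nil => rfl
  | consT a e ih => simp [append, yield, ih]
  | consN A ch e ih1 ih2 => simp [append, yield, ih2]

variable {g : ContextFreeGrammar T}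

/-- A forest is valid if every node corresponds to a grammar rule. -/
inductive Valid (g : ContextFreeGrammar T) : E T g.NT → Prop
  | nil : Valid g .nil
  | consT (a : T) {e : E T g.NT} : Valid g e → Valid g (.consT a e)
  | consN {A : g.NT} {ch e : E T g.NT}
      (hr : ∃ r ∈ g.rules, r.input = A ∧ ch.syms = r.output)
      (hch : Valid g ch) (he : Valid g e) : Valid g (.consN A ch e)

/-- Validity of a single node with label `A` and children `ch`. -/
def ValidN (g : ContextFreeGrammar T) (A : g.NT) (ch : E T g.NT) : Prop :=
  (∃ r ∈ g.rules, r.input = A ∧ ch.syms = r.output) ∧ Valid g ch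

lemma Valid.append {e e' : E T g.NT} (h : Valid g e) (h' : Valid g e') :
    Valid g (e.append e') := by
  induction h with
  | nil => exact h'
  | consT a _ ih => exact .consT a ih
  | consN hr hch _ ihch ihe => exact .consN hr hch ihe

lemma valid_append_iff {e e' : E T g.NT} :
    Valid g (e.append e') ↔ Valid g e ∧ Valid g e' := by
  constructor
  · intro h
    induction e with
    | nil => exact ⟨.nil, h⟩
    | consT a e ih =>
        cases h with
        | consT _ h => exact ⟨.consT a (ih h).1, (ih h).2⟩
    | consN A ch e ih1 ih2 =>
        cases h with
        | consN hr hch h => exact ⟨.consN hr hch (ih2 h).1, (ih2 h).2⟩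
  · exact fun ⟨h, h'⟩ => h.append h'

/-- A valid forest's symbols derive its yield. -/
lemma Valid.derives {e : E T g.NT} (h : Valid g e) :
    g.Derives e.syms (e.yield.map Symbol.terminal) := by
  induction h with
  | nil => exact Derives.refl _
  | consT a h ih =>
      show g.Derives ([Symbol.terminal a] ++ _) _
      have := Derives.append_left (g := g) ih [Symbol.terminal a]
      simpa [yield, syms] using this
  | consN hr hch he ihch ihe =>
      rename_i A ch e
      show g.Derives (Symbol.nonterminal A :: e.syms)
        ((ch.yield ++ e.yield).map Symbol.terminal)
      obtain ⟨r, hrmem, hin, hout⟩ := hr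
      have h1 : g.Produces (Symbol.nonterminal A :: e.syms) (ch.syms ++ e.syms) := by
        refine ⟨r, hrmem, ?_⟩
        rw [hout, ← hin]
        exact ContextFreeRule.Rewrites.head e.syms
      refine h1.trans_derives ?_
      rw [List.map_append]
      exact (Derives.append_right ihch _).trans (Derives.append_left ihe _)

/-- Splitting a forest along a decomposition of its symbol list. -/
lemma split {e : E T N} {l₁ l₂ : List (Symbol T N)} (h : e.syms = l₁ ++ l₂) :
    ∃ e₁ e₂ : E T N, e = e₁.append e₂ ∧ e₁.syms = l₁ ∧ e₂.syms = l₂ := by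
  induction l₁ generalizing e with
  | nil => exact ⟨.nil, e, rfl, rfl, by simpa using h⟩
  | cons s l₁ ih =>
      cases e with
      | nil => simp [syms] at h
      | consT a e =>
          simp only [syms, List.cons_append, List.cons.injEq] at h
          obtain ⟨e₁, e₂, rfl, h1, h2⟩ := ih h.2
          exact ⟨.consT a e₁, e₂, rfl, by simp [syms, append, h1, ← h.1], h2⟩
      | consN A ch e =>
          simp only [syms, List.cons_append, List.cons.injEq] at h
          obtain ⟨e₁, e₂, rfl, h1, h2⟩ := ih h.2
          exact ⟨.consN A ch e₁, e₂, rfl, by simp [syms, append, h1, ← h.1], h2⟩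

def ofTerms : List T → E T N
  | [] => .nil
  | a :: l => .consT a (ofTerms l)

@[simp] lemma ofTerms_syms (l : List T) :
    (ofTerms (N := N) l).syms = l.map Symbol.terminal := by
  induction l with
  | nil => rfl
  | cons a l ih => simp [ofTerms, syms, ih]

@[simp] lemma ofTerms_yield (l : List T) : (ofTerms (N := N) l).yield = l := by
  induction l with
  | nil => rfl
  | cons a l ih => simp [ofTerms, yield, ih]

lemma ofTerms_valid (l : List T) : Valid g (ofTerms l) := by
  induction l with
  | nil => exact .nil
  | cons a l ih => exact .consT a ih

lemma syms_terminal_yield {e : E T N} {z : List T}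
    (h : e.syms = z.map Symbol.terminal) : e.yield = z := by
  induction z generalizing e with
  | nil =>
      cases e with
      | nil => rfl
      | consT a e => simp [syms] at h
      | consN A ch e => simp [syms] at h
  | cons a z ih =>
      cases e with
      | nil => simp [syms] at h
      | consT b e =>
          simp only [syms, List.map_cons, List.cons.injEq, Symbol.terminal.injEq] at h
          simp [yield, h.1, ih h.2]
      | consN A ch e => simp [syms] at h

/-- Completeness: a derivation to a terminal word yields a valid forest. -/
lemma derives_forest {γ : List (Symbol T g.NT)} {z : List T}
    (h : g.Derives γ (z.map Symbol.terminal)) :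
    ∃ e : E T g.NT, Valid g e ∧ e.syms = γ ∧ e.yield = z := by
  induction h using Relation.ReflTransGen.head_induction_on with
  | refl => exact ⟨ofTerms z, ofTerms_valid z, by simp, by simp⟩
  | head hstep _ ih =>
      obtain ⟨e, hval, hsyms, hyield⟩ := ih
      obtain ⟨r, hr, hrw⟩ := hstep
      obtain ⟨p, q, h1, h2⟩ := hrw.exists_parts
      rw [h2] at hsyms
      obtain ⟨e₁, e₂₃, rfl, hs1, hs23⟩ := split (by simpa using hsyms)
      obtain ⟨e₂, e₃, rfl, hs2, hs3⟩ := split hs23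
      obtain ⟨hv1, hv2, hv3⟩ : Valid g e₁ ∧ Valid g e₂ ∧ Valid g e₃ := by
        rw [valid_append_iff, valid_append_iff] at hval
        exact ⟨hval.1, hval.2.1, hval.2.2⟩
      refine ⟨e₁.append (.consN r.input e₂ e₃), ?_, ?_, ?_⟩
      · exact hv1.append (.consN ⟨r, hr, rfl, hs2⟩ hv2 hv3)
      · rw [append_syms, h1, hs1]
        simp [syms, hs3]
      · have : (e₁.append (e₂.append e₃)).yield = z := hyield
        simpa [yield] using this

end E
end ThinTri
namespace ThinTri
namespace E

variable {T N : Type}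

/-- `NodeAt e pre post A ch`: somewhere in the forest `e` there is a node labelled
`A` with children forest `ch`, and the yield of `e` decomposes as
`pre ++ ch.yield ++ post`. -/
inductive NodeAt : E T N → List T → List T → N → E T N → Prop
  | hereTop {A : N} {ch e : E T N} : NodeAt (.consN A ch e) [] e.yield A ch
  | inChild {B : N} {ch e : E T N} {pre post : List T} {A : N} {c : E T N} :
      NodeAt ch pre post A c → NodeAt (.consN B ch e) pre (post ++ e.yield) A c
  | restT {a : T} {e : E T N} {pre post : List T} {A : N} {c : E T N} :
      NodeAt e pre post A c → NodeAt (.consT a e) (a :: pre) post A c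
  | restN {B : N} {ch e : E T N} {pre post : List T} {A : N} {c : E T N} :
      NodeAt e pre post A c → NodeAt (.consN B ch e) (ch.yield ++ pre) post A c

lemma NodeAt.yield_eq {e : E T N} {pre post : List T} {A : N} {ch : E T N}
    (h : NodeAt e pre post A ch) : e.yield = pre ++ ch.yield ++ post := by
  induction h with
  | hereTop => simp [E.yield]
  | inChild _ ih => simp [E.yield, ih]
  | restT _ ih => simp [E.yield, ih]
  | restN _ ih => simp [E.yield, ih]

lemma NodeAt.size_lt {e : E T N} {pre post : List T} {A : N} {ch : E T N}
    (h : NodeAt e pre post A ch) : ch.size < e.size := by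
  induction h with
  | hereTop => simp [E.size]; omega
  | inChild _ ih => simp [E.size]; omega
  | restT _ ih => simp [E.size]; omega
  | restN _ ih => simp [E.size]; omega

variable {g : ContextFreeGrammar T}

lemma NodeAt.validN {e : E T g.NT} {pre post : List T} {A : g.NT} {ch : E T g.NT}
    (h : NodeAt e pre post A ch) (hv : Valid g e) : ValidN g A ch := by
  induction h with
  | hereTop => cases hv with | consN hr hch he => exact ⟨hr, hch⟩
  | inChild _ ih => cases hv with | consN hr hch he => exact ih hch
  | restT _ ih => cases hv with | consT _ hv => exact ih hv
  | restN _ ih => cases hv with | consN hr hch he => exact ih he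

lemma NodeAt.trans {e : E T N} {P Q p q : List T} {A B : N} {ch c : E T N}
    (h1 : NodeAt e P Q A ch) (h2 : NodeAt ch p q B c) :
    NodeAt e (P ++ p) (q ++ Q) B c := by
  induction h1 with
  | hereTop => simpa using NodeAt.inChild h2
  | inChild h ih => simpa [List.append_assoc] using NodeAt.inChild (ih h2)
  | restT h ih => simpa [List.append_assoc] using NodeAt.restT (ih h2)
  | restN h ih => simpa [List.append_assoc] using NodeAt.restN (ih h2)

/-- Replacing the children forest of a node occurrence. -/
lemma NodeAt.replace {e : E T g.NT} {pre post : List T} {A : g.NT} {ch : E T g.NT}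
    (h : NodeAt e pre post A ch) (ch' : E T g.NT) :
    ∃ e' : E T g.NT,
      (Valid g e → ValidN g A ch' → Valid g e') ∧ e'.syms = e.syms ∧
      e'.yield = pre ++ ch'.yield ++ post ∧ e'.size + ch.size = e.size + ch'.size := by
  induction h with
  | hereTop =>
      rename_i A₀ ch₀ e₀
      refine ⟨.consN A₀ ch' e₀, ?_, rfl, by simp [E.yield], by simp [E.size]; omega⟩
      intro hv hn
      cases hv with | consN hr hch he => exact .consN hn.1 hn.2 he
  | inChild h ih =>
      rename_i B₀ ch₀ e₀ pre₀ post₀ A₀ c₀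
      obtain ⟨ch₀', hval, hsyms, hyield, hsize⟩ := ih
      refine ⟨.consN B₀ ch₀' e₀, ?_, by simp [E.syms, hsyms], by simp [E.yield, hyield], by
        simp [E.size]; omega⟩
      intro hv hn
      cases hv with
      | consN hr hch he =>
          refine .consN ?_ (hval hch hn) he
          obtain ⟨r, hrm, hri, hro⟩ := hr
          exact ⟨r, hrm, hri, by rw [hsyms, hro]⟩
  | restT h ih =>
      rename_i a₀ e₀ pre₀ post₀ A₀ c₀
      obtain ⟨e₀', hval, hsyms, hyield, hsize⟩ := ih
      refine ⟨.consT a₀ e₀', ?_, by simp [E.syms, hsyms], by simp [E.yield, hyield], by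
        simp [E.size]; omega⟩
      intro hv hn
      cases hv with | consT _ hv => exact .consT a₀ (hval hv hn)
  | restN h ih =>
      rename_i B₀ ch₀ e₀ pre₀ post₀ A₀ c₀
      obtain ⟨e₀', hval, hsyms, hyield, hsize⟩ := ih
      refine ⟨.consN B₀ ch₀ e₀', ?_, by simp [E.syms, hsyms], by simp [E.yield, hyield], by
        simp [E.size]; omega⟩
      intro hv hn
      cases hv with | consN hr hch he => exact .consN hr hch (hval he hn)

/-- Items (top-level entries) of a forest with their yield contexts. -/
inductive ItemAt : E T N → List T → List T → (T ⊕ N × E T N) → Prop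
  | hereT {a : T} {e : E T N} : ItemAt (.consT a e) [] e.yield (.inl a)
  | hereN {A : N} {ch e : E T N} : ItemAt (.consN A ch e) [] e.yield (.inr (A, ch))
  | restT {a : T} {e : E T N} {pre post : List T} {it} :
      ItemAt e pre post it → ItemAt (.consT a e) (a :: pre) post it
  | restN {A : N} {ch e : E T N} {pre post : List T} {it} :
      ItemAt e pre post it → ItemAt (.consN A ch e) (ch.yield ++ pre) post it

def yieldIt : (T ⊕ N × E T N) → List T
  | .inl a => [a]
  | .inr (_, ch) => ch.yield

lemma ItemAt.yield_eq {e : E T N} {pre post : List T} {it}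
    (h : ItemAt e pre post it) : e.yield = pre ++ yieldIt it ++ post := by
  induction h with
  | hereT => simp [E.yield, yieldIt]
  | hereN => simp [E.yield, yieldIt]
  | restT _ ih => simp [E.yield, ih]
  | restN _ ih => simp [E.yield, ih]

lemma ItemAt.nodeAt {e : E T N} {pre post : List T} {A : N} {ch : E T N}
    (h : ItemAt e pre post (.inr (A, ch))) : NodeAt e pre post A ch := by
  induction e generalizing pre with
  | nil => cases h
  | consT a e ih =>
      cases h with
      | restT h => exact .restT (ih h)
  | consN B ch₀ e ih1 ih2 =>
      cases h with
      | hereN => exact .hereTop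
      | restN h => exact .restN (ih2 h)

/-- Finding the item containing a given position of the yield. -/
lemma find_item {e : E T N} {q off : ℕ} (h1 : off ≤ q) (h2 : q < off + e.yield.length) :
    ∃ pre post it, ItemAt e pre post it ∧ off + pre.length ≤ q ∧
      q < off + pre.length + (yieldIt it).length := by
  induction e generalizing off with
  | nil => simp [E.yield] at h2; omega
  | consT a e ih =>
      rcases Nat.lt_or_ge q (off + 1) with hq | hq
      · exact ⟨[], e.yield, .inl a, .hereT, by simpa using h1, by simp [yieldIt]; omega⟩
      · simp only [E.yield, List.length_cons] at h2
        obtain ⟨pre, post, it, hit, hle, hlt⟩ := ih (off := off + 1) hq (by omega)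
        exact ⟨a :: pre, post, it, .restT hit, by simp; omega, by simp; omega⟩
  | consN A ch e ih1 ih2 =>
      rcases Nat.lt_or_ge q (off + ch.yield.length) with hq | hq
      · exact ⟨[], e.yield, .inr (A, ch), .hereN, by simpa using h1, by simp [yieldIt]; omega⟩
      · simp only [E.yield, List.length_append] at h2
        obtain ⟨pre, post, it, hit, hle, hlt⟩ := ih2 (off := off + ch.yield.length) hq (by omega)
        exact ⟨ch.yield ++ pre, post, it, .restN hit, by simp; omega, by simp; omega⟩

end E
end ThinTri
namespace ThinTri
namespace E

variable {T N : Type} {g : ContextFreeGrammar T}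

/-- No node has a strictly nested node with the same label. -/
def NoRep (e : E T N) : Prop :=
  ∀ pre post A ch, NodeAt e pre post A ch → ∀ a b c, NodeAt ch a b A c → False

open Classical in
noncomputable def NTfin (g : ContextFreeGrammar T) : Finset g.NT :=
  g.rules.image ContextFreeRule.input

lemma ValidN.mem_NTfin {A : g.NT} {ch : E T g.NT} (h : ValidN g A ch) :
    A ∈ NTfin g := by
  classical
  obtain ⟨⟨r, hrm, hri, _⟩, _⟩ := h
  exact Finset.mem_image.2 ⟨r, hrm, hri⟩

lemma yield_le_of_items {C : ℕ} (hC : 1 ≤ C) (e : E T N)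
    (H : ∀ a b it, ItemAt e a b it → (yieldIt it).length ≤ C) :
    e.yield.length ≤ e.syms.length * C := by
  induction e with
  | nil => simp [yield, syms]
  | consT a e ih =>
      have h1 := ih (fun a' b' it' hit => H _ _ _ (.restT hit))
      simp only [yield, syms, List.length_cons]
      calc e.yield.length + 1 ≤ e.syms.length * C + C := by omega
        _ = (e.syms.length + 1) * C := by ring
  | consN A ch e ih1 ih2 =>
      have h1 := ih2 (fun a' b' it' hit => H _ _ _ (.restN hit))
      have h2 : ch.yield.length ≤ C := H _ _ _ (.hereN)
      simp only [yield, syms, List.length_cons, List.length_append]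
      calc ch.yield.length + e.yield.length ≤ C + e.syms.length * C := by omega
        _ = (e.syms.length + 1) * C := by ring

lemma NoRep.lift_consT {a : T} {e : E T N} (h : NoRep (.consT a e)) : NoRep e :=
  fun pre post A ch h1 a' b c h2 => h _ _ _ _ (.restT h1) a' b c h2

lemma NoRep.lift_rest {A : N} {ch e : E T N} (h : NoRep (.consN A ch e)) : NoRep e :=
  fun pre post B c h1 a' b c' h2 => h _ _ _ _ (.restN h1) a' b c' h2

lemma NoRep.lift_child {A : N} {ch e : E T N} (h : NoRep (.consN A ch e)) : NoRep ch :=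
  fun pre post B c h1 a' b c' h2 => h _ _ _ _ (.inChild h1) a' b c' h2

lemma yield_bound {k : ℕ} (hk : ∀ r ∈ g.rules, r.output.length ≤ k) (hk1 : 1 ≤ k) :
    ∀ (e : E T g.NT) (F : Finset g.NT), Valid g e → NoRep e →
      (∀ pre post A ch, NodeAt e pre post A ch → A ∈ F) →
      e.yield.length ≤ e.syms.length * k ^ F.card := by
  intro e
  induction e with
  | nil => intro F _ _ _; simp [yield, syms]
  | consT a e ih =>
      intro F hv hnr hF
      cases hv with
      | consT _ hv =>
        have h1 := ih F hv hnr.lift_consT (fun pre post A ch h => hF _ _ _ _ (.restT h))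
        have h2 : 1 ≤ k ^ F.card := Nat.one_le_pow _ _ hk1
        simp only [yield, syms, List.length_cons]
        calc e.yield.length + 1 ≤ e.syms.length * k ^ F.card + k ^ F.card := by omega
          _ = (e.syms.length + 1) * k ^ F.card := by ring
  | consN A ch e ih1 ih2 =>
      intro F hv hnr hF
      cases hv with
      | consN hr hch hv =>
        have hA : A ∈ F := hF _ _ _ _ .hereTop
        have hcard : 1 ≤ F.card := Finset.card_pos.2 ⟨A, hA⟩
        classical
        have hch_bound : ch.yield.length ≤ k ^ F.card := by
          have h1 := ih1 (F.erase A) hch hnr.lift_child (by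
            intro pre post B c h
            refine Finset.mem_erase.2 ⟨?_, hF _ _ _ _ (.inChild h)⟩
            rintro rfl
            exact hnr _ _ _ _ .hereTop _ _ _ h)
          have hsy : ch.syms.length ≤ k := by
            obtain ⟨r, hrm, _, hro⟩ := hr
            rw [hro]; exact hk r hrm
          have hcf : (F.erase A).card = F.card - 1 := Finset.card_erase_of_mem hA
          calc ch.yield.length ≤ ch.syms.length * k ^ (F.erase A).card := h1
            _ ≤ k * k ^ (F.card - 1) := by
                rw [hcf]; exact Nat.mul_le_mul hsy le_rfl
            _ = k ^ F.card := by
                rw [← pow_succ']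
                congr 1
                omega
        have h2 := ih2 F hv hnr.lift_rest (fun pre post B c h => hF _ _ _ _ (.restN h))
        simp only [yield, syms, List.length_cons, List.length_append]
        calc ch.yield.length + e.yield.length ≤ k ^ F.card + e.syms.length * k ^ F.card := by
              omega
          _ = (e.syms.length + 1) * k ^ F.card := by ring

/-- The key bound: a node whose subtree has no nested label repetition (including
with its own root) has yield of length at most `k ^ n`. -/
lemma node_bound {k : ℕ} (hk : ∀ r ∈ g.rules, r.output.length ≤ k) (hk1 : 1 ≤ k)
    {A : g.NT} {ch : E T g.NT} (hv : ValidN g A ch)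
    (hroot : ∀ a b c, NodeAt ch a b A c → False) (hnr : NoRep ch) :
    ch.yield.length ≤ k ^ (NTfin g).card := by
  classical
  have hA : A ∈ NTfin g := hv.mem_NTfin
  have hcard : 1 ≤ (NTfin g).card := Finset.card_pos.2 ⟨A, hA⟩
  have h1 := yield_bound hk hk1 ch ((NTfin g).erase A) hv.2 hnr (by
    intro pre post B c h
    refine Finset.mem_erase.2 ⟨?_, ((h.validN hv.2)).mem_NTfin⟩
    rintro rfl
    exact hroot _ _ _ h)
  have hsy : ch.syms.length ≤ k := by
    obtain ⟨r, hrm, _, hro⟩ := hv.1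
    rw [hro]; exact hk r hrm
  calc ch.yield.length ≤ ch.syms.length * k ^ ((NTfin g).erase A).card := h1
    _ ≤ k * k ^ ((NTfin g).card - 1) := by
        rw [Finset.card_erase_of_mem hA]; exact Nat.mul_le_mul hsy le_rfl
    _ = k ^ (NTfin g).card := by
        rw [← pow_succ']
        congr 1
        omega

/-- Bound on the part of a forest's yield that lies after a given item, assuming
all items from some absolute position `h₂` on have small yields. -/
lemma tail_bound {C h₂ : ℕ} (hC : 1 ≤ C) {e : E T N} {a b : List T} {it}
    (hit : ItemAt e a b it) :
    ∀ (off : ℕ), (∀ a' b' it', ItemAt e a' b' it' → h₂ ≤ off + a'.length →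
      (yieldIt it').length ≤ C) → h₂ ≤ off + a.length →
      b.length ≤ e.syms.length * C := by
  induction hit with
  | hereT =>
      rename_i a₀ e₀
      intro off H hoff
      have h1 := yield_le_of_items hC e₀ (fun a' b' it' hit' =>
        H _ _ _ (.restT hit') (by simp at hoff ⊢; omega))
      have h2 : e₀.syms.length ≤ (E.consT a₀ e₀).syms.length := by
        simp only [syms, List.length_cons]; omega
      exact h1.trans (Nat.mul_le_mul h2 le_rfl)
  | hereN =>
      rename_i A₀ ch₀ e₀
      intro off H hoff
      have h1 := yield_le_of_items hC e₀ (fun a' b' it' hit' =>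
        H _ _ _ (.restN hit') (by simp at hoff ⊢; omega))
      have h2 : e₀.syms.length ≤ (E.consN A₀ ch₀ e₀).syms.length := by
        simp only [syms, List.length_cons]; omega
      exact h1.trans (Nat.mul_le_mul h2 le_rfl)
  | restT h ih =>
      rename_i a₀ e₀ pre₀ post₀ it₀
      intro off H hoff
      have := ih (off + 1) (fun a' b' it' hit' h' => H _ _ _ (.restT hit') (by
        simp at h' ⊢; omega)) (by simp at hoff ⊢; omega)
      refine this.trans ?_
      simp only [syms, List.length_cons]
      exact Nat.mul_le_mul (Nat.le_succ _) le_rfl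
  | restN h ih =>
      rename_i A₀ ch₀ e₀ pre₀ post₀ it₀
      intro off H hoff
      have := ih (off + ch₀.yield.length) (fun a' b' it' hit' h' =>
        H _ _ _ (.restN hit') (by simp at h' ⊢; omega)) (by simp at hoff ⊢; omega)
      refine this.trans ?_
      simp only [syms, List.length_cons]
      exact Nat.mul_le_mul (Nat.le_succ _) le_rfl

end E
end ThinTri
namespace ThinTri

section Words
variable {α : Type} {S : Type*} [Semigroup S] {f : α → S}

@[simp] lemma evalW_nil : evalW f [] = 1 := rfl

lemma evalW_append (x y : List α) : evalW f (x ++ y) = evalW f x * evalW f y := by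
  simp [evalW]

lemma evalW_cons (a : α) (x : List α) : evalW f (a :: x) = (f a : WithOne S) * evalW f x := by
  simp [evalW]

lemma coe_foldl (as : List α) (s : S) :
    ((as.foldl (fun t b => t * f b) s : S) : WithOne S) = ↑s * evalW f as := by
  induction as generalizing s with
  | nil => simp
  | cons a as ih =>
      simp only [List.foldl_cons, ih, evalW_cons]
      rw [← mul_assoc, WithOne.coe_mul]

lemma evalW_of_evalS {x : List α} {s : S} (h : evalS f x = some s) :
    evalW f x = (s : WithOne S) := by
  cases x with
  | nil => simp [evalS] at h
  | cons a as =>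
      simp only [evalS, Option.some.injEq] at h
      rw [← h, coe_foldl, evalW_cons]

/-- A walk in the Cayley graph along the letters of a word. -/
lemma walk_along (m : List α) : ∀ (q r : WithOne S), r = q * evalW f m →
    ∃ wk : (cayley f).Walk q r, wk.length ≤ m.length := by
  induction m with
  | nil => rintro q r h; rw [h, evalW_nil, mul_one]; exact ⟨.nil, by simp⟩
  | cons a m ih =>
      rintro q r h
      rw [evalW_cons, ← mul_assoc] at h
      obtain ⟨wk, hwk⟩ := ih (q * f a) r h
      by_cases hq : q = q * (f a : WithOne S)
      · exact ⟨wk.copy hq.symm rfl, by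
          rw [SimpleGraph.Walk.length_copy]
          exact hwk.trans (by simp)⟩
      · have hadj : (cayley f).Adj q (q * (f a : WithOne S)) := by
          rw [cayley, SimpleGraph.fromRel_adj]
          exact ⟨hq, Or.inl ⟨a, rfl⟩⟩
        exact ⟨.cons hadj wk, by simpa using Nat.succ_le_succ hwk⟩

lemma dist_le_of_common (x y x' : WithOne S) (m1 m2 m3 : List α)
    (h1 : x = x' * evalW f m1) (h2 : x' * evalW f m2 = y * evalW f m3) :
    (cayley f).dist x y ≤ m1.length + m2.length + m3.length := by
  obtain ⟨w1, hw1⟩ := walk_along (f := f) m1 x' x h1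
  obtain ⟨w2, hw2⟩ := walk_along (f := f) m2 x' (x' * evalW f m2) rfl
  obtain ⟨w3, hw3⟩ := walk_along (f := f) m3 y (y * evalW f m3) rfl
  have w4 : (cayley f).Walk x y :=
    w1.reverse.append (w2.append ((w3.copy rfl h2.symm).reverse))
  refine le_trans (SimpleGraph.dist_le (w1.reverse.append
    (w2.append ((w3.copy rfl h2.symm).reverse)))) ?_
  simp only [SimpleGraph.Walk.length_append, SimpleGraph.Walk.length_reverse,
    SimpleGraph.Walk.length_copy]
  omega

end Words

section Hash
variable {α : Type} [DecidableEq α]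

lemma count_none_map_some (l : List α) : (l.map some).count (none : Option α) = 0 := by
  rw [List.count_eq_zero]
  simp

lemma mem_map_some_of_not_none {l : List (Option α)} (h : (none : Option α) ∉ l) :
    ∃ l' : List α, l = l'.map some := by
  induction l with
  | nil => exact ⟨[], rfl⟩
  | cons a l ih =>
      obtain ⟨l', rfl⟩ := ih (fun hm => h (List.mem_cons_of_mem _ hm))
      cases a with
      | none => simp at h
      | some b => exact ⟨b :: l', rfl⟩

lemma hashWord_eq_parts (u v w : List α) :
    hashWord u v w = u.map some ++ none :: v.map some ++ none :: (w.reverse.map some) := rfl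

lemma count_none_hashWord (u v w : List α) :
    (hashWord u v w).count (none : Option α) = 2 := by
  simp [hashWord_eq_parts, List.count_append, List.count_cons, count_none_map_some]

lemma first_none_eq : ∀ {A A' : List α} {B B' : List (Option α)},
    A.map some ++ none :: B = A'.map some ++ none :: B' → A = A' ∧ B = B' := by
  intro A
  induction A with
  | nil =>
      intro A' B B' h
      cases A' with
      | nil => simpa using h
      | cons a A' => simp at h
  | cons a A ih =>
      intro A' B B' h
      cases A' with
      | nil => simp at h
      | cons a' A' =>
          simp only [List.map_cons, List.cons_append, List.cons.injEq,
            Option.some.injEq] at h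
          obtain ⟨h1, h2⟩ := ih h.2
          exact ⟨by rw [h.1, h1], h2⟩

lemma hashWord_decode {u' v' w' u v : List α} {ζ : List α}
    (h : hashWord u' v' w' = u.map some ++ none :: v.map some ++ none :: (ζ.map some)) :
    u' = u ∧ v' = v ∧ w' = ζ.reverse := by
  rw [hashWord_eq_parts] at h
  simp only [List.cons_append, List.append_assoc] at h
  obtain ⟨h1, h2⟩ := first_none_eq h
  obtain ⟨h3, h4⟩ := first_none_eq h2
  refine ⟨h1, h3, ?_⟩
  have := List.map_injective_iff.2 (Option.some_injective α) h4
  rw [← this, List.reverse_reverse]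

lemma first_none_split {l : List (Option α)} (h : (none : Option α) ∈ l) :
    ∃ (l₁ : List α) (l₂ : List (Option α)), l = l₁.map some ++ none :: l₂ := by
  induction l with
  | nil => cases h
  | cons a l ih =>
      cases a with
      | none => exact ⟨[], l, rfl⟩
      | some b =>
          obtain ⟨l₁, l₂, rfl⟩ := ih (by simpa using h)
          exact ⟨b :: l₁, l₂, rfl⟩

/-- A list containing exactly one `none` splits into `some`-parts. -/
lemma split_one_none {l : List (Option α)} (h : l.count (none : Option α) = 1) :
    ∃ (l₁ l₂ : List α), l = l₁.map some ++ none :: l₂.map some := by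
  have hm : (none : Option α) ∈ l := List.count_pos_iff.1 (by omega)
  obtain ⟨l₁, l₂, rfl⟩ := first_none_split hm
  have : (l₂.count (none : Option α)) = 0 := by
    simp [List.count_append, List.count_cons, count_none_map_some] at h
    omega
  obtain ⟨l₂', rfl⟩ := mem_map_some_of_not_none (List.count_eq_zero.1 this)
  exact ⟨l₁, l₂', rfl⟩

lemma split_two_none {l : List (Option α)} (h : l.count (none : Option α) = 2) :
    ∃ (l₁ l₂ l₃ : List α),
      l = l₁.map some ++ none :: l₂.map some ++ none :: l₃.map some := by
  have hm : (none : Option α) ∈ l := List.count_pos_iff.1 (by omega)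
  obtain ⟨l₁, l₂, rfl⟩ := first_none_split hm
  have h2 : (l₂.count (none : Option α)) = 1 := by
    simp [List.count_append, List.count_cons, count_none_map_some] at h
    omega
  obtain ⟨l₂', l₃', rfl⟩ := split_one_none h2
  exact ⟨l₁, l₂', l₃', by simp⟩

end Hash
end ThinTri
namespace ThinTri
namespace E

variable {T N : Type} {g : ContextFreeGrammar T}

lemma exists_min_size {P : E T N → Prop} (h : ∃ e, P e) :
    ∃ e, P e ∧ ∀ e', P e' → e.size ≤ e'.size := by
  obtain ⟨e, he⟩ := h
  have hne : {n | ∃ e, P e ∧ e.size = n}.Nonempty := ⟨e.size, e, he, rfl⟩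
  obtain ⟨e₀, he₀, hs⟩ := Nat.sInf_mem hne
  exact ⟨e₀, he₀, fun e' he' => hs ▸ Nat.sInf_le ⟨e', he', rfl⟩⟩

noncomputable def kk (g : ContextFreeGrammar T) : ℕ :=
  (g.rules.sup fun r => r.output.length) + 1

lemma kk_pos : 1 ≤ kk g := Nat.le_add_left 1 _

lemma output_le_kk {r : ContextFreeRule T g.NT} (hr : r ∈ g.rules) :
    r.output.length ≤ kk g :=
  le_trans (Finset.le_sup (f := fun r => r.output.length) hr) (Nat.le_succ _)

noncomputable def CC (g : ContextFreeGrammar T) : ℕ := kk g ^ (NTfin g).card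

lemma CC_pos : 1 ≤ CC g := Nat.one_le_pow _ _ kk_pos

lemma syms_le_kk {A : g.NT} {ch : E T g.NT} (h : ValidN g A ch) :
    ch.syms.length ≤ kk g := by
  obtain ⟨⟨r, hrm, _, hro⟩, _⟩ := h
  rw [hro]; exact output_le_kk hrm

/-- Every realizable nonterminal has a small parse tree. -/
lemma small_witness {A : g.NT} {ch : E T g.NT} (h : ValidN g A ch) :
    ∃ ch', ValidN g A ch' ∧ ch'.yield.length ≤ CC g := by
  obtain ⟨ch₀, h₀, hmin⟩ := exists_min_size (P := fun e => ValidN g A e) ⟨ch, h⟩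
  refine ⟨ch₀, h₀, ?_⟩
  refine node_bound (fun r hr => output_le_kk hr) kk_pos h₀ ?_ ?_
  · intro a b c hc
    have hvc : ValidN g A c := hc.validN h₀.2
    exact absurd (hmin c hvc) (by have := hc.size_lt; omega)
  · intro p q B cO hO a b cI hI
    obtain ⟨e', hval, hsyms, _, hsize⟩ := hO.replace cI
    have hv' : Valid g e' := hval h₀.2 (hI.validN (hO.validN h₀.2).2)
    have hVN : ValidN g A e' := by
      refine ⟨?_, hv'⟩
      obtain ⟨r, hrm, hri, hro⟩ := h₀.1
      exact ⟨r, hrm, hri, by rw [hsyms, hro]⟩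
    have := hmin e' hVN
    have h1 := hI.size_lt
    have h2 := hO.size_lt
    omega

end E
end ThinTri
namespace ThinTri
open E

section Main
variable {α : Type} {S : Type*} [Semigroup S] [DecidableEq α]
variable {f : α → S} {R : Language α} {g : ContextFreeGrammar (Option α)}

lemma lang_of_valid (e : E (Option α) g.NT) (hval : Valid g e)
    (hs : e.syms = [Symbol.nonterminal g.initial]) : e.yield ∈ g.language := by
  rw [ContextFreeGrammar.mem_language_iff]
  have := hval.derives
  rwa [hs] at this

lemma length_hashWord (u v w : List α) :
    (hashWord u v w).length = u.length + v.length + 2 + w.length := by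
  simp [hashWord]; omega

lemma hash_split_uv (u v w : List α) :
    hashWord u v w
      = (u.map some ++ none :: v.map some ++ [none]) ++ (w.reverse.map some) := by
  simp [hashWord]

/-- Decoding a member of the multiplication table that starts with `u#v#`. -/
lemma decode_ext {u v w : List α} {su sv : S}
    (hsu : evalS f u = some su) (hsv : evalS f v = some sv)
    (hsw : evalS f w = some (su * sv))
    {z' : List (Option α)} (hz' : z' ∈ mulTable f R)
    (hpre : z'.take (u.length + v.length + 2)
      = (hashWord u v w).take (u.length + v.length + 2)) :
    ∃ w₂, w₂ ∈ R ∧ evalS f w₂ = evalS f w ∧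
      w₂.length + (u.length + v.length + 2) = z'.length := by
  obtain ⟨u₂, v₂, w₂, hu₂, hv₂, hw₂, ⟨su₂, sv₂, he1, he2, he3⟩, rfl⟩ := hz'
  set H := u.map some ++ none :: v.map some ++ [none] with hH
  have hHlen : H.length = u.length + v.length + 2 := by simp [hH]; omega
  have htake : (hashWord u v w).take (u.length + v.length + 2) = H := by
    rw [hash_split_uv, ← hHlen, List.take_left]
  rw [htake] at hpre
  -- the tail of `hashWord u₂ v₂ w₂` past the two hashes is none-free
  have hcount : ((hashWord u₂ v₂ w₂).drop (u.length + v.length + 2)).count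
      (none : Option α) = 0 := by
    have h1 := count_none_hashWord (α := α) u₂ v₂ w₂
    have h2 : (hashWord u₂ v₂ w₂).count (none : Option α)
        = ((hashWord u₂ v₂ w₂).take (u.length + v.length + 2)).count none
          + ((hashWord u₂ v₂ w₂).drop (u.length + v.length + 2)).count none := by
      conv_lhs => rw [← List.take_append_drop (u.length + v.length + 2)
        (hashWord u₂ v₂ w₂)]
      rw [List.count_append]
    have h3 : (H.count (none : Option α)) = 2 := by
      simp [hH, List.count_append, List.count_cons, count_none_map_some]
    rw [hpre, h3] at h2
    omega
  obtain ⟨ζ, hζ⟩ := mem_map_some_of_not_none (List.count_eq_zero.1 hcount)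
  have hzdec : hashWord u₂ v₂ w₂ = H ++ ζ.map some := by
    conv_lhs => rw [← List.take_append_drop (u.length + v.length + 2)
      (hashWord u₂ v₂ w₂)]
    rw [hpre, hζ]
  have hdec : hashWord u₂ v₂ w₂
      = u.map some ++ none :: v.map some ++ none :: ζ.map some := by
    rw [hzdec, hH]
    simp [List.append_assoc, List.cons_append]
  obtain ⟨rfl, rfl, rfl⟩ := hashWord_decode hdec
  refine ⟨ζ.reverse, hw₂, ?_, ?_⟩
  · rw [he1] at hsu
    rw [he2] at hsv
    obtain rfl : su₂ = su := by injection hsu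
    obtain rfl : sv₂ = sv := by injection hsv
    rw [he3, hsw]
  · simp only [length_hashWord, List.length_reverse]
    omega

variable {u v w : List α} {su sv : S}

/-- Pumping down inside the `wʳ`-region of a size-minimal parse forest of
`hashWord u v w` contradicts minimality of `w`. -/
lemma pump (hg : g.language = mulTable f R)
    (hsu : evalS f u = some su) (hsv : evalS f v = some sv)
    (hsw : evalS f w = some (su * sv))
    (hwmin : ∀ v' ∈ R, evalS f v' = evalS f w → w.length ≤ v'.length)
    {e₀ : E (Option α) g.NT} (hval : Valid g e₀)
    (hsyms : e₀.syms = [Symbol.nonterminal g.initial])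
    (hyz : e₀.yield = hashWord u v w)
    (hmin : ∀ e', Valid g e' → e'.syms = [Symbol.nonterminal g.initial] →
      e'.yield = hashWord u v w → e₀.size ≤ e'.size)
    {PO QO a b : List (Option α)} {B : g.NT} {chO cI : E (Option α) g.NT}
    (hO : NodeAt e₀ PO QO B chO) (hPO : u.length + v.length + 2 ≤ PO.length)
    (hI : NodeAt chO a b B cI) : False := by
  obtain ⟨e', hvf, hsyms', hyield', hsize⟩ := hO.replace cI
  have hVNO : ValidN g B chO := hO.validN hval
  have hval' : Valid g e' := hvf hval (hI.validN hVNO.2)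
  have hchy : chO.yield = a ++ cI.yield ++ b := hI.yield_eq
  have hzeq : hashWord u v w = PO ++ chO.yield ++ QO := by
    rw [← hyz, hO.yield_eq]
  have hIlt := hI.size_lt
  have hOlt := hO.size_lt
  by_cases hab : a = [] ∧ b = []
  · obtain ⟨rfl, rfl⟩ := hab
    have : e₀.size ≤ e'.size := by
      refine hmin e' hval' (hsyms'.trans hsyms) ?_
      rw [hyield', hzeq, hchy]
      simp
    omega
  · have hz' : e'.yield ∈ mulTable f R := by
      rw [← hg]; exact lang_of_valid e' hval' (hsyms'.trans hsyms)
    rw [hyield'] at hz'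
    have htk : (PO ++ cI.yield ++ QO).take (u.length + v.length + 2)
        = (hashWord u v w).take (u.length + v.length + 2) := by
      rw [hzeq]
      rw [List.append_assoc, List.append_assoc, List.take_append_of_le_length hPO,
        List.take_append_of_le_length hPO]
    obtain ⟨w₂, hw₂R, hw₂e, hw₂l⟩ := decode_ext hsu hsv hsw hz' htk
    have hmin2 := hwmin w₂ hw₂R hw₂e
    have hlen1 := congrArg List.length hzeq
    have hlen2 : (hashWord u v w).length = u.length + v.length + 2 + w.length :=
      length_hashWord u v w
    have hab' : 1 ≤ a.length + b.length := by
      by_contra hcon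
      push_neg at hcon
      have ha : a.length = 0 := by omega
      have hb : b.length = 0 := by omega
      exact hab ⟨List.length_eq_zero_iff.1 ha, List.length_eq_zero_iff.1 hb⟩
    have hchl := congrArg List.length hchy
    simp only [List.length_append] at hlen1 hchl hw₂l
    omega

/-- Any subtree lying wholly within the `wʳ`-region of a minimal parse forest
has yield of length at most `CC g`. -/
lemma f1 (hg : g.language = mulTable f R)
    (hsu : evalS f u = some su) (hsv : evalS f v = some sv)
    (hsw : evalS f w = some (su * sv))
    (hwmin : ∀ v' ∈ R, evalS f v' = evalS f w → w.length ≤ v'.length)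
    {e₀ : E (Option α) g.NT} (hval : Valid g e₀)
    (hsyms : e₀.syms = [Symbol.nonterminal g.initial])
    (hyz : e₀.yield = hashWord u v w)
    (hmin : ∀ e', Valid g e' → e'.syms = [Symbol.nonterminal g.initial] →
      e'.yield = hashWord u v w → e₀.size ≤ e'.size)
    {pre post : List (Option α)} {A : g.NT} {ch : E (Option α) g.NT}
    (h : NodeAt e₀ pre post A ch) (hpre : u.length + v.length + 2 ≤ pre.length) :
    ch.yield.length ≤ CC g := by
  refine node_bound (fun r hr => output_le_kk hr) kk_pos (h.validN hval) ?_ ?_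
  · intro a b c hc
    exact pump hg hsu hsv hsw hwmin hval hsyms hyz hmin h hpre hc
  · intro p q B cO hO a' b' cI hI
    refine pump hg hsu hsv hsw hwmin hval hsyms hyz hmin (h.trans hO) ?_ hI
    simp only [List.length_append]
    omega

lemma take_hash_shape (u v w : List α) (m : ℕ)
    (hlen : m < u.length + v.length + 2) :
    (∃ j, j ≤ u.length ∧ (hashWord u v w).take m = (u.take j).map some) ∨
    (∃ j, j ≤ v.length ∧
      (hashWord u v w).take m = u.map some ++ none :: (v.take j).map some) := by
  have hsh : hashWord u v w
      = u.map some ++ ((none :: v.map some) ++ (none :: w.reverse.map some)) := by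
    simp [hashWord]
  rcases le_or_gt m u.length with hc | hc
  · left
    refine ⟨m, hc, ?_⟩
    rw [hsh, List.take_append_of_le_length (by simpa using hc), List.map_take]
  · right
    refine ⟨m - u.length - 1, by omega, ?_⟩
    rw [hsh, List.take_append,
      List.take_of_length_le (by simp; omega)]
    congr 1
    have h2 : m - (u.map some).length = (m - u.length - 1) + 1 := by simp; omega
    rw [h2, List.take_append_of_le_length (by simp; omega), List.take_succ_cons,
      List.map_take]

/-- The shape of a short prefix of `hashWord u v w`. -/
lemma pre_shape {u v w : List α} {pre rest : List (Option α)}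
    (h : hashWord u v w = pre ++ rest)
    (hlen : pre.length < u.length + v.length + 2) :
    (∃ j, j ≤ u.length ∧ pre = (u.take j).map some) ∨
    (∃ j, j ≤ v.length ∧ pre = u.map some ++ none :: (v.take j).map some) := by
  have := take_hash_shape u v w pre.length hlen
  rwa [h, List.take_left] at this

/-- Endgame decoding: the case where the replaced subtree starts inside `v`. -/
lemma endgameB {X Y Z : List α} {τ : List (Option α)}
    (hz : (X.map some ++ none :: Y.map some) ++ τ ++ (Z.reverse.map some)
      ∈ mulTable f R) :
    ∃ a₂ b₂ : List α, a₂.length + b₂.length + 1 = τ.length ∧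
      evalW f Z * evalW f b₂.reverse = evalW f X * evalW f Y * evalW f a₂ := by
  obtain ⟨u₂, v₂, w₂, _, _, _, ⟨su₂, sv₂, he1, he2, he3⟩, hhash⟩ := hz
  have hcount : τ.count (none : Option α) = 1 := by
    have := congrArg (List.count (none : Option α)) hhash
    rw [count_none_hashWord] at this
    simp [List.count_append, List.count_cons, count_none_map_some] at this
    omega
  obtain ⟨a₂, b₂, rfl⟩ := split_one_none hcount
  have hdec : hashWord u₂ v₂ w₂
      = X.map some ++ none :: (Y ++ a₂).map some ++ none :: (b₂ ++ Z.reverse).map some := by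
    rw [← hhash]
    simp [List.map_append, List.append_assoc, List.cons_append]
  obtain ⟨h1, h2, h3⟩ := hashWord_decode hdec
  subst h3
  rw [h1] at he1
  rw [h2] at he2
  refine ⟨a₂, b₂, by simp; omega, ?_⟩
  have heq : evalW f ((b₂ ++ Z.reverse).reverse) = evalW f X * evalW f (Y ++ a₂) := by
    rw [evalW_of_evalS he3, WithOne.coe_mul, ← evalW_of_evalS he1, ← evalW_of_evalS he2]
  rw [List.reverse_append, List.reverse_reverse, evalW_append, evalW_append] at heq
  rw [heq, mul_assoc]

/-- Endgame decoding: the case where the replaced subtree starts inside `u`. -/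
lemma endgameA {X Z : List α} {τ : List (Option α)}
    (hz : (X.map some) ++ τ ++ (Z.reverse.map some) ∈ mulTable f R) :
    ∃ a₂ c₂ b₂ : List α, a₂.length + c₂.length + b₂.length + 2 = τ.length ∧
      evalW f Z * evalW f b₂.reverse = evalW f X * evalW f (a₂ ++ c₂) := by
  obtain ⟨u₂, v₂, w₂, _, _, _, ⟨su₂, sv₂, he1, he2, he3⟩, hhash⟩ := hz
  have hcount : τ.count (none : Option α) = 2 := by
    have := congrArg (List.count (none : Option α)) hhash
    rw [count_none_hashWord] at this
    simp [List.count_append, List.count_cons, count_none_map_some] at this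
    omega
  obtain ⟨a₂, c₂, b₂, rfl⟩ := split_two_none hcount
  have hdec : hashWord u₂ v₂ w₂
      = (X ++ a₂).map some ++ none :: c₂.map some ++ none :: (b₂ ++ Z.reverse).map some := by
    rw [← hhash]
    simp [List.map_append, List.append_assoc, List.cons_append]
  obtain ⟨h1, h2, h3⟩ := hashWord_decode hdec
  subst h3
  rw [h1] at he1
  rw [h2] at he2
  refine ⟨a₂, c₂, b₂, by simp; omega, ?_⟩
  have heq : evalW f ((b₂ ++ Z.reverse).reverse) = evalW f (X ++ a₂) * evalW f c₂ := by
    rw [evalW_of_evalS he3, WithOne.coe_mul, ← evalW_of_evalS he1, ← evalW_of_evalS he2]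
  rw [List.reverse_append, List.reverse_reverse, evalW_append, evalW_append] at heq
  rw [heq, evalW_append, mul_assoc]

end Main
end ThinTri
namespace ThinTri
open E

section Descent
variable {α : Type} {S : Type*} [Semigroup S] [DecidableEq α]
variable {f : α → S} {R : Language α} {g : ContextFreeGrammar (Option α)}
variable {u v w : List α} {su sv : S}

lemma descent (hg : g.language = mulTable f R)
    (hsu : evalS f u = some su) (hsv : evalS f v = some sv)
    (hsw : evalS f w = some (su * sv))
    (hwmin : ∀ v' ∈ R, evalS f v' = evalS f w → w.length ≤ v'.length)
    {e₀ : E (Option α) g.NT} (hval : Valid g e₀)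
    (hsyms : e₀.syms = [Symbol.nonterminal g.initial])
    (hyz : e₀.yield = hashWord u v w)
    (hmin : ∀ e', Valid g e' → e'.syms = [Symbol.nonterminal g.initial] →
      e'.yield = hashWord u v w → e₀.size ≤ e'.size)
    (p : WithOne S) {i : ℕ} (hi1 : 1 ≤ i) (hi2 : i ≤ w.length) :
    ∀ (N : ℕ) (A : g.NT) (ch : E (Option α) g.NT) (pre post : List (Option α)),
      ch.size ≤ N → NodeAt e₀ pre post A ch →
      pre.length < u.length + v.length + 2 →
      pre.length ≤ (hashWord u v w).length - i →
      (hashWord u v w).length - i < pre.length + ch.yield.length →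
      ∃ y ∈ pathVerts f p u ∪ pathVerts f (p * evalW f u) v,
        (cayley f).dist (p * evalW f (w.take i)) y ≤ (kk g + 3) * CC g := by
  intro N
  induction N using Nat.strong_induction_on with
  | _ N IH =>
  intro A ch pre post hsz h hpre hq1 hq2
  have hL := length_hashWord u v w
  obtain ⟨a, b, it, hit, hle, hlt⟩ := find_item (e := ch) (off := pre.length) hq1 hq2
  by_cases hcase : ∃ B c, it = Sum.inr (B, c) ∧
      pre.length + a.length < u.length + v.length + 2
  · obtain ⟨B, c, rfl, hlt2⟩ := hcase
    have hbig : NodeAt e₀ (pre ++ a) (b ++ post) B c := h.trans hit.nodeAt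
    have hcs : c.size < ch.size := (hit.nodeAt).size_lt
    refine IH c.size (by omega) B c (pre ++ a) (b ++ post) le_rfl hbig ?_ ?_ ?_
    · simpa using hlt2
    · simp only [List.length_append]; omega
    · simp only [yieldIt] at hlt
      simp only [List.length_append]
      omega
  · -- endgame at the current node
    have hstart : u.length + v.length + 2 ≤ pre.length + a.length := by
      rcases it with lett | ⟨B, c⟩
      · simp only [yieldIt, List.length_singleton] at hlt
        omega
      · by_contra hcon
        push_neg at hcon
        exact hcase ⟨B, c, rfl, by omega⟩
    have hCpos : 1 ≤ CC g := CC_pos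
    have hyb : (yieldIt it).length ≤ CC g := by
      rcases it with lett | ⟨B, c⟩
      · simpa [yieldIt] using hCpos
      · exact f1 hg hsu hsv hsw hwmin hval hsyms hyz hmin (h.trans hit.nodeAt)
          (by simpa using hstart)
    have hsymk : ch.syms.length ≤ kk g := syms_le_kk (h.validN hval)
    have hb : b.length ≤ kk g * CC g := by
      have H : ∀ a' b' it', ItemAt ch a' b' it' →
          u.length + v.length + 2 ≤ pre.length + a'.length →
          (yieldIt it').length ≤ CC g := by
        intro a' b' it' hit' h'
        rcases it' with lett | ⟨B', c'⟩
        · simpa [yieldIt] using hCpos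
        · exact f1 hg hsu hsv hsw hwmin hval hsyms hyz hmin (h.trans hit'.nodeAt)
            (by simpa using h')
      have ht := tail_bound hCpos hit pre.length H hstart
      exact ht.trans (Nat.mul_le_mul hsymk le_rfl)
    have hchy : ch.yield = a ++ yieldIt it ++ b := hit.yield_eq
    have hzdec : hashWord u v w = pre ++ ch.yield ++ post := by
      rw [← hyz, h.yield_eq]
    have hlens := congrArg List.length hzdec
    simp only [List.length_append] at hlens
    have hchl := congrArg List.length hchy
    simp only [List.length_append] at hchl
    have hei : post.length + 1 ≤ i := by omega
    have hie : i - post.length ≤ CC g + kk g * CC g := by omega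
    -- identify `post` with the encoded prefix of `w`
    have hwrev : (w.reverse).map (some : α → Option α)
        = ((w.drop post.length).reverse).map some
          ++ ((w.take post.length).reverse).map some := by
      rw [← List.map_append, ← List.reverse_append, List.take_append_drop]
    have hsplit : hashWord u v w
        = (u.map some ++ ((none :: v.map some)
            ++ (none :: ((w.drop post.length).reverse).map some)))
          ++ ((w.take post.length).reverse).map some := by
      simp [hashWord, hwrev, List.append_assoc]
    have hpost : post = ((w.take post.length).reverse).map some := by
      have h1 : (pre ++ ch.yield) ++ post
          = (u.map some ++ ((none :: v.map some)
              ++ (none :: ((w.drop post.length).reverse).map some)))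
            ++ ((w.take post.length).reverse).map some := by
        rw [← hzdec, hsplit]
      refine (List.append_inj h1 ?_).2
      have := congrArg List.length h1
      simp only [List.length_append, List.length_map, List.length_reverse,
        List.length_take, List.length_cons] at this ⊢
      omega
    obtain ⟨ch', hVN', hτ⟩ := small_witness (h.validN hval)
    obtain ⟨e', hvf, hsyms', hyield', _⟩ := h.replace ch'
    have hz' : e'.yield ∈ mulTable f R := by
      rw [← hg]; exact lang_of_valid e' (hvf hval hVN') (hsyms'.trans hsyms)
    rw [hyield', hpost] at hz'
    have hx : p * evalW f (w.take i)
        = (p * evalW f (w.take post.length)) * evalW f ((w.take i).drop post.length) := by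
      rw [mul_assoc, ← evalW_append]
      congr 2
      conv_lhs => rw [← List.take_append_drop post.length (w.take i)]
      rw [List.take_take, min_eq_left (by omega)]
    have hdroplen : ((w.take i).drop post.length).length = i - post.length := by
      simp only [List.length_drop, List.length_take]
      omega
    have hring : (kk g + 3) * CC g = kk g * CC g + CC g + CC g + CC g := by ring
    rcases pre_shape (rest := ch.yield ++ post) (by rw [hzdec, List.append_assoc]) hpre with ⟨j, hju, hpeq⟩ | ⟨j, hjv, hpeq⟩
    · -- y lies on the side u
      rw [hpeq] at hz'
      obtain ⟨a₂, c₂, b₂, hlen₂, heq⟩ := endgameA (Z := w.take post.length) hz'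
      refine ⟨p * evalW f (u.take j), Or.inl ⟨u.take j, List.take_prefix _ _, rfl⟩, ?_⟩
      have h2 : (p * evalW f (w.take post.length)) * evalW f b₂.reverse
          = (p * evalW f (u.take j)) * evalW f (a₂ ++ c₂) := by
        have h3 : p * (evalW f (w.take post.length) * evalW f b₂.reverse)
            = p * (evalW f (u.take j) * evalW f (a₂ ++ c₂)) := by rw [heq]
        simpa only [mul_assoc] using h3
      have hdist := dist_le_of_common (p * evalW f (w.take i)) (p * evalW f (u.take j))
        (p * evalW f (w.take post.length)) ((w.take i).drop post.length)
        b₂.reverse (a₂ ++ c₂) hx h2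
      refine hdist.trans ?_
      simp only [hdroplen, List.length_reverse, List.length_append]
      omega
    · -- y lies on the side v
      rw [hpeq] at hz'
      obtain ⟨a₂, b₂, hlen₂, heq⟩ := endgameB (Z := w.take post.length) hz'
      refine ⟨(p * evalW f u) * evalW f (v.take j),
        Or.inr ⟨v.take j, List.take_prefix _ _, rfl⟩, ?_⟩
      have h2 : (p * evalW f (w.take post.length)) * evalW f b₂.reverse
          = ((p * evalW f u) * evalW f (v.take j)) * evalW f a₂ := by
        have h3 : p * (evalW f (w.take post.length) * evalW f b₂.reverse)
            = p * (evalW f u * evalW f (v.take j) * evalW f a₂) := by rw [heq]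
        simpa only [mul_assoc] using h3
      have hdist := dist_le_of_common (p * evalW f (w.take i))
        ((p * evalW f u) * evalW f (v.take j))
        (p * evalW f (w.take post.length)) ((w.take i).drop post.length)
        b₂.reverse a₂ hx h2
      refine hdist.trans ?_
      simp only [hdroplen, List.length_reverse]
      omega

end Descent
end ThinTri
/-- If `S` is word hyperbolic with respect to a choice of generators and a regular
combing `R`, then there is a constant `δ` such that in every minimal
`R`-triangle `(u, v, w)`, based at any vertex `p`, every vertex on the side `w`
is at distance at most `δ` in the Cayley graph from some vertex on the union of
the sides `u` and `v`. -/
theorem thin_triangles {S : Type*} [Semigroup S] {α : Type} [Fintype α]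
    (f : α → S) (hf : IsChoice f) (R : Language α) (hreg : R.IsRegular)
    (hcomb : IsCombing f R) (hcf : (mulTable f R).IsContextFree) :
    ∃ δ : ℕ, ∀ (p : WithOne S) (u v w : List α),
      IsMinimalWord f R u → IsMinimalWord f R v → IsMinimalWord f R w →
      IsTriangle f u v w →
      ∀ x ∈ pathVerts f p w,
        ∃ y ∈ pathVerts f p u ∪ pathVerts f (p * evalW f u) v,
          (cayley f).dist x y ≤ δ := by
  classical
  obtain ⟨g, hg⟩ := hcf
  refine ⟨(ThinTri.E.kk g + 3) * ThinTri.E.CC g, ?_⟩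
  intro p u v w hmu hmv hmw htri x hx
  obtain ⟨su, sv, hsu, hsv, hsw⟩ := htri
  obtain ⟨t, ht, rfl⟩ := hx
  have hti : t = w.take t.length := List.prefix_iff_eq_take.1 ht
  have htl : t.length ≤ w.length := ht.length_le
  rcases Nat.eq_zero_or_pos t.length with h0 | h1
  · have ht0 : t = [] := List.length_eq_zero_iff.1 h0
    refine ⟨p, Or.inl ⟨[], List.nil_prefix, by simp⟩, ?_⟩
    rw [ht0]
    simp [SimpleGraph.dist_self]
  · have hz : hashWord u v w ∈ g.language := by
      rw [hg]
      exact ⟨u, v, w, hmu.1, hmv.1, hmw.1, ⟨su, sv, hsu, hsv, hsw⟩, rfl⟩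
    rw [ContextFreeGrammar.mem_language_iff] at hz
    obtain ⟨e₁, hval₁, hsyms₁, hyield₁⟩ := ThinTri.E.derives_forest hz
    obtain ⟨e₀, ⟨hval, hsyms, hyz⟩, hmin₀⟩ := ThinTri.E.exists_min_size
      (P := fun e => ThinTri.E.Valid g e ∧ e.syms = [Symbol.nonterminal g.initial]
        ∧ e.yield = hashWord u v w) ⟨e₁, hval₁, hsyms₁, hyield₁⟩
    have hmin : ∀ e', ThinTri.E.Valid g e' →
        e'.syms = [Symbol.nonterminal g.initial] →
        e'.yield = hashWord u v w → e₀.size ≤ e'.size :=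
      fun e' h1 h2 h3 => hmin₀ e' ⟨h1, h2, h3⟩
    cases e₀ with
    | nil => simp [ThinTri.E.syms] at hsyms
    | consT aa e => simp [ThinTri.E.syms] at hsyms
    | consN A ch rest =>
      have hA : A = g.initial ∧ rest.syms = [] := by
        simpa [ThinTri.E.syms] using hsyms
      obtain ⟨rfl, hA2⟩ := hA
      have hrest : rest = ThinTri.E.nil := by
        cases rest with
        | nil => rfl
        | consT _ _ => simp [ThinTri.E.syms] at hA2
        | consN _ _ _ => simp [ThinTri.E.syms] at hA2
      subst hrest
      have hroot : ThinTri.E.NodeAt (ThinTri.E.consN g.initial ch ThinTri.E.nil)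
          [] (ThinTri.E.nil.yield) g.initial ch := ThinTri.E.NodeAt.hereTop
      have hchl : ch.yield.length = (hashWord u v w).length := by
        rw [← hyz]
        simp [ThinTri.E.yield]
      have hLpos : 1 ≤ (hashWord u v w).length := by
        rw [ThinTri.length_hashWord]; omega
      have := ThinTri.descent hg hsu hsv hsw hmw.2 hval hsyms hyz hmin p h1 htl
        ch.size g.initial ch [] ThinTri.E.nil.yield le_rfl hroot (by simp)
        (by simp) (by simp only [List.length_nil]; omega)
      rw [hti]
      exact this
end

section
/- If the word problem of a semigroup S is context-free for one choice of generators, then it is context-free for every choice of generators. The same holds with 'regular' in place of 'context-free'. -/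
/-- The word problem of `S` with respect to `f`: the language of all words
`u#vʳ` over `α ∪ {#}` (with `none` playing the role of `#`) such that `u` and
`v` are nonempty words over `α` representing the same element of `S`. -/
def wordProblem {α S : Type*} [Semigroup S] (f : α → S) : Language (Option α) :=
  { x | ∃ u v : List α, u ≠ [] ∧ v ≠ [] ∧ evalS f u = evalS f v ∧
      x = u.map some ++ none :: v.reverse.map some }

namespace WPI

open ContextFreeGrammar

/-- Derivation in exactly `n` steps. -/
inductive DerivesIn {T : Type} (g : ContextFreeGrammar T) :
    List (Symbol T g.NT) → List (Symbol T g.NT) → ℕ → Prop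
  | refl (w : List (Symbol T g.NT)) : DerivesIn g w w 0
  | head {u v w n} (huv : g.Produces u v) (hvw : DerivesIn g v w n) : DerivesIn g u w (n + 1)

theorem DerivesIn.tail {T : Type} {g : ContextFreeGrammar T}
    {u v w : List (Symbol T g.NT)} {n : ℕ}
    (huv : DerivesIn g u v n) (hvw : g.Produces v w) : DerivesIn g u w (n + 1) := by
  induction huv with
  | refl => exact .head hvw (.refl _)
  | head h _ ih => exact .head h (ih hvw)

theorem derives_iff_derivesIn {T : Type} (g : ContextFreeGrammar T)
    (u v : List (Symbol T g.NT)) : g.Derives u v ↔ ∃ n, DerivesIn g u v n := by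
  constructor
  · intro h
    induction h with
    | refl => exact ⟨0, .refl u⟩
    | tail _ hstep ih => exact ih.elim fun n hn => ⟨n + 1, hn.tail hstep⟩
  · rintro ⟨n, hn⟩
    induction hn with
    | refl w => exact Derives.refl w
    | head huv _ ih => exact huv.trans_derives ih

section Transducer

variable {T U Q : Type} (tr : Q → T → Finset (List U × Q))

/-- Run of a (nondeterministic) finite-state transducer reading a `T`-word and
emitting a `U`-word. -/
inductive Run : Q → List T → List U → Q → Prop
  | nil (q : Q) : Run q [] [] q
  | cons {q : Q} {a : T} {us : List U} {q' : Q} {w : List T} {x : List U} {qf : Q}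
      (h : (us, q') ∈ tr q a) (h2 : Run q' w x qf) : Run q (a :: w) (us ++ x) qf

theorem Run.append {q m qf w₁ w₂ x₁ x₂} (h1 : Run tr q w₁ x₁ m) (h2 : Run tr m w₂ x₂ qf) :
    Run tr q (w₁ ++ w₂) (x₁ ++ x₂) qf := by
  induction h1 with
  | nil => simpa using h2
  | cons h _ ih => simpa using Run.cons h (ih h2)

variable (Qf : Finset Q)

variable {N : Type}

/-- The correspondence between sentential forms of the original grammar and of
the transduced grammar, threading transducer states. -/
inductive LiftRun : Q → List (Symbol T N) → List (Symbol U (Option (Q × N × Q))) → Q → Prop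
  | nil (q : Q) : LiftRun q [] [] q
  | cons_term {q a us q' l t qf} (h : (us, q') ∈ tr q a) (hq' : q' ∈ Qf)
      (h2 : LiftRun q' l t qf) :
      LiftRun q (.terminal a :: l) (us.map .terminal ++ t) qf
  | cons_nont {q A q' l t qf} (hq' : q' ∈ Qf) (h2 : LiftRun q' l t qf) :
      LiftRun q (.nonterminal A :: l) (.nonterminal (some (q, A, q')) :: t) qf

open Classical in
/-- All annotations of a sentential form starting at state `q`. -/
noncomputable def ann : List (Symbol T N) → Q → Finset (List (Symbol U (Option (Q × N × Q))) × Q)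
  | [], q => {([], q)}
  | .terminal a :: l, q =>
      ((tr q a).filter (fun p => p.2 ∈ Qf)).biUnion fun p =>
        (ann l p.2).image fun s => (p.1.map .terminal ++ s.1, s.2)
  | .nonterminal A :: l, q =>
      Qf.biUnion fun q' =>
        (ann l q').image fun s => (.nonterminal (some (q, A, q')) :: s.1, s.2)

theorem mem_ann {l : List (Symbol T N)} {q : Q} {t qf} :
    (t, qf) ∈ ann tr Qf l q ↔ LiftRun tr Qf q l t qf := by
  classical
  induction l generalizing q t with
  | nil =>
    simp only [ann, Finset.mem_singleton, Prod.mk.injEq]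
    constructor
    · rintro ⟨rfl, rfl⟩; exact .nil _
    · rintro h; cases h; exact ⟨rfl, rfl⟩
  | cons X l ih =>
    cases X with
    | terminal a =>
      simp only [ann, Finset.mem_biUnion, Finset.mem_filter, Finset.mem_image]
      constructor
      · rintro ⟨⟨us, q'⟩, ⟨hmem, hq'⟩, ⟨t', qf'⟩, h', heq⟩
        rw [Prod.mk.injEq] at heq
        obtain ⟨h1, h2⟩ := heq
        subst h2
        rw [← h1]
        exact .cons_term hmem hq' (ih.mp h')
      · rintro h
        cases h with
        | cons_term h hq' h2 =>
          exact ⟨_, ⟨h, hq'⟩, _, ih.mpr h2, rfl⟩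
    | nonterminal A =>
      simp only [ann, Finset.mem_biUnion, Finset.mem_image]
      constructor
      · rintro ⟨q', hq', ⟨t', qf'⟩, h', heq⟩
        rw [Prod.mk.injEq] at heq
        obtain ⟨h1, h2⟩ := heq
        subst h2
        rw [← h1]
        exact .cons_nont hq' (ih.mp h')
      · rintro h
        cases h with
        | cons_nont hq' h2 =>
          exact ⟨_, hq', _, ih.mpr h2, rfl⟩


variable {g : ContextFreeGrammar.{0} T}

theorem LiftRun.append {q m qf l₁ l₂ t₁ t₂}
    (h1 : LiftRun tr Qf q l₁ t₁ m) (h2 : LiftRun (N := N) tr Qf m l₂ t₂ qf) :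
    LiftRun tr Qf q (l₁ ++ l₂) (t₁ ++ t₂) qf := by
  induction h1 with
  | nil => simpa using h2
  | cons_term h hq' _ ih => simpa using LiftRun.cons_term h hq' (ih h2)
  | cons_nont hq' _ ih => exact LiftRun.cons_nont hq' (ih h2)

theorem LiftRun.split {q qf t} {l₁ l₂ : List (Symbol T N)} (hq : q ∈ Qf)
    (h : LiftRun tr Qf q (l₁ ++ l₂) t qf) :
    ∃ m t₁ t₂, m ∈ Qf ∧ t = t₁ ++ t₂ ∧ LiftRun tr Qf q l₁ t₁ m ∧ LiftRun tr Qf m l₂ t₂ qf := by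
  induction l₁ generalizing q t with
  | nil => exact ⟨q, [], t, hq, rfl, .nil q, h⟩
  | cons X l₁ ih =>
    rw [List.cons_append] at h
    cases h with
    | cons_term hmem hq' h2 =>
      obtain ⟨m, t₁, t₂, hm, rfl, hr1, hr2⟩ := ih hq' h2
      exact ⟨m, _ ++ t₁, t₂, hm, by simp, .cons_term hmem hq' hr1, hr2⟩
    | cons_nont hq' h2 =>
      obtain ⟨m, t₁, t₂, hm, rfl, hr1, hr2⟩ := ih hq' h2
      exact ⟨m, _ :: t₁, t₂, hm, by simp, .cons_nont hq' hr1, hr2⟩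

variable {tr Qf} in
theorem run_liftRun (hcl : ∀ q a us q', q ∈ Qf → (us, q') ∈ tr q a → q' ∈ Qf)
    {q w x qf} (hq : q ∈ Qf) (h : Run tr q w x qf) :
    LiftRun (N := N) tr Qf q (w.map .terminal) (x.map .terminal) qf := by
  induction h with
  | nil => exact .nil _
  | @cons q a us q' w x qf hmem h2 ih =>
    have hq' : q' ∈ Qf := hcl q a us q' hq hmem
    simpa using LiftRun.cons_term (l := w.map .terminal) hmem hq' (ih hq')

theorem liftRun_terminal {q s t qf} (h : LiftRun (N := N) tr Qf q s t qf)
    {x : List U} (hx : t = x.map .terminal) :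
    ∃ w, s = w.map .terminal ∧ Run tr q w x qf := by
  induction h generalizing x with
  | nil =>
    have : x = [] := by cases x <;> simp_all
    subst this
    exact ⟨[], by simpa using hx.symm ▸ rfl, .nil _⟩
  | @cons_term q a us q' l t qf hmem hq' h2 ih =>
    rw [eq_comm, List.map_eq_append_iff] at hx
    obtain ⟨x₁, x₂, rfl, hx₁, hx₂⟩ := hx
    have hus : x₁ = us := by
      have : Function.Injective (Symbol.terminal : U → Symbol U (Option (Q × N × Q))) := by
        intro a b hab; cases hab; rfl
      exact List.map_injective_iff.mpr this hx₁
    subst hus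
    obtain ⟨w, rfl, hrun⟩ := ih hx₂.symm
    exact ⟨a :: w, by simp, .cons hmem hrun⟩
  | cons_nont hq' h2 ih =>
    exfalso
    cases x with
    | nil => simp at hx
    | cons y ys => simp at hx

theorem liftRun_no_none {q s t qf} (h : LiftRun (N := N) tr Qf q s t qf) :
    Symbol.nonterminal none ∉ t := by
  induction h with
  | nil => simp
  | cons_term hmem hq' h2 ih =>
    simp only [List.mem_append, List.mem_map]
    rintro (⟨a, _, hb⟩ | hmem2)
    · cases hb
    · exact ih hmem2
  | cons_nont hq' h2 ih =>
    simp only [List.mem_cons]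
    rintro (hb | hmem2)
    · cases hb
    · exact ih hmem2

theorem liftRun_split_nonterminal {q s t qf} (h : LiftRun (N := N) tr Qf q s t qf)
    {p sfx q₁ A q₂} (ht : t = p ++ Symbol.nonterminal (some (q₁, A, q₂)) :: sfx) :
    ∃ sp ss, s = sp ++ Symbol.nonterminal A :: ss ∧ LiftRun tr Qf q sp p q₁ ∧ q₂ ∈ Qf ∧
      LiftRun tr Qf q₂ ss sfx qf := by
  induction h generalizing p with
  | nil => exact absurd ht (by simp)
  | @cons_term q a us q' l t qf hmem hq' h2 ih =>
    rcases List.append_eq_append_iff.mp ht with ⟨a', ha1, ha2⟩ | ⟨c', ha1, ha2⟩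
    · obtain ⟨sp, ss, rfl, hr1, hm2, hr2⟩ := ih ha2
      refine ⟨.terminal a :: sp, ss, by simp, ?_, hm2, hr2⟩
      rw [ha1]
      exact LiftRun.cons_term hmem hq' hr1
    · cases c' with
      | nil =>
        simp only [List.append_nil] at ha1
        simp only [List.nil_append] at ha2
        obtain ⟨sp, ss, rfl, hr1, hm2, hr2⟩ := ih (p := []) ha2.symm
        refine ⟨.terminal a :: sp, ss, by simp, ?_, hm2, hr2⟩
        rw [← ha1]
        simpa using LiftRun.cons_term hmem hq' hr1
      | cons z zs =>
        exfalso
        have hz : z ∈ us.map (Symbol.terminal (N := Option (Q × N × Q))) := by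
          rw [ha1]; simp
        have hz2 : z = Symbol.nonterminal (some (q₁, A, q₂)) := by
          have := ha2
          simp only [List.cons_append, List.cons.injEq] at this
          exact this.1.symm
        subst hz2
        simp only [List.mem_map] at hz
        obtain ⟨b, _, hb⟩ := hz
        cases hb
  | @cons_nont q A' q' l t qf hq' h2 ih =>
    cases p with
    | nil =>
      simp only [List.nil_append, List.cons.injEq, Symbol.nonterminal.injEq,
        Option.some.injEq, Prod.mk.injEq] at ht
      obtain ⟨⟨rfl, rfl, rfl⟩, rfl⟩ := ht
      exact ⟨[], l, by simp, .nil _, hq', h2⟩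
    | cons z zs =>
      simp only [List.cons_append, List.cons.injEq] at ht
      obtain ⟨rfl, ht2⟩ := ht
      obtain ⟨sp, ss, rfl, hr1, hm2, hr2⟩ := ih ht2
      exact ⟨.nonterminal A' :: sp, ss, by simp, .cons_nont hq' hr1, hm2, hr2⟩


open Classical in
/-- The grammar for the inverse transduction of the language of `g`. -/
@[reducible] noncomputable def transduced (tr : Q → T → Finset (List U × Q)) (Qf : Finset Q)
    (g : ContextFreeGrammar.{0} T) (q0 : Q) (acc : Finset Q) : ContextFreeGrammar.{0} U where
  NT := Option (Q × g.NT × Q)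
  initial := none
  rules :=
    (acc.image fun qf =>
      ⟨none, [Symbol.nonterminal (some (q0, g.initial, qf))]⟩) ∪
    (g.rules.biUnion fun r => Qf.biUnion fun q =>
      (ann tr Qf r.output q).image fun s => ⟨some (q, r.input, s.2), s.1⟩)

variable {q0 : Q} {acc : Finset Q}

theorem transduced_sound {n t tw q qf s}
    (hd : DerivesIn (transduced tr Qf g q0 acc) t tw n)
    {x : List U} (htw : tw = x.map .terminal)
    (hlr : LiftRun tr Qf q s t qf) :
    ∃ w, g.Derives s (w.map .terminal) ∧ Run tr q w x qf := by
  classical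
  induction hd generalizing s q x with
  | refl =>
    obtain ⟨w, rfl, hrun⟩ := liftRun_terminal tr Qf hlr htw
    exact ⟨w, by rfl, hrun⟩
  | @head tt tv tw nn hp _ ih =>
    obtain ⟨ρ, hρmem, hρ⟩ := hp
    obtain ⟨pp, qq, htt, htv⟩ := hρ.exists_parts
    rcases Finset.mem_union.mp hρmem with hstart | hmain
    · exfalso
      simp only [Finset.mem_image] at hstart
      obtain ⟨qf', _, rfl⟩ := hstart
      exact liftRun_no_none tr Qf hlr (htt ▸ (by simp))
    · simp only [Finset.mem_biUnion, Finset.mem_image, Prod.exists] at hmain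
      obtain ⟨r, hr, q₁, hq₁, tc, q₂, hann, rfl⟩ := hmain
      have hlr' := liftRun_split_nonterminal tr Qf hlr (by simpa using htt)
      obtain ⟨sp, ss, rfl, hr1, hm2, hr2⟩ := hlr'
      have hannLR : LiftRun tr Qf q₁ r.output tc q₂ := (mem_ann tr Qf).mp hann
      have hlrv : LiftRun tr Qf q (sp ++ r.output ++ ss) (pp ++ tc ++ qq) qf := by
        rw [List.append_assoc, List.append_assoc]
        exact hr1.append tr Qf (hannLR.append tr Qf hr2)
      have hprod : g.Produces (sp ++ Symbol.nonterminal r.input :: ss)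
          (sp ++ r.output ++ ss) := by
        refine ⟨r, hr, ?_⟩
        have := ContextFreeRule.rewrites_of_exists_parts r sp ss
        simpa using this
      obtain ⟨w, hder, hrun⟩ := ih htw (htv ▸ hlrv)
      exact ⟨w, hprod.trans_derives hder, hrun⟩

variable {tr Qf} in
theorem transduced_complete (hcl : ∀ q a us q', q ∈ Qf → (us, q') ∈ tr q a → q' ∈ Qf)
    {n s sw} (hd : DerivesIn g s sw n) {w : List T} {q qf x}
    (hsw : sw = w.map .terminal) (hq : q ∈ Qf) (hrun : Run tr q w x qf) :
    ∃ t, LiftRun tr Qf q s t qf ∧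
      (transduced tr Qf g q0 acc).Derives t (x.map .terminal) := by
  classical
  induction hd generalizing w q x with
  | refl => exact ⟨x.map .terminal, hsw ▸ run_liftRun hcl hq hrun, by rfl⟩
  | @head su sv sw nn hp _ ih =>
    obtain ⟨t₂, hlr2, hder2⟩ := ih hsw hq hrun
    obtain ⟨r, hr, hρ⟩ := hp
    obtain ⟨pp, qq, hsu, hsv⟩ := hρ.exists_parts
    subst hsu hsv
    obtain ⟨m₁, ta, tbc, hm₁, rfl, hra, hrbc⟩ :=
      LiftRun.split tr Qf hq (by rw [List.append_assoc] at hlr2; exact hlr2)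
    obtain ⟨m₂, tc, td, hm₂, rfl, hrc, hrd⟩ := LiftRun.split tr Qf hm₁ hrbc
    refine ⟨ta ++ Symbol.nonterminal (some (m₁, r.input, m₂)) :: td, ?_, ?_⟩
    · have h5 : LiftRun tr Qf m₁ ([Symbol.nonterminal r.input] ++ qq)
          (Symbol.nonterminal (some (m₁, r.input, m₂)) :: td) qf := by
        simpa using LiftRun.cons_nont (tr := tr) (Qf := Qf) hm₂ hrd
      simpa [List.append_assoc] using hra.append tr Qf h5
    · have hrule : (⟨some (m₁, r.input, m₂), tc⟩ :
          ContextFreeRule U (Option (Q × g.NT × Q))) ∈ (transduced tr Qf g q0 acc).rules := by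
        apply Finset.mem_union_right
        simp only [Finset.mem_biUnion, Finset.mem_image, Prod.exists]
        exact ⟨r, hr, m₁, hm₁, tc, m₂, (mem_ann tr Qf).mpr hrc, rfl⟩
      have hstep : (transduced tr Qf g q0 acc).Produces
          (ta ++ Symbol.nonterminal (some (m₁, r.input, m₂)) :: td) (ta ++ tc ++ td) := by
        refine ⟨_, hrule, ?_⟩
        have := ContextFreeRule.rewrites_of_exists_parts
          (⟨some (m₁, r.input, m₂), tc⟩ : ContextFreeRule U (Option (Q × g.NT × Q))) ta td
        simpa using this
      exact hstep.trans_derives (by simpa [List.append_assoc] using hder2)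

variable {tr Qf} in
theorem transduced_language (hcl : ∀ q a us q', q ∈ Qf → (us, q') ∈ tr q a → q' ∈ Qf)
    (hq0 : q0 ∈ Qf) (hacc : ∀ qf ∈ acc, qf ∈ Qf) :
    (transduced tr Qf g q0 acc).language =
      { x : List U | ∃ w qf, w ∈ g.language ∧ qf ∈ acc ∧ Run tr q0 w x qf } := by
  classical
  ext x
  constructor
  · intro hx
    rw [mem_language_iff, derives_iff_derivesIn] at hx
    obtain ⟨n, hn⟩ := hx
    generalize hstart : [Symbol.nonterminal (transduced tr Qf g q0 acc).initial] = st at hn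
    cases hn with
    | refl =>
      exfalso
      cases x with
      | nil => simp at hstart
      | cons y ys => simp at hstart
    | @head _ tv _ nn hp hd =>
      subst hstart
      obtain ⟨ρ, hρmem, hρ⟩ := hp
      obtain ⟨pp, qq, htt, htv⟩ := hρ.exists_parts
      have hpq : pp = [] ∧ qq = [] ∧ ρ.input = none := by
        cases pp with
        | nil =>
          cases qq with
          | nil =>
            refine ⟨rfl, rfl, ?_⟩
            simp only [List.nil_append, List.append_nil, List.cons.injEq,
              Symbol.nonterminal.injEq, and_true] at htt
            exact htt.symm
          | cons z zs =>
            exfalso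
            have := congrArg List.length htt
            simp at this
        | cons z zs =>
          exfalso
          have := congrArg List.length htt
          simp at this
      obtain ⟨rfl, rfl, hρin⟩ := hpq
      rcases Finset.mem_union.mp hρmem with hstart2 | hmain
      · simp only [Finset.mem_image] at hstart2
        obtain ⟨qf, hqf, rfl⟩ := hstart2
        have htv' : tv = [Symbol.nonterminal (some (q0, g.initial, qf))] := by simpa using htv
        have hlr0 : LiftRun tr Qf q0 [Symbol.nonterminal g.initial] tv qf := by
          rw [htv']
          exact .cons_nont (hacc qf hqf) (.nil qf)
        obtain ⟨w, hder, hrun⟩ := transduced_sound tr Qf hd rfl hlr0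
        exact ⟨w, qf, hder, hqf, hrun⟩
      · exfalso
        simp only [Finset.mem_biUnion, Finset.mem_image, Prod.exists] at hmain
        obtain ⟨r, hr, q₁, hq₁, tc, q₂, hann, rfl⟩ := hmain
        simp at hρin
  · rintro ⟨w, qf, hw, hqfacc, hrun⟩
    rw [mem_language_iff, derives_iff_derivesIn] at hw
    obtain ⟨n, hn⟩ := hw
    obtain ⟨t, hlr, hder⟩ := transduced_complete (q0 := q0) (acc := acc) hcl hn rfl hq0 hrun
    cases hlr with
    | @cons_nont _ _ q' _ _ _ hq' h2 =>
      cases h2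
      rw [mem_language_iff]
      have hrule : (⟨none, [Symbol.nonterminal (some (q0, g.initial, qf))]⟩ :
          ContextFreeRule U (Option (Q × g.NT × Q))) ∈ (transduced tr Qf g q0 acc).rules :=
        Finset.mem_union_left _ (Finset.mem_image.mpr ⟨qf, hqfacc, rfl⟩)
      have hstep : (transduced tr Qf g q0 acc).Produces
          [Symbol.nonterminal (transduced tr Qf g q0 acc).initial]
          [Symbol.nonterminal (some (q0, g.initial, qf))] := by
        refine ⟨_, hrule, ?_⟩
        simpa using ContextFreeRule.Rewrites.head
          (r := ⟨none, [Symbol.nonterminal (some (q0, g.initial, qf))]⟩) []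
      exact hstep.trans_derives hder

variable {tr Qf} in
theorem isContextFree_transduction {L : Language T} (hL : L.IsContextFree)
    (tr : Q → T → Finset (List U × Q)) (q0 : Q) (acc Qf : Finset Q)
    (hq0 : q0 ∈ Qf) (hcl : ∀ q a us q', q ∈ Qf → (us, q') ∈ tr q a → q' ∈ Qf)
    (hacc : ∀ qf ∈ acc, qf ∈ Qf) :
    Language.IsContextFree { x : List U | ∃ w qf, w ∈ L ∧ qf ∈ acc ∧ Run tr q0 w x qf } := by
  obtain ⟨g, rfl⟩ := hL
  exact ⟨transduced tr Qf g q0 acc, transduced_language hcl hq0 hacc⟩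


end Transducer



section Eval


variable {α β S : Type*} [Semigroup S]

theorem evalS_ne_none {f : α → S} {u : List α} (hu : u ≠ []) : ∃ s, evalS f u = some s := by
  cases u with
  | nil => exact absurd rfl hu
  | cons a as => exact ⟨_, rfl⟩

theorem foldl_mul_assoc {f : α → S} (v : List α) (s t : S) :
    v.foldl (fun s b => s * f b) (s * t) = s * v.foldl (fun s b => s * f b) t := by
  induction v generalizing t with
  | nil => rfl
  | cons x xs ih => simpa [mul_assoc] using ih (t * f x)

theorem evalS_append {f : α → S} {u v : List α} {su sv : S}
    (hu : evalS f u = some su) (hv : evalS f v = some sv) :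
    evalS f (u ++ v) = some (su * sv) := by
  cases u with
  | nil => exact absurd hu (by simp [evalS])
  | cons a as =>
    cases v with
    | nil => exact absurd hv (by simp [evalS])
    | cons b bs =>
      simp only [evalS, Option.some.injEq] at hu hv
      have hre : (a :: as) ++ (b :: bs) = a :: (as ++ b :: bs) := by simp
      rw [hre]
      show some ((as ++ b :: bs).foldl (fun s b => s * f b) (f a)) = some (su * sv)
      rw [List.foldl_append, hu]
      show some (List.foldl (fun s b => s * f b) (su * f b) bs) = some (su * sv)
      rw [foldl_mul_assoc, hv]

theorem evalS_flatMap {f : α → S} {g : β → S} {c : β → List α}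
    (hc : ∀ b, evalS f (c b) = some (g b)) :
    ∀ u : List β, u ≠ [] → evalS f (u.flatMap c) = evalS g u := by
  intro u hu
  induction u with
  | nil => exact absurd rfl hu
  | cons b bs ih =>
    rcases eq_or_ne bs [] with rfl | hbs
    · simpa [List.flatMap, evalS] using hc b
    · obtain ⟨s', hs'⟩ := evalS_ne_none (f := g) hbs
      have h1 : evalS f (bs.flatMap c) = some s' := (ih hbs).trans hs'
      have h2 : evalS g (b :: bs) = some (g b * s') :=
        evalS_append (u := [b]) (by simp [evalS]) hs'
      have h3 : (b :: bs).flatMap c = c b ++ bs.flatMap c := by simp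
      rw [h3, evalS_append (hc b) h1, h2]

theorem map_some_none_eq {a c : List α} {b d : List α}
    (h : a.map some ++ none :: b.map some = c.map some ++ none :: d.map some) :
    a = c ∧ b = d := by
  induction a generalizing c with
  | nil =>
    cases c with
    | nil =>
      simp only [List.map_nil, List.nil_append, List.cons.injEq] at h
      exact ⟨rfl, List.map_injective_iff.mpr (Option.some_injective α) h.2⟩
    | cons x xs => simp at h
  | cons x xs ih =>
    cases c with
    | nil => simp at h
    | cons y ys =>
      simp only [List.map_cons, List.cons_append, List.cons.injEq, Option.some.injEq] at h
      obtain ⟨rfl, h2⟩ := h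
      have := ih (by simpa using h2)
      exact ⟨by rw [this.1], this.2⟩

theorem mem_wordProblem_shape {f : α → S} {P Q : List α} :
    (P.map some ++ none :: Q.map some) ∈ wordProblem f ↔
      P ≠ [] ∧ Q ≠ [] ∧ evalS f P = evalS f Q.reverse := by
  constructor
  · rintro ⟨u, v, hu, hv, he, hx⟩
    have hx' : P.map some ++ none :: Q.map some = u.map some ++ none :: (v.reverse).map some := by
      simpa using hx
    obtain ⟨rfl, rfl⟩ := map_some_none_eq hx'
    refine ⟨hu, by simpa using hv, by simpa using he⟩
  · rintro ⟨hP, hQ, he⟩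
    exact ⟨P, Q.reverse, hP, by simpa using hQ, by simpa using he, by simp⟩



end Eval

section Machine

variable {α β : Type} [Fintype β]

/-- States of the block-parsing transducer. -/
inductive MSt (α β : Type) where
  | L0 | L1 | R0 | R1
  | Lm (b : β) (rem : List α)
  | Rm (b : β) (rem : List α)

open MSt

open Classical in
/-- Transitions entering (and possibly completing) a block. -/
noncomputable def enter (blk : β → List α) (mid : β → List α → MSt α β) (fin : MSt α β)
    (a : α) : Finset (List (Option β) × MSt α β) :=
  Finset.univ.biUnion fun b => match blk b with
    | [] => ∅
    | a' :: rem =>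
        if a' = a then {(if rem = [] then ([some b], fin) else ([], mid b rem))} else ∅

theorem mem_enter {blk : β → List α} {mid fin} {a : α} {us q'} :
    (us, q') ∈ enter blk mid fin a ↔ ∃ b rem, blk b = a :: rem ∧
      ((rem = [] ∧ us = [some b] ∧ q' = fin) ∨ (rem ≠ [] ∧ us = [] ∧ q' = mid b rem)) := by
  classical
  simp only [enter, Finset.mem_biUnion, Finset.mem_univ, true_and]
  constructor
  · rintro ⟨b, hb⟩
    rcases hblk : blk b with _ | ⟨a', rem⟩ <;> rw [hblk] at hb <;> dsimp only at hb
    · simp at hb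
    · split_ifs at hb with ha hrem
      · rw [Finset.mem_singleton, Prod.mk.injEq] at hb
        exact ⟨b, rem, by rw [hblk, ha], Or.inl ⟨hrem, hb.1, hb.2⟩⟩
      · rw [Finset.mem_singleton, Prod.mk.injEq] at hb
        exact ⟨b, rem, by rw [hblk, ha], Or.inr ⟨hrem, hb.1, hb.2⟩⟩
      · simp at hb
  · rintro ⟨b, rem, hblk, h⟩
    refine ⟨b, ?_⟩
    rw [hblk]
    dsimp only
    rcases h with ⟨hrem, rfl, rfl⟩ | ⟨hrem, rfl, rfl⟩ <;> split_ifs <;> simp_all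

open Classical in
/-- The transducer reading a word-problem word over `Option α` and emitting its
`β`-block decomposition. -/
noncomputable def mtr (c : β → List α) :
    MSt α β → Option α → Finset (List (Option β) × MSt α β)
  | L0, some a => enter c Lm L1 a
  | L1, some a => enter c Lm L1 a
  | L1, none => {([(none : Option β)], R0)}
  | R0, some a => enter (fun b => (c b).reverse) Rm R1 a
  | R1, some a => enter (fun b => (c b).reverse) Rm R1 a
  | Lm b (a' :: rem), some a =>
      if a' = a then {(if rem = [] then ([some b], L1) else ([], Lm b rem))} else ∅
  | Rm b (a' :: rem), some a =>
      if a' = a then {(if rem = [] then ([some b], R1) else ([], Rm b rem))} else ∅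
  | _, _ => ∅

variable {c : β → List α}

/-- Shape invariant for right-side states. -/
def PhiR (c : β → List α) (w : List (Option α)) (x : List (Option β)) : Prop :=
  ∃ z : List β, w = ((z.flatMap fun b => (c b).reverse).map some) ∧ x = z.map some

/-- Shape invariant for left-side states. -/
def PhiL (c : β → List α) (w : List (Option α)) (x : List (Option β)) : Prop :=
  ∃ u z : List β, z ≠ [] ∧
    w = (u.flatMap c).map some ++ none :: ((z.flatMap fun b => (c b).reverse).map some) ∧
    x = u.map some ++ none :: z.map some

/-- Shape invariant for all states. -/
def Phi (c : β → List α) : MSt α β → List (Option α) → List (Option β) → Prop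
  | R1, w, x => PhiR c w x
  | R0, w, x => ∃ z : List β, z ≠ [] ∧
      w = ((z.flatMap fun b => (c b).reverse).map some) ∧ x = z.map some
  | Rm b rem, w, x => ∃ w' x', PhiR c w' x' ∧ w = rem.map some ++ w' ∧ x = some b :: x'
  | L1, w, x => PhiL c w x
  | L0, w, x => ∃ u z : List β, u ≠ [] ∧ z ≠ [] ∧
      w = (u.flatMap c).map some ++ none :: ((z.flatMap fun b => (c b).reverse).map some) ∧
      x = u.map some ++ none :: z.map some
  | Lm b rem, w, x => ∃ w' x', PhiL c w' x' ∧ w = rem.map some ++ w' ∧ x = some b :: x'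

theorem run_phi {q w x qf} (h : Run (mtr c) q w x qf) (hqf : qf = R1) : Phi c q w x := by
  classical
  induction h with
  | nil =>
    subst hqf
    exact ⟨[], rfl, rfl⟩
  | @cons q aa us q' w' x' qf hmem h2 ih =>
    subst hqf
    have ihh := ih rfl
    clear ih h2
    cases q with
    | L0 =>
      cases aa with
      | none => exact absurd hmem (by rw [show mtr c L0 none = ∅ from rfl]; simp)
      | some a =>
        rw [show mtr c L0 (some a) = enter c Lm L1 a from rfl, mem_enter] at hmem
        obtain ⟨b, rem, hblk, hca⟩ := hmem
        rcases hca with ⟨rfl, rfl, rfl⟩ | ⟨hrem, rfl, rfl⟩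
        · obtain ⟨u', z, hz, rfl, rfl⟩ := ihh
          exact ⟨b :: u', z, by simp, hz, by simp [hblk], by simp⟩
        · obtain ⟨w'', x'', ⟨u', z, hz, rfl, rfl⟩, rfl, rfl⟩ := ihh
          exact ⟨b :: u', z, by simp, hz, by simp [hblk], by simp⟩
    | L1 =>
      cases aa with
      | none =>
        rw [show mtr c L1 none = {([(none : Option β)], R0)} from rfl,
          Finset.mem_singleton, Prod.mk.injEq] at hmem
        obtain ⟨rfl, rfl⟩ := hmem
        obtain ⟨z, hz, rfl, rfl⟩ := ihh
        exact ⟨[], z, hz, by simp, by simp⟩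
      | some a =>
        rw [show mtr c L1 (some a) = enter c Lm L1 a from rfl, mem_enter] at hmem
        obtain ⟨b, rem, hblk, hca⟩ := hmem
        rcases hca with ⟨rfl, rfl, rfl⟩ | ⟨hrem, rfl, rfl⟩
        · obtain ⟨u', z, hz, rfl, rfl⟩ := ihh
          exact ⟨b :: u', z, hz, by simp [hblk], by simp⟩
        · obtain ⟨w'', x'', ⟨u', z, hz, rfl, rfl⟩, rfl, rfl⟩ := ihh
          exact ⟨b :: u', z, hz, by simp [hblk], by simp⟩
    | Lm b l =>
      cases aa with
      | none =>
        cases l with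
        | nil => exact absurd hmem (by rw [show mtr c (Lm b []) none = ∅ from rfl]; simp)
        | cons a' rem =>
          exact absurd hmem (by rw [show mtr c (Lm b (a' :: rem)) none = ∅ from rfl]; simp)
      | some a =>
        cases l with
        | nil => exact absurd hmem (by rw [show mtr c (Lm b []) (some a) = ∅ from rfl]; simp)
        | cons a' rem =>
          rw [show mtr c (Lm b (a' :: rem)) (some a) =
            (if a' = a then {(if rem = [] then ([some b], L1) else ([], Lm b rem))} else ∅)
            from rfl] at hmem
          split_ifs at hmem with ha hrem
          · subst ha hrem
            rw [Finset.mem_singleton, Prod.mk.injEq] at hmem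
            obtain ⟨rfl, rfl⟩ := hmem
            exact ⟨w', x', ihh, by simp, by simp⟩
          · subst ha
            rw [Finset.mem_singleton, Prod.mk.injEq] at hmem
            obtain ⟨rfl, rfl⟩ := hmem
            obtain ⟨w'', x'', hphi, rfl, rfl⟩ := ihh
            exact ⟨w'', x'', hphi, by simp, by simp⟩
          · simp at hmem
    | R0 =>
      cases aa with
      | none => exact absurd hmem (by rw [show mtr c R0 none = ∅ from rfl]; simp)
      | some a =>
        rw [show mtr c R0 (some a) = enter (fun b => (c b).reverse) Rm R1 a from rfl,
          mem_enter] at hmem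
        obtain ⟨b, rem, hblk, hca⟩ := hmem
        rcases hca with ⟨rfl, rfl, rfl⟩ | ⟨hrem, rfl, rfl⟩
        · obtain ⟨z, rfl, rfl⟩ := ihh
          exact ⟨b :: z, by simp, by simp [hblk], by simp⟩
        · obtain ⟨w'', x'', ⟨z, rfl, rfl⟩, rfl, rfl⟩ := ihh
          exact ⟨b :: z, by simp, by simp [hblk], by simp⟩
    | R1 =>
      cases aa with
      | none => exact absurd hmem (by rw [show mtr c R1 none = ∅ from rfl]; simp)
      | some a =>
        rw [show mtr c R1 (some a) = enter (fun b => (c b).reverse) Rm R1 a from rfl,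
          mem_enter] at hmem
        obtain ⟨b, rem, hblk, hca⟩ := hmem
        rcases hca with ⟨rfl, rfl, rfl⟩ | ⟨hrem, rfl, rfl⟩
        · obtain ⟨z, rfl, rfl⟩ := ihh
          exact ⟨b :: z, by simp [hblk], by simp⟩
        · obtain ⟨w'', x'', ⟨z, rfl, rfl⟩, rfl, rfl⟩ := ihh
          exact ⟨b :: z, by simp [hblk], by simp⟩
    | Rm b l =>
      cases aa with
      | none =>
        cases l with
        | nil => exact absurd hmem (by rw [show mtr c (Rm b []) none = ∅ from rfl]; simp)
        | cons a' rem =>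
          exact absurd hmem (by rw [show mtr c (Rm b (a' :: rem)) none = ∅ from rfl]; simp)
      | some a =>
        cases l with
        | nil => exact absurd hmem (by rw [show mtr c (Rm b []) (some a) = ∅ from rfl]; simp)
        | cons a' rem =>
          rw [show mtr c (Rm b (a' :: rem)) (some a) =
            (if a' = a then {(if rem = [] then ([some b], R1) else ([], Rm b rem))} else ∅)
            from rfl] at hmem
          split_ifs at hmem with ha hrem
          · subst ha hrem
            rw [Finset.mem_singleton, Prod.mk.injEq] at hmem
            obtain ⟨rfl, rfl⟩ := hmem
            exact ⟨w', x', ihh, by simp, by simp⟩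
          · subst ha
            rw [Finset.mem_singleton, Prod.mk.injEq] at hmem
            obtain ⟨rfl, rfl⟩ := hmem
            obtain ⟨w'', x'', hphi, rfl, rfl⟩ := ihh
            exact ⟨w'', x'', hphi, by simp, by simp⟩
          · simp at hmem

theorem run_mid_L {b : β} {rem : List α} (hrem : rem ≠ []) :
    Run (mtr c) (Lm b rem) (rem.map some) [some b] L1 := by
  classical
  induction rem with
  | nil => exact absurd rfl hrem
  | cons a rem' ih =>
    rcases eq_or_ne rem' [] with rfl | hrem'
    · have hmem : (([some b], L1) : List (Option β) × MSt α β) ∈ mtr c (Lm b [a]) (some a) := by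
        rw [show mtr c (Lm b [a]) (some a) =
          (if a = a then {(if ([] : List α) = [] then ([some b], L1) else ([], Lm b []))} else ∅)
          from rfl]
        simp
      simpa using Run.cons hmem (Run.nil L1)
    · have hmem : (([], Lm b rem') : List (Option β) × MSt α β)
          ∈ mtr c (Lm b (a :: rem')) (some a) := by
        rw [show mtr c (Lm b (a :: rem')) (some a) =
          (if a = a then {(if rem' = [] then ([some b], L1) else ([], Lm b rem'))} else ∅)
          from rfl]
        simp [hrem']
      simpa using Run.cons hmem (ih hrem')

theorem run_mid_R {b : β} {rem : List α} (hrem : rem ≠ []) :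
    Run (mtr c) (Rm b rem) (rem.map some) [some b] R1 := by
  classical
  induction rem with
  | nil => exact absurd rfl hrem
  | cons a rem' ih =>
    rcases eq_or_ne rem' [] with rfl | hrem'
    · have hmem : (([some b], R1) : List (Option β) × MSt α β) ∈ mtr c (Rm b [a]) (some a) := by
        rw [show mtr c (Rm b [a]) (some a) =
          (if a = a then {(if ([] : List α) = [] then ([some b], R1) else ([], Rm b []))} else ∅)
          from rfl]
        simp
      simpa using Run.cons hmem (Run.nil R1)
    · have hmem : (([], Rm b rem') : List (Option β) × MSt α β)
          ∈ mtr c (Rm b (a :: rem')) (some a) := by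
        rw [show mtr c (Rm b (a :: rem')) (some a) =
          (if a = a then {(if rem' = [] then ([some b], R1) else ([], Rm b rem'))} else ∅)
          from rfl]
        simp [hrem']
      simpa using Run.cons hmem (ih hrem')

theorem run_block_L {q : MSt α β} {b : β} (hb : c b ≠ []) (hq : q = L0 ∨ q = L1) :
    Run (mtr c) q ((c b).map some) [some b] L1 := by
  rcases hcb : c b with _ | ⟨a, rem⟩
  · exact absurd hcb hb
  · have htr : mtr c q (some a) = enter c Lm L1 a := by
      rcases hq with rfl | rfl <;> rfl
    rcases eq_or_ne rem [] with rfl | hrem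
    · have hmem : (([some b], L1) : List (Option β) × MSt α β) ∈ mtr c q (some a) := by
        rw [htr, mem_enter]
        exact ⟨b, [], hcb, Or.inl ⟨rfl, rfl, rfl⟩⟩
      simpa using Run.cons hmem (Run.nil L1)
    · have hmem : (([], Lm b rem) : List (Option β) × MSt α β) ∈ mtr c q (some a) := by
        rw [htr, mem_enter]
        exact ⟨b, rem, hcb, Or.inr ⟨hrem, rfl, rfl⟩⟩
      simpa using Run.cons hmem (run_mid_L hrem)

theorem run_block_R {q : MSt α β} {b : β} (hb : (c b).reverse ≠ []) (hq : q = R0 ∨ q = R1) :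
    Run (mtr c) q ((c b).reverse.map some) [some b] R1 := by
  rcases hcb : (c b).reverse with _ | ⟨a, rem⟩
  · exact absurd hcb hb
  · have htr : mtr c q (some a) = enter (fun b => (c b).reverse) Rm R1 a := by
      rcases hq with rfl | rfl <;> rfl
    rcases eq_or_ne rem [] with rfl | hrem
    · have hmem : (([some b], R1) : List (Option β) × MSt α β) ∈ mtr c q (some a) := by
        rw [htr, mem_enter]
        exact ⟨b, [], hcb, Or.inl ⟨rfl, rfl, rfl⟩⟩
      simpa using Run.cons hmem (Run.nil R1)
    · have hmem : (([], Rm b rem) : List (Option β) × MSt α β) ∈ mtr c q (some a) := by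
        rw [htr, mem_enter]
        exact ⟨b, rem, hcb, Or.inr ⟨hrem, rfl, rfl⟩⟩
      simpa using Run.cons hmem (run_mid_R hrem)

theorem run_L_word (hc : ∀ b : β, c b ≠ []) (u : List β) :
    Run (mtr c) L1 ((u.flatMap c).map some) (u.map some) L1 := by
  induction u with
  | nil => exact Run.nil L1
  | cons b u' ih =>
    have h1 : Run (mtr c) L1 ((c b).map some) [some b] L1 := run_block_L (hc b) (Or.inr rfl)
    simpa using h1.append (mtr c) ih

theorem run_R_word (hc : ∀ b : β, c b ≠ []) (z : List β) :
    Run (mtr c) R1 ((z.flatMap fun b => (c b).reverse).map some) (z.map some) R1 := by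
  induction z with
  | nil => exact Run.nil R1
  | cons b z' ih =>
    have h1 : Run (mtr c) R1 ((c b).reverse.map some) [some b] R1 :=
      run_block_R (by simpa using hc b) (Or.inr rfl)
    simpa using h1.append (mtr c) ih

theorem run_full (hc : ∀ b : β, c b ≠ []) {u z : List β} (hu : u ≠ []) (hz : z ≠ []) :
    Run (mtr c) L0
      ((u.flatMap c).map some ++ none :: ((z.flatMap fun b => (c b).reverse).map some))
      (u.map some ++ none :: z.map some) R1 := by
  cases u with
  | nil => exact absurd rfl hu
  | cons b u' =>
    cases z with
    | nil => exact absurd rfl hz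
    | cons b' z' =>
      have h1 : Run (mtr c) L0 ((c b).map some) [some b] L1 := run_block_L (hc b) (Or.inl rfl)
      have h2 := run_L_word hc u'
      have hnone : (([(none : Option β)], R0) : List (Option β) × MSt α β)
          ∈ mtr c L1 none := by
        rw [show mtr c L1 none = {([(none : Option β)], R0)} from rfl]; simp
      have h4 : Run (mtr c) R0 ((c b').reverse.map some) [some b'] R1 :=
        run_block_R (by simpa using hc b') (Or.inl rfl)
      have h5 := run_R_word hc z'
      have h45 := h4.append (mtr c) h5
      have h345 : Run (mtr c) L1
          (none :: ((c b').reverse.map some ++ (z'.flatMap fun b => (c b).reverse).map some))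
          (none :: ([some b'] ++ z'.map some)) R1 :=
        Run.cons hnone h45
      have h12 := h1.append (mtr c) (h2.append (mtr c) h345)
      simpa using h12

theorem run_iff (hc : ∀ b : β, c b ≠ []) {w : List (Option α)} {x : List (Option β)} :
    (Run (mtr c) L0 w x R1) ↔ ∃ u z : List β, u ≠ [] ∧ z ≠ [] ∧
      w = (u.flatMap c).map some ++ none :: ((z.flatMap fun b => (c b).reverse).map some) ∧
      x = u.map some ++ none :: z.map some := by
  constructor
  · intro h
    exact run_phi h rfl
  · rintro ⟨u, z, hu, hz, rfl, rfl⟩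
    exact run_full hc hu hz


open Classical in
/-- The finite set of reachable transducer states. -/
noncomputable def mQf (c : β → List α) : Finset (MSt α β) :=
  (({L0, L1, R0, R1} : Finset (MSt α β)) ∪
    (Finset.univ.biUnion fun b => ((c b).tails.toFinset).image (Lm b))) ∪
  (Finset.univ.biUnion fun b => (((c b).reverse).tails.toFinset).image (Rm b))

theorem base_mem_mQf (q : MSt α β) (hq : q = L0 ∨ q = L1 ∨ q = R0 ∨ q = R1) : q ∈ mQf c := by
  classical
  rcases hq with rfl | rfl | rfl | rfl <;>
    · apply Finset.mem_union_left
      apply Finset.mem_union_left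
      simp

theorem Lm_mem_mQf {b : β} {l : List α} (h : l <:+ c b) : Lm b l ∈ mQf c := by
  classical
  apply Finset.mem_union_left
  apply Finset.mem_union_right
  simp only [Finset.mem_biUnion, Finset.mem_univ, true_and, Finset.mem_image,
    List.mem_toFinset, List.mem_tails]
  exact ⟨b, l, h, rfl⟩

theorem Rm_mem_mQf {b : β} {l : List α} (h : l <:+ (c b).reverse) : Rm b l ∈ mQf c := by
  classical
  apply Finset.mem_union_right
  simp only [Finset.mem_biUnion, Finset.mem_univ, true_and, Finset.mem_image,
    List.mem_toFinset, List.mem_tails]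
  exact ⟨b, l, h, rfl⟩

theorem mem_mQf_Lm {b : β} {l : List α} (h : Lm b l ∈ mQf c) : l <:+ c b := by
  classical
  simp only [mQf, Finset.mem_union, Finset.mem_insert, Finset.mem_singleton,
    Finset.mem_biUnion, Finset.mem_univ, true_and, Finset.mem_image,
    List.mem_toFinset, List.mem_tails] at h
  rcases h with ((h | h | h | h) | ⟨b', l', hsuf, heq⟩) | ⟨b', l', hsuf, heq⟩
  · cases h
  · cases h
  · cases h
  · cases h
  · rw [MSt.Lm.injEq] at heq
    obtain ⟨rfl, rfl⟩ := heq
    exact hsuf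
  · cases heq

theorem mem_mQf_Rm {b : β} {l : List α} (h : Rm b l ∈ mQf c) : l <:+ (c b).reverse := by
  classical
  simp only [mQf, Finset.mem_union, Finset.mem_insert, Finset.mem_singleton,
    Finset.mem_biUnion, Finset.mem_univ, true_and, Finset.mem_image,
    List.mem_toFinset, List.mem_tails] at h
  rcases h with ((h | h | h | h) | ⟨b', l', hsuf, heq⟩) | ⟨b', l', hsuf, heq⟩
  · cases h
  · cases h
  · cases h
  · cases h
  · cases heq
  · rw [MSt.Rm.injEq] at heq
    obtain ⟨rfl, rfl⟩ := heq
    exact hsuf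

theorem mQf_closed : ∀ (q : MSt α β) (a : Option α) us q',
    q ∈ mQf c → (us, q') ∈ mtr c q a → q' ∈ mQf c := by
  classical
  intro q a us q' hq hmem
  cases q with
  | L0 =>
    cases a with
    | none => exact absurd hmem (by rw [show mtr c L0 none = ∅ from rfl]; simp)
    | some a =>
      rw [show mtr c L0 (some a) = enter c Lm L1 a from rfl, mem_enter] at hmem
      obtain ⟨b, rem, hblk, hca⟩ := hmem
      rcases hca with ⟨_, _, rfl⟩ | ⟨_, _, rfl⟩
      · exact base_mem_mQf _ (by simp)
      · exact Lm_mem_mQf ⟨[a], hblk.symm⟩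
  | L1 =>
    cases a with
    | none =>
      rw [show mtr c L1 none = {([(none : Option β)], R0)} from rfl,
        Finset.mem_singleton, Prod.mk.injEq] at hmem
      obtain ⟨_, rfl⟩ := hmem
      exact base_mem_mQf _ (by simp)
    | some a =>
      rw [show mtr c L1 (some a) = enter c Lm L1 a from rfl, mem_enter] at hmem
      obtain ⟨b, rem, hblk, hca⟩ := hmem
      rcases hca with ⟨_, _, rfl⟩ | ⟨_, _, rfl⟩
      · exact base_mem_mQf _ (by simp)
      · exact Lm_mem_mQf ⟨[a], hblk.symm⟩
  | R0 =>
    cases a with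
    | none => exact absurd hmem (by rw [show mtr c R0 none = ∅ from rfl]; simp)
    | some a =>
      rw [show mtr c R0 (some a) = enter (fun b => (c b).reverse) Rm R1 a from rfl,
        mem_enter] at hmem
      obtain ⟨b, rem, hblk, hca⟩ := hmem
      rcases hca with ⟨_, _, rfl⟩ | ⟨_, _, rfl⟩
      · exact base_mem_mQf _ (by simp)
      · exact Rm_mem_mQf ⟨[a], hblk.symm⟩
  | R1 =>
    cases a with
    | none => exact absurd hmem (by rw [show mtr c R1 none = ∅ from rfl]; simp)
    | some a =>
      rw [show mtr c R1 (some a) = enter (fun b => (c b).reverse) Rm R1 a from rfl,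
        mem_enter] at hmem
      obtain ⟨b, rem, hblk, hca⟩ := hmem
      rcases hca with ⟨_, _, rfl⟩ | ⟨_, _, rfl⟩
      · exact base_mem_mQf _ (by simp)
      · exact Rm_mem_mQf ⟨[a], hblk.symm⟩
  | Lm b l =>
    cases a with
    | none =>
      exfalso
      cases l with
      | nil => exact absurd hmem (by rw [show mtr c (Lm b []) none = ∅ from rfl]; simp)
      | cons a' rem =>
        exact absurd hmem (by rw [show mtr c (Lm b (a' :: rem)) none = ∅ from rfl]; simp)
    | some a =>
      cases l with
      | nil => exact absurd hmem (by rw [show mtr c (Lm b []) (some a) = ∅ from rfl]; simp)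
      | cons a' rem =>
        rw [show mtr c (Lm b (a' :: rem)) (some a) =
          (if a' = a then {(if rem = [] then ([some b], L1) else ([], Lm b rem))} else ∅)
          from rfl] at hmem
        split_ifs at hmem with ha hrem
        · rw [Finset.mem_singleton, Prod.mk.injEq] at hmem
          obtain ⟨_, rfl⟩ := hmem
          exact base_mem_mQf _ (by simp)
        · rw [Finset.mem_singleton, Prod.mk.injEq] at hmem
          obtain ⟨_, rfl⟩ := hmem
          exact Lm_mem_mQf (List.IsSuffix.trans (⟨[a'], rfl⟩ : rem <:+ a' :: rem) (mem_mQf_Lm hq))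
        · simp at hmem
  | Rm b l =>
    cases a with
    | none =>
      exfalso
      cases l with
      | nil => exact absurd hmem (by rw [show mtr c (Rm b []) none = ∅ from rfl]; simp)
      | cons a' rem =>
        exact absurd hmem (by rw [show mtr c (Rm b (a' :: rem)) none = ∅ from rfl]; simp)
    | some a =>
      cases l with
      | nil => exact absurd hmem (by rw [show mtr c (Rm b []) (some a) = ∅ from rfl]; simp)
      | cons a' rem =>
        rw [show mtr c (Rm b (a' :: rem)) (some a) =
          (if a' = a then {(if rem = [] then ([some b], R1) else ([], Rm b rem))} else ∅)
          from rfl] at hmem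
        split_ifs at hmem with ha hrem
        · rw [Finset.mem_singleton, Prod.mk.injEq] at hmem
          obtain ⟨_, rfl⟩ := hmem
          exact base_mem_mQf _ (by simp)
        · rw [Finset.mem_singleton, Prod.mk.injEq] at hmem
          obtain ⟨_, rfl⟩ := hmem
          exact Rm_mem_mQf (List.IsSuffix.trans (⟨[a'], rfl⟩ : rem <:+ a' :: rem) (mem_mQf_Rm hq))
        · simp at hmem


end Machine

section CFSide

theorem flatMap_reverse {α β : Type*} (l : List β) (f : β → List α) :
    (l.flatMap f).reverse = l.reverse.flatMap fun b => (f b).reverse := by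
  induction l with
  | nil => simp
  | cons b l ih => simp [ih]

theorem flatMap_ne_nil {α β : Type*} {c : β → List α} (hb : ∀ b, c b ≠ []) {u : List β}
    (hu : u ≠ []) : u.flatMap c ≠ [] := by
  cases u with
  | nil => exact absurd rfl hu
  | cons b u' =>
    intro h
    apply hb b
    cases hcb : c b with
    | nil => rfl
    | cons y ys =>
      rw [show (b :: u').flatMap c = c b ++ u'.flatMap c from by simp, hcb] at h
      simp at h

theorem cf_side {S : Type*} [Semigroup S] {α β : Type} [Fintype β] (f : α → S) (g : β → S)
    (hf : IsChoice f) (hCF : (wordProblem f).IsContextFree) :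
    (wordProblem g).IsContextFree := by
  classical
  choose cw hcw using hf
  set c : β → List α := fun b => cw (g b) with hcdef
  have hcb : ∀ b, evalS f (c b) = some (g b) := fun b => hcw (g b)
  have hcne : ∀ b, c b ≠ [] := by
    intro b h
    have h2 := hcb b
    rw [h] at h2
    simp [evalS] at h2
  have hmain := isContextFree_transduction hCF (mtr c) MSt.L0 ({MSt.R1} : Finset (MSt α β))
    (mQf c) (base_mem_mQf _ (by simp)) mQf_closed
    (by
      intro qf hqf
      rw [Finset.mem_singleton] at hqf
      subst hqf
      exact base_mem_mQf _ (by simp))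
  suffices hEq : { x : List (Option β) | ∃ w qf, w ∈ wordProblem f ∧
      qf ∈ ({MSt.R1} : Finset (MSt α β)) ∧ Run (mtr c) MSt.L0 w x qf } = wordProblem g by
    rw [hEq] at hmain
    exact hmain
  ext x
  simp only [Set.mem_setOf_eq, Finset.mem_singleton]
  constructor
  · rintro ⟨w, qf, hw, rfl, hrun⟩
    obtain ⟨u, z, hu, hz, rfl, rfl⟩ := (run_iff hcne).mp hrun
    rw [mem_wordProblem_shape] at hw
    obtain ⟨hP, hQ, he⟩ := hw
    have h1 : evalS f (u.flatMap c) = evalS g u := evalS_flatMap hcb u hu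
    have hzr : z.reverse ≠ [] := by simpa using hz
    have h2 : (z.flatMap fun b => (c b).reverse).reverse = z.reverse.flatMap c := by
      rw [flatMap_reverse]; simp
    have h3 : evalS f (z.reverse.flatMap c) = evalS g z.reverse := evalS_flatMap hcb _ hzr
    refine ⟨u, z.reverse, hu, hzr, ?_, ?_⟩
    · rw [← h1, he, h2, h3]
    · simp
  · rintro ⟨u, v, hu, hv, he, rfl⟩
    refine ⟨(u.flatMap c).map some ++
      none :: ((v.reverse.flatMap fun b => (c b).reverse).map some), MSt.R1, ?_, rfl, ?_⟩
    · rw [mem_wordProblem_shape]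
      have h2 : (v.reverse.flatMap fun b => (c b).reverse).reverse = v.flatMap c := by
        rw [flatMap_reverse]; simp
      refine ⟨flatMap_ne_nil hcne hu, ?_, ?_⟩
      · intro hnil
        have := congrArg List.reverse hnil
        rw [h2] at this
        exact flatMap_ne_nil hcne hv (by simpa using this)
      rw [evalS_flatMap hcb u hu, h2, evalS_flatMap hcb v hv, he]
    · exact (run_iff hcne).mpr ⟨u, v.reverse, hu, by simpa using hv, rfl, rfl⟩

end CFSide


section RegSide

/-- Phases of the word-problem DFA. -/
inductive Ph where
  | p0 | pl | pr0 | pr1 | pd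
  deriving DecidableEq

instance : Fintype Ph :=
  ⟨{.p0, .pl, .pr0, .pr1, .pd}, by intro x; cases x <;> simp⟩

variable {α β : Type} [Fintype β] {σ : Type} (M : DFA (Option α) σ) (c : β → List α)

/-- The DFA for the word problem with respect to the new generators. -/
def wpDFA : DFA (Option β) (Ph × σ) where
  step := fun p b? =>
    match p.1, b? with
    | .p0, some b => (.pl, M.evalFrom p.2 ((c b).map some))
    | .pl, some b => (.pl, M.evalFrom p.2 ((c b).map some))
    | .pl, none => (.pr0, M.step p.2 none)
    | .pr0, some b => (.pr1, M.evalFrom p.2 ((c b).reverse.map some))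
    | .pr1, some b => (.pr1, M.evalFrom p.2 ((c b).reverse.map some))
    | _, _ => (.pd, p.2)
  start := (.p0, M.start)
  accept := {p | p.1 = .pr1 ∧ p.2 ∈ M.accept}

theorem wpDFA_evalL (u : List β) (m : σ) :
    (wpDFA M c).evalFrom (.pl, m) (u.map some) =
      (.pl, M.evalFrom m ((u.flatMap c).map some)) := by
  induction u generalizing m with
  | nil => simp [DFA.evalFrom]
  | cons b u ih =>
    have hstep : (wpDFA M c).step (.pl, m) (some b) = (.pl, M.evalFrom m ((c b).map some)) := rfl
    rw [show (b :: u).map (some : β → Option β) = some b :: u.map some from rfl]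
    rw [show (wpDFA M c).evalFrom (.pl, m) (some b :: u.map some)
      = (wpDFA M c).evalFrom ((wpDFA M c).step (.pl, m) (some b)) (u.map some) from rfl]
    rw [hstep, ih]
    rw [← DFA.evalFrom_of_append]
    congr 1
    simp

theorem wpDFA_evalR (z : List β) (m : σ) :
    (wpDFA M c).evalFrom (.pr1, m) (z.map some) =
      (.pr1, M.evalFrom m ((z.flatMap fun b => (c b).reverse).map some)) := by
  induction z generalizing m with
  | nil => simp [DFA.evalFrom]
  | cons b z ih =>
    have hstep : (wpDFA M c).step (.pr1, m) (some b)
        = (.pr1, M.evalFrom m ((c b).reverse.map some)) := rfl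
    rw [show (b :: z).map (some : β → Option β) = some b :: z.map some from rfl]
    rw [show (wpDFA M c).evalFrom (.pr1, m) (some b :: z.map some)
      = (wpDFA M c).evalFrom ((wpDFA M c).step (.pr1, m) (some b)) (z.map some) from rfl]
    rw [hstep, ih]
    rw [← DFA.evalFrom_of_append]
    congr 1
    simp

theorem wpDFA_dead (x : List (Option β)) (m : σ) :
    ((wpDFA M c).evalFrom (.pd, m) x).1 = .pd := by
  induction x generalizing m with
  | nil => rfl
  | cons b? x ih =>
    have hstep : (wpDFA M c).step (.pd, m) b? = (.pd, m) := by cases b? <;> rfl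
    rw [show (wpDFA M c).evalFrom (.pd, m) (b? :: x)
      = (wpDFA M c).evalFrom ((wpDFA M c).step (.pd, m) b?) x from rfl, hstep]
    exact ih m

theorem split_first_none {β : Type} :
    ∀ x : List (Option β), (none ∈ x) → ∃ (u : List β) (x2 : List (Option β)), x = u.map some ++ none :: x2
  | [], h => absurd h (by simp)
  | none :: x, _ => ⟨[], x, rfl⟩
  | some b :: x, h => by
      have hx : none ∈ x := by simpa using h
      obtain ⟨u, x2, rfl⟩ := split_first_none x hx
      exact ⟨b :: u, x2, rfl⟩

theorem all_some {β : Type} : ∀ x : List (Option β), (none ∉ x) → ∃ u : List β, x = u.map some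
  | [], _ => ⟨[], rfl⟩
  | none :: x, h => absurd (by simp) h
  | some b :: x, h => by
      obtain ⟨u, rfl⟩ := all_some x (by simp at h; exact h)
      exact ⟨b :: u, rfl⟩

theorem wpDFA_accepts {u z : List β} (hu : u ≠ []) (hz : z ≠ []) :
    (wpDFA M c).evalFrom (wpDFA M c).start (u.map some ++ none :: z.map some) =
      (.pr1, M.evalFrom M.start
        ((u.flatMap c).map some ++ none :: ((z.flatMap fun b => (c b).reverse).map some))) := by
  cases u with
  | nil => exact absurd rfl hu
  | cons b u' =>
    cases z with
    | nil => exact absurd rfl hz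
    | cons b' z' =>
      rw [DFA.evalFrom_of_append]
      have h1 : (wpDFA M c).evalFrom (wpDFA M c).start ((b :: u').map some) =
          (.pl, M.evalFrom M.start (((b :: u').flatMap c).map some)) := by
        rw [show (b :: u').map (some : β → Option β) = some b :: u'.map some from rfl]
        rw [show (wpDFA M c).evalFrom (wpDFA M c).start (some b :: u'.map some)
          = (wpDFA M c).evalFrom ((wpDFA M c).step (.p0, M.start) (some b)) (u'.map some)
          from rfl]
        rw [show (wpDFA M c).step ((.p0 : Ph), M.start) (some b)
          = ((.pl : Ph), M.evalFrom M.start ((c b).map some)) from rfl]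
        rw [wpDFA_evalL, ← DFA.evalFrom_of_append]
        congr 2
        simp
      rw [h1]
      rw [show (none :: (b' :: z').map some : List (Option β))
        = none :: some b' :: z'.map some from rfl]
      rw [show (wpDFA M c).evalFrom
          ((.pl : Ph), M.evalFrom M.start (((b :: u').flatMap c).map some))
          (none :: some b' :: z'.map some)
        = (wpDFA M c).evalFrom ((wpDFA M c).step
            ((.pl : Ph), M.evalFrom M.start (((b :: u').flatMap c).map some)) none)
            (some b' :: z'.map some) from rfl]
      rw [show (wpDFA M c).step ((.pl : Ph), M.evalFrom M.start (((b :: u').flatMap c).map some))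
          none
        = ((.pr0 : Ph), M.step (M.evalFrom M.start (((b :: u').flatMap c).map some)) none)
        from rfl]
      rw [show (wpDFA M c).evalFrom
          ((.pr0 : Ph), M.step (M.evalFrom M.start (((b :: u').flatMap c).map some)) none)
          (some b' :: z'.map some)
        = (wpDFA M c).evalFrom ((wpDFA M c).step
            ((.pr0 : Ph), M.step (M.evalFrom M.start (((b :: u').flatMap c).map some)) none)
            (some b')) (z'.map some) from rfl]
      rw [show (wpDFA M c).step
          ((.pr0 : Ph), M.step (M.evalFrom M.start (((b :: u').flatMap c).map some)) none)
          (some b')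
        = ((.pr1 : Ph), M.evalFrom
            (M.step (M.evalFrom M.start (((b :: u').flatMap c).map some)) none)
            ((c b').reverse.map some)) from rfl]
      rw [wpDFA_evalR]
      refine congrArg _ ?_
      rw [← DFA.evalFrom_of_append, ← DFA.evalFrom_append_singleton, ← DFA.evalFrom_of_append]
      congr 1
      simp

theorem wpDFA_evalP0 {u : List β} (hu : u ≠ []) (m : σ) :
    (wpDFA M c).evalFrom (.p0, m) (u.map some) =
      (.pl, M.evalFrom m ((u.flatMap c).map some)) := by
  cases u with
  | nil => exact absurd rfl hu
  | cons b u' =>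
    rw [show (b :: u').map (some : β → Option β) = some b :: u'.map some from rfl]
    rw [show (wpDFA M c).evalFrom (.p0, m) (some b :: u'.map some)
      = (wpDFA M c).evalFrom ((wpDFA M c).step (.p0, m) (some b)) (u'.map some) from rfl]
    rw [show (wpDFA M c).step ((.p0 : Ph), m) (some b)
      = ((.pl : Ph), M.evalFrom m ((c b).map some)) from rfl]
    rw [wpDFA_evalL, ← DFA.evalFrom_of_append]
    congr 2
    simp

theorem wpDFA_evalPr0 {z : List β} (hz : z ≠ []) (m : σ) :
    (wpDFA M c).evalFrom (.pr0, m) (z.map some) =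
      (.pr1, M.evalFrom m ((z.flatMap fun b => (c b).reverse).map some)) := by
  cases z with
  | nil => exact absurd rfl hz
  | cons b z' =>
    rw [show (b :: z').map (some : β → Option β) = some b :: z'.map some from rfl]
    rw [show (wpDFA M c).evalFrom (.pr0, m) (some b :: z'.map some)
      = (wpDFA M c).evalFrom ((wpDFA M c).step (.pr0, m) (some b)) (z'.map some) from rfl]
    rw [show (wpDFA M c).step ((.pr0 : Ph), m) (some b)
      = ((.pr1 : Ph), M.evalFrom m ((c b).reverse.map some)) from rfl]
    rw [wpDFA_evalR, ← DFA.evalFrom_of_append]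
    congr 2
    simp

theorem shape_mem_iff {S : Type*} [Semigroup S] {f : α → S} {g : β → S}
    {c : β → List α} (hcb : ∀ b, evalS f (c b) = some (g b)) (hcne : ∀ b, c b ≠ [])
    {u z : List β} (hu : u ≠ []) (hz : z ≠ []) :
    ((u.flatMap c).map some ++ none :: ((z.flatMap fun b => (c b).reverse).map some)
      ∈ wordProblem f) ↔ ((u.map some ++ none :: z.map some) ∈ wordProblem g) := by
  rw [mem_wordProblem_shape, mem_wordProblem_shape]
  have h1 : evalS f (u.flatMap c) = evalS g u := evalS_flatMap hcb u hu
  have hzr : z.reverse ≠ [] := by simpa using hz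
  have h2 : (z.flatMap fun b => (c b).reverse).reverse = z.reverse.flatMap c := by
    rw [flatMap_reverse]; simp
  have h3 : evalS f (z.reverse.flatMap c) = evalS g z.reverse := evalS_flatMap hcb _ hzr
  constructor
  · rintro ⟨_, _, he⟩
    exact ⟨hu, hz, by rw [← h1, he, h2, h3]⟩
  · rintro ⟨_, _, he⟩
    refine ⟨flatMap_ne_nil hcne hu, ?_, by rw [h1, h2, h3, he]⟩
    intro hnil
    have := congrArg List.reverse hnil
    rw [h2] at this
    exact flatMap_ne_nil hcne hzr (by simpa using this)

theorem reg_side {S : Type*} [Semigroup S] (f : α → S) (g : β → S)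
    (hf : IsChoice f) (hR : (wordProblem f).IsRegular) : (wordProblem g).IsRegular := by
  classical
  choose cw hcw using hf
  set c : β → List α := fun b => cw (g b) with hcdef
  have hcb : ∀ b, evalS f (c b) = some (g b) := fun b => hcw (g b)
  have hcne : ∀ b, c b ≠ [] := by
    intro b h
    have h2 := hcb b
    rw [h] at h2
    simp [evalS] at h2
  obtain ⟨σ', _, M, hM⟩ := hR
  refine ⟨Ph × σ', inferInstance, wpDFA M c, ?_⟩
  ext x
  rw [DFA.mem_accepts]
  constructor
  · intro hx
    have hx' : ((wpDFA M c).eval x).1 = Ph.pr1 ∧ ((wpDFA M c).eval x).2 ∈ M.accept := hx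
    by_cases hnone : none ∈ x
    · obtain ⟨u, x2, rfl⟩ := split_first_none x hnone
      rcases eq_or_ne u [] with rfl | hu
      · exfalso
        have hdead : ((wpDFA M c).eval (([] : List β).map some ++ none :: x2)).1 = Ph.pd := by
          rw [show (([] : List β).map some ++ none :: x2 : List (Option β)) = none :: x2
            from rfl]
          rw [show (wpDFA M c).eval (none :: x2)
            = (wpDFA M c).evalFrom ((wpDFA M c).step (.p0, M.start) none) x2 from rfl]
          rw [show (wpDFA M c).step ((.p0 : Ph), M.start) none = ((.pd : Ph), M.start) from rfl]
          exact wpDFA_dead M c x2 M.start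
        rw [hx'.1] at hdead
        exact Ph.noConfusion hdead
      · have hpre : (wpDFA M c).eval (u.map some ++ none :: x2)
            = (wpDFA M c).evalFrom
              ((.pr0 : Ph), M.step (M.evalFrom M.start ((u.flatMap c).map some)) none) x2 := by
          rw [show (wpDFA M c).eval (u.map some ++ none :: x2)
            = (wpDFA M c).evalFrom ((wpDFA M c).evalFrom (wpDFA M c).start (u.map some))
              (none :: x2) from (DFA.evalFrom_of_append _ _ _ _)]
          rw [show (wpDFA M c).start = ((.p0 : Ph), M.start) from rfl, wpDFA_evalP0 M c hu]
          rfl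
        by_cases hnone2 : none ∈ x2
        · exfalso
          obtain ⟨z1, x3, rfl⟩ := split_first_none x2 hnone2
          set m2 := M.step (M.evalFrom M.start ((u.flatMap c).map some)) none with hm2
          have hmid : ((wpDFA M c).evalFrom ((.pr0 : Ph), m2) (z1.map some ++ none :: x3)).1
              = Ph.pd := by
            rw [DFA.evalFrom_of_append]
            rcases eq_or_ne z1 [] with rfl | hz1
            · rw [show (wpDFA M c).evalFrom ((.pr0 : Ph), m2) (([] : List β).map some)
                = ((.pr0 : Ph), m2) from rfl]
              rw [show (wpDFA M c).evalFrom ((.pr0 : Ph), m2) (none :: x3)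
                = (wpDFA M c).evalFrom ((wpDFA M c).step (.pr0, m2) none) x3 from rfl]
              rw [show (wpDFA M c).step ((.pr0 : Ph), m2) none = ((.pd : Ph), m2) from rfl]
              exact wpDFA_dead M c x3 m2
            · rw [wpDFA_evalPr0 M c hz1]
              rw [show (wpDFA M c).evalFrom
                  ((.pr1 : Ph), M.evalFrom m2 ((z1.flatMap fun b => (c b).reverse).map some))
                  (none :: x3)
                = (wpDFA M c).evalFrom ((wpDFA M c).step
                    ((.pr1 : Ph), M.evalFrom m2 ((z1.flatMap fun b => (c b).reverse).map some))
                    none) x3 from rfl]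
              rw [show (wpDFA M c).step
                  ((.pr1 : Ph), M.evalFrom m2 ((z1.flatMap fun b => (c b).reverse).map some))
                  none
                = ((.pd : Ph), M.evalFrom m2 ((z1.flatMap fun b => (c b).reverse).map some))
                from rfl]
              exact wpDFA_dead M c x3 _
          rw [hpre] at hx'
          rw [hx'.1] at hmid
          exact Ph.noConfusion hmid
        · obtain ⟨z, rfl⟩ := all_some x2 hnone2
          rcases eq_or_ne z [] with rfl | hz
          · exfalso
            rw [hpre] at hx'
            have : ((.pr0 : Ph), M.step (M.evalFrom M.start ((u.flatMap c).map some)) none).1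
                = Ph.pr1 := hx'.1
            exact Ph.noConfusion this
          · have heval := wpDFA_accepts M c hu hz
            rw [show (wpDFA M c).evalFrom (wpDFA M c).start (u.map some ++ none :: z.map some)
              = (wpDFA M c).eval (u.map some ++ none :: z.map some) from rfl] at heval
            rw [heval] at hx'
            have hw : ((u.flatMap c).map some ++
                none :: ((z.flatMap fun b => (c b).reverse).map some)) ∈ M.accepts := hx'.2
            rw [hM] at hw
            exact (shape_mem_iff hcb hcne hu hz).mp hw
    · exfalso
      obtain ⟨u, rfl⟩ := all_some x hnone
      rcases eq_or_ne u [] with rfl | hu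
      · have : ((wpDFA M c).eval (([] : List β).map some)).1 = Ph.p0 := rfl
        rw [hx'.1] at this
        exact Ph.noConfusion this
      · have : ((wpDFA M c).eval (u.map some)).1 = Ph.pl := by
          rw [show (wpDFA M c).eval (u.map some)
            = (wpDFA M c).evalFrom ((.p0 : Ph), M.start) (u.map some) from rfl,
            wpDFA_evalP0 M c hu]
        rw [hx'.1] at this
        exact Ph.noConfusion this
  · intro hx
    obtain ⟨u, v, hu, hv, he, rfl⟩ := hx
    have hz : v.reverse ≠ [] := by simpa using hv
    have heval := wpDFA_accepts M c hu hz
    rw [show (wpDFA M c).evalFrom (wpDFA M c).start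
        (u.map some ++ none :: v.reverse.map some)
      = (wpDFA M c).eval (u.map some ++ none :: v.reverse.map some) from rfl] at heval
    rw [heval]
    refine ⟨rfl, ?_⟩
    have hmem : ((u.flatMap c).map some ++
        none :: ((v.reverse.flatMap fun b => (c b).reverse).map some)) ∈ wordProblem f := by
      rw [shape_mem_iff hcb hcne hu hz]
      exact ⟨u, v, hu, hv, he, rfl⟩
    rw [← hM] at hmem
    exact hmem


end RegSide


end WPI

/-- If the word problem of a semigroup `S` is context-free for one choice of
generators, then it is context-free for every choice; the same holds with
`regular` in place of `context-free`. -/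
theorem wordProblem_independent_of_generators {S : Type*} [Semigroup S]
    {α β : Type} [Fintype α] [Fintype β] (f : α → S) (g : β → S)
    (hf : IsChoice f) (hg : IsChoice g) :
    ((wordProblem f).IsContextFree → (wordProblem g).IsContextFree) ∧
    ((wordProblem f).IsRegular → (wordProblem g).IsRegular) := by
  exact ⟨fun h => WPI.cf_side f g hf h, fun h => WPI.reg_side f g hf h⟩
end

section
/- If the word problem of a semigroup S is context-free for some choice of generators, then the word problem of every finitely generated subsemigroup of S is context-free (for any choice of generators of the subsemigroup). The same holds with 'regular' in place of 'context-free'. -/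
namespace WPAux

section Eval
variable {α S : Type*} [Semigroup S] {f : α → S}

lemma foldl_mul (s t : S) (l : List α) :
    l.foldl (fun s b => s * f b) (s * t) = s * l.foldl (fun s b => s * f b) t := by
  induction l generalizing t with
  | nil => rfl
  | cons c bs ih => simp only [List.foldl_cons, mul_assoc, ih]

lemma evalS_ne_nil {l : List α} {s : S} (h : evalS f l = some s) : l ≠ [] := by
  rintro rfl; simp [evalS] at h

lemma evalS_of_ne_nil {l : List α} (h : l ≠ []) : ∃ s : S, evalS f l = some s := by
  cases l with
  | nil => exact absurd rfl h
  | cons a as => exact ⟨_, rfl⟩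

lemma evalS_append {x y : List α} {sx sy : S}
    (hx : evalS f x = some sx) (hy : evalS f y = some sy) :
    evalS f (x ++ y) = some (sx * sy) := by
  cases x with
  | nil => simp [evalS] at hx
  | cons a as =>
    cases y with
    | nil => simp [evalS] at hy
    | cons b bs =>
      simp only [evalS, Option.some.injEq] at hx hy
      simp only [List.cons_append, evalS, List.foldl_append, List.foldl_cons,
        Option.some.injEq]
      rw [← hx, ← hy, ← foldl_mul]

end Eval

section Lists
variable {γ β : Type*}

/-- concatenation of blocks -/
def catMap (h : β → List γ) : List β → List γ
  | [] => []
  | b :: t => h b ++ catMap h t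

lemma catMap_append (h : β → List γ) (u v : List β) :
    catMap h (u ++ v) = catMap h u ++ catMap h v := by
  induction u with
  | nil => rfl
  | cons b t ih => simp [catMap, ih]

lemma catMap_reverse (h : β → List γ) (l : List β) :
    (catMap (fun b => (h b).reverse) l).reverse = catMap h l.reverse := by
  induction l with
  | nil => rfl
  | cons b t ih => simp [catMap, catMap_append, ih]

lemma catMap_eq_nil_iff {h : β → List γ} (hne : ∀ b, h b ≠ []) {l : List β} :
    catMap h l = [] ↔ l = [] := by
  cases l with
  | nil => simp [catMap]
  | cons b t => simp [catMap, hne b]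

lemma none_not_mem_map_some (l : List γ) : (none : Option γ) ∉ l.map some := by
  simp

lemma eq_map_some_of_none_not_mem {x : List (Option γ)} (h : (none : Option γ) ∉ x) :
    ∃ u : List γ, x = u.map some := by
  induction x with
  | nil => exact ⟨[], rfl⟩
  | cons a t ih =>
    simp only [List.mem_cons, not_or] at h
    obtain ⟨u, rfl⟩ := ih h.2
    cases a with
    | none => exact absurd rfl h.1
    | some b => exact ⟨b :: u, rfl⟩

lemma marker_decomp {p p' q q' : List (Option γ)} (hp : (none : Option γ) ∉ p)
    (hp' : (none : Option γ) ∉ p') (h : p ++ none :: q = p' ++ none :: q') :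
    p = p' ∧ q = q' := by
  induction p generalizing p' with
  | nil =>
    cases p' with
    | nil => simpa using h
    | cons c t =>
      simp only [List.nil_append, List.cons_append, List.cons.injEq] at h
      rw [← h.1] at hp'
      simp at hp'
  | cons c t ih =>
    cases p' with
    | nil =>
      simp only [List.cons_append, List.nil_append, List.cons.injEq] at h
      rw [h.1] at hp; simp at hp
    | cons c' t' =>
      simp only [List.mem_cons, not_or] at hp hp'
      simp only [List.cons_append, List.cons.injEq] at h
      obtain ⟨h1, h2⟩ := ih hp.2 hp'.2 h.2
      exact ⟨by rw [h.1, h1], h2⟩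

lemma first_marker_decomp {x : List (Option γ)} (h : (none : Option γ) ∈ x) :
    ∃ (u : List γ) (r : List (Option γ)), x = u.map some ++ none :: r := by
  induction x with
  | nil => simp at h
  | cons a t ih =>
    cases a with
    | none => exact ⟨[], t, rfl⟩
    | some b =>
      simp only [List.mem_cons, reduceCtorEq, false_or] at h
      obtain ⟨u, r, rfl⟩ := ih h
      exact ⟨b :: u, r, rfl⟩

end Lists

section Transducer

variable {Q Γ Δ : Type}

/-- Runs of a finite-transition-table transducer. -/
inductive Run (ts : List (Q × Γ × Q × List Δ)) : Q → List Γ → Q → List Δ → Prop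
  | nil (p : Q) : Run ts p [] p []
  | cons {p : Q} {c : Γ} {q : Q} {o : List Δ} {w : List Γ} {r : Q} {y : List Δ}
      (ht : (p, c, q, o) ∈ ts) (hr : Run ts q w r y) : Run ts p (c :: w) r (o ++ y)

lemma Run.append {ts : List (Q × Γ × Q × List Δ)} {p w₁ q y₁ w₂ r y₂}
    (h₁ : Run ts p w₁ q y₁) (h₂ : Run ts q w₂ r y₂) :
    Run ts p (w₁ ++ w₂) r (y₁ ++ y₂) := by
  induction h₁ with
  | nil => simpa
  | cons ht _ ih =>
    rw [List.cons_append, List.append_assoc]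
    exact .cons ht (ih h₂)

/-- All states of interest. -/
def SL (ts : List (Q × Γ × Q × List Δ)) (q₀ qf : Q) : List Q :=
  q₀ :: qf :: ts.flatMap fun t => [t.1, t.2.2.1]

lemma mem_SL_left {ts : List (Q × Γ × Q × List Δ)} {q₀ qf : Q} {p c q o}
    (h : (p, c, q, o) ∈ ts) : p ∈ SL ts q₀ qf := by
  simp only [SL, List.mem_cons, List.mem_flatMap]
  exact Or.inr (Or.inr ⟨_, h, by simp⟩)

lemma mem_SL_right {ts : List (Q × Γ × Q × List Δ)} {q₀ qf : Q} {p c q o}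
    (h : (p, c, q, o) ∈ ts) : q ∈ SL ts q₀ qf := by
  simp only [SL, List.mem_cons, List.mem_flatMap]
  exact Or.inr (Or.inr ⟨_, h, by simp⟩)

lemma q₀_mem_SL {ts : List (Q × Γ × Q × List Δ)} {q₀ qf : Q} : q₀ ∈ SL ts q₀ qf := by
  simp [SL]

lemma qf_mem_SL {ts : List (Q × Γ × Q × List Δ)} {q₀ qf : Q} : qf ∈ SL ts q₀ qf := by
  simp [SL]

end Transducer

section Grammar

variable {Q Γ Δ : Type} (G : ContextFreeGrammar.{0} Γ)
  (ts : List (Q × Γ × Q × List Δ)) (q₀ qf : Q)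

/-- Nonterminals of the transduced grammar. -/
abbrev tN : Type := Option (Q × Symbol Γ G.NT × Q)

open Classical in
/-- Decorations of a sentential form by chained states. -/
noncomputable def dec : List (Symbol Γ G.NT) → Q → Q → List (List (Q × Symbol Γ G.NT × Q))
  | [], p, q => if p = q then [[]] else []
  | s :: rest, p, q =>
      (SL ts q₀ qf).flatMap fun m => (dec rest m q).map fun l => (p, s, m) :: l

/-- Rules of the transduced grammar. -/
noncomputable def tRules : List (ContextFreeRule Δ (tN G (Q := Q))) :=
  ⟨none, [Symbol.nonterminal (some (q₀, Symbol.nonterminal G.initial, qf))]⟩ ::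
    ((ts.map fun t =>
      (⟨some (t.1, Symbol.terminal t.2.1, t.2.2.1), t.2.2.2.map Symbol.terminal⟩ :
        ContextFreeRule Δ (tN G (Q := Q)))) ++
    G.rules.toList.flatMap fun r =>
      (SL ts q₀ qf).flatMap fun p =>
        (SL ts q₀ qf).flatMap fun q =>
          (dec G ts q₀ qf r.output p q).map fun l =>
            (⟨some (p, Symbol.nonterminal r.input, q),
                l.map fun d => Symbol.nonterminal (some d)⟩ :
              ContextFreeRule Δ (tN G (Q := Q))))

open Classical in
/-- The transduced grammar. -/
noncomputable def tG : ContextFreeGrammar Δ :=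
  ⟨tN G (Q := Q), none, (tRules G ts q₀ qf).toFinset⟩

lemma start_mem_tRules :
    (⟨none, [Symbol.nonterminal (some (q₀, Symbol.nonterminal G.initial, qf))]⟩ :
      ContextFreeRule Δ (tN G (Q := Q))) ∈ tRules G ts q₀ qf :=
  List.mem_cons_self

lemma term_mem_tRules {t : Q × Γ × Q × List Δ} (ht : t ∈ ts) :
    (⟨some (t.1, Symbol.terminal t.2.1, t.2.2.1), t.2.2.2.map Symbol.terminal⟩ :
      ContextFreeRule Δ (tN G (Q := Q))) ∈ tRules G ts q₀ qf := by
  exact List.mem_cons_of_mem _ (List.mem_append_left _ (List.mem_map_of_mem ht))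

lemma ntr_mem_tRules {r : ContextFreeRule Γ G.NT} (hr : r ∈ G.rules) {p q : Q}
    (hp : p ∈ SL ts q₀ qf) (hq : q ∈ SL ts q₀ qf) {l}
    (hl : l ∈ dec G ts q₀ qf r.output p q) :
    (⟨some (p, Symbol.nonterminal r.input, q),
        l.map fun d => Symbol.nonterminal (some d)⟩ :
      ContextFreeRule Δ (tN G (Q := Q))) ∈ tRules G ts q₀ qf := by
  refine List.mem_cons_of_mem _ (List.mem_append_right _ ?_)
  exact List.mem_flatMap.2 ⟨r, Finset.mem_toList.2 hr, List.mem_flatMap.2 ⟨p, hp,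
    List.mem_flatMap.2 ⟨q, hq, List.mem_map.2 ⟨l, hl, rfl⟩⟩⟩⟩

lemma tRules_elim {r' : ContextFreeRule Δ (tN G (Q := Q))} (h : r' ∈ tRules G ts q₀ qf) :
    r' = ⟨none, [Symbol.nonterminal (some (q₀, Symbol.nonterminal G.initial, qf))]⟩ ∨
      (∃ t ∈ ts,
        r' = ⟨some (t.1, Symbol.terminal t.2.1, t.2.2.1), t.2.2.2.map Symbol.terminal⟩) ∨
      (∃ r ∈ G.rules, ∃ p ∈ SL ts q₀ qf, ∃ q ∈ SL ts q₀ qf,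
        ∃ l ∈ dec G ts q₀ qf r.output p q,
        r' = ⟨some (p, Symbol.nonterminal r.input, q),
          l.map fun d => Symbol.nonterminal (some d)⟩) := by
  simp only [tRules, List.mem_cons, List.mem_append, List.mem_map, List.mem_flatMap,
    Finset.mem_toList] at h
  rcases h with h | ⟨t, ht, h⟩ | ⟨r, hr, p, hp, q, hq, l, hl, h⟩
  · exact Or.inl h
  · exact Or.inr (Or.inl ⟨t, ht, h.symm⟩)
  · exact Or.inr (Or.inr ⟨r, hr, p, hp, q, hq, l, hl, h.symm⟩)

lemma mem_tG_rules_iff (r' : ContextFreeRule Δ (tN G (Q := Q))) :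
    r' ∈ (tG G ts q₀ qf).rules ↔ r' ∈ tRules G ts q₀ qf := by
  classical
  exact List.mem_toFinset

end Grammar
section Semantics

variable {Q Γ Δ : Type} {G : ContextFreeGrammar.{0} Γ}
  {ts : List (Q × Γ × Q × List Δ)} {q₀ qf : Q}

/-- Meaning of a grammar symbol: the words it can stand for. -/
def SymG (G : ContextFreeGrammar.{0} Γ) : Symbol Γ G.NT → List Γ → Prop
  | .terminal c, w => w = [c]
  | .nonterminal A, w => G.Derives [Symbol.nonterminal A] (w.map Symbol.terminal)

/-- Meaning of a nonterminal of the transduced grammar. -/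
def Sat (G : ContextFreeGrammar.{0} Γ) (ts : List (Q × Γ × Q × List Δ)) (q₀ qf : Q) :
    tN G (Q := Q) → List Δ → Prop
  | none, y => ∃ w, w ∈ G.language ∧ Run ts q₀ w qf y
  | some (p, s, q), y => ∃ w, SymG G s w ∧ Run ts p w q y

/-- Meaning of a sentential form of the transduced grammar. -/
inductive Real (G : ContextFreeGrammar.{0} Γ) (ts : List (Q × Γ × Q × List Δ)) (q₀ qf : Q) :
    List (Symbol Δ (tN G (Q := Q))) → List Δ → Prop
  | nil : Real G ts q₀ qf [] []
  | ter {d rest y} : Real G ts q₀ qf rest y →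
      Real G ts q₀ qf (Symbol.terminal d :: rest) (d :: y)
  | nt {n rest y₁ y₂} : Sat G ts q₀ qf n y₁ → Real G ts q₀ qf rest y₂ →
      Real G ts q₀ qf (Symbol.nonterminal n :: rest) (y₁ ++ y₂)

lemma Real_map_terminal (y : List Δ) : Real G ts q₀ qf (y.map Symbol.terminal) y := by
  induction y with
  | nil => exact .nil
  | cons d t ih => exact .ter ih

lemma Real_nil_eq {y : List Δ} (h : Real G ts q₀ qf [] y) : y = [] := by
  cases h; rfl

lemma Real_map_terminal_eq {o y : List Δ} (h : Real G ts q₀ qf (o.map Symbol.terminal) y) :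
    y = o := by
  induction o generalizing y with
  | nil => exact Real_nil_eq h
  | cons d t ih =>
    cases h with
    | ter h' => rw [ih h']

lemma Real.append {a b : List (Symbol Δ (tN G (Q := Q)))} {y₁ y₂ : List Δ}
    (h₁ : Real G ts q₀ qf a y₁) (h₂ : Real G ts q₀ qf b y₂) :
    Real G ts q₀ qf (a ++ b) (y₁ ++ y₂) := by
  induction h₁ with
  | nil => simpa
  | ter _ ih => exact .ter ih
  | nt hs _ ih =>
    rw [List.cons_append, List.append_assoc]
    exact .nt hs ih

lemma Real.split {a b : List (Symbol Δ (tN G (Q := Q)))} {y : List Δ}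
    (h : Real G ts q₀ qf (a ++ b) y) :
    ∃ y₁ y₂, y = y₁ ++ y₂ ∧ Real G ts q₀ qf a y₁ ∧ Real G ts q₀ qf b y₂ := by
  induction a generalizing y with
  | nil => exact ⟨[], y, rfl, .nil, by simpa using h⟩
  | cons s t ih =>
    rw [List.cons_append] at h
    cases h with
    | ter h' =>
      obtain ⟨y₁, y₂, rfl, hr₁, hr₂⟩ := ih h'
      exact ⟨_ :: y₁, y₂, rfl, .ter hr₁, hr₂⟩
    | nt hs h' =>
      obtain ⟨y₁, y₂, rfl, hr₁, hr₂⟩ := ih h'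
      exact ⟨_ ++ y₁, y₂, by rw [List.append_assoc], .nt hs hr₁, hr₂⟩

/-- Chained meaning of a sentential form of the original grammar. -/
inductive SymGL (G : ContextFreeGrammar.{0} Γ) : List (Symbol Γ G.NT) → List Γ → Prop
  | nil : SymGL G [] []
  | cons {s w₁ sf w₂} : SymG G s w₁ → SymGL G sf w₂ → SymGL G (s :: sf) (w₁ ++ w₂)

lemma SymGL_derives {sf : List (Symbol Γ G.NT)} {w : List Γ} (h : SymGL G sf w) :
    G.Derives sf (w.map Symbol.terminal) := by
  induction h with
  | nil => rfl
  | @cons s w₁ sf' w₂ hs _ ih =>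
    rw [List.map_append]
    cases s with
    | terminal c =>
      rw [show w₁ = [c] from hs]
      exact ih.append_left [Symbol.terminal c]
    | nonterminal A =>
      have h₁ : G.Derives ([Symbol.nonterminal A] ++ sf')
          (w₁.map Symbol.terminal ++ sf') :=
        ContextFreeGrammar.Derives.append_right hs sf'
      exact h₁.trans (ih.append_left _)

lemma dec_sound : ∀ {sf : List (Symbol Γ G.NT)} {p q : Q}
    {l : List (Q × Symbol Γ G.NT × Q)} {y : List Δ},
    l ∈ dec G ts q₀ qf sf p q →
    Real G ts q₀ qf (l.map fun d => Symbol.nonterminal (some d)) y →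
    ∃ w, SymGL G sf w ∧ Run ts p w q y := by
  intro sf
  induction sf with
  | nil =>
    intro p q l y hl hr
    rw [dec] at hl
    split at hl
    · next hpq =>
      subst hpq
      simp only [List.mem_singleton] at hl
      subst hl
      exact ⟨[], .nil, by rw [Real_nil_eq hr]; exact .nil p⟩
    · simp at hl
  | cons s rest ih =>
    intro p q l y hl hr
    rw [dec] at hl
    simp only [List.mem_flatMap, List.mem_map] at hl
    obtain ⟨m, _, l', hl', rfl⟩ := hl
    rw [List.map_cons] at hr
    cases hr with
    | nt hs h' =>
      obtain ⟨w₁, hw₁, hrun₁⟩ := hs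
      obtain ⟨w₂, hw₂, hrun₂⟩ := ih hl' h'
      exact ⟨w₁ ++ w₂, .cons hw₁ hw₂, hrun₁.append hrun₂⟩

lemma sat_of_real_output {r' : ContextFreeRule Δ (tN G (Q := Q))}
    (hr' : r' ∈ tRules G ts q₀ qf) {y : List Δ}
    (h : Real G ts q₀ qf r'.output y) : Sat G ts q₀ qf r'.input y := by
  rcases tRules_elim G ts q₀ qf hr' with rfl | ⟨t, ht, rfl⟩ | ⟨r, hr, p, hp, q, hq, l, hl, rfl⟩
  · cases h with
    | nt hs h' =>
      rw [Real_nil_eq h', List.append_nil]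
      obtain ⟨w, hw, hrun⟩ := hs
      exact ⟨w, hw, hrun⟩
  · have : y = t.2.2.2 := Real_map_terminal_eq h
    subst this
    refine ⟨[t.2.1], rfl, ?_⟩
    have := Run.cons (ts := ts) ht (Run.nil t.2.2.1)
    rwa [List.append_nil] at this
  · obtain ⟨w, hL, hR⟩ := dec_sound hl h
    refine ⟨w, ?_, hR⟩
    exact (ContextFreeGrammar.Produces.single
      ⟨r, hr, ContextFreeRule.Rewrites.input_output⟩).trans (SymGL_derives hL)

lemma produces_real {sf₁ sf₂ : List (Symbol Δ (tN G (Q := Q)))} {y : List Δ}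
    (hp : (tG G ts q₀ qf).Produces sf₁ sf₂) (h : Real G ts q₀ qf sf₂ y) :
    Real G ts q₀ qf sf₁ y := by
  obtain ⟨r', hr'G, hrew⟩ := hp
  replace hr'G := (mem_tG_rules_iff G ts q₀ qf r').1 hr'G
  obtain ⟨x, z, h₁, h₂⟩ := hrew.exists_parts
  subst h₁ h₂
  rw [List.append_assoc] at h
  obtain ⟨yx, yrest, rfl, hrx, hrr⟩ := h.split
  obtain ⟨yo, yz, rfl, hro, hrz⟩ := hrr.split
  have hsat := sat_of_real_output hr'G hro
  have : Real G ts q₀ qf ([Symbol.nonterminal r'.input] ++ z) (yo ++ yz) :=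
    Real.nt hsat hrz
  rw [List.append_assoc]
  exact hrx.append this

lemma derives_real {sf : List (Symbol Δ (tN G (Q := Q)))} {y : List Δ}
    (h : (tG G ts q₀ qf).Derives sf (y.map Symbol.terminal)) : Real G ts q₀ qf sf y := by
  induction h using Relation.ReflTransGen.head_induction_on with
  | refl => exact Real_map_terminal y
  | head step _ ih => exact produces_real step ih

end Semantics
section Completeness

variable {Q Γ Δ : Type} {G : ContextFreeGrammar.{0} Γ}
  {ts : List (Q × Γ × Q × List Δ)} {q₀ qf : Q}

/-- State-decorated derivability, chained along a sentential form. -/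
inductive DChain (G : ContextFreeGrammar.{0} Γ) (ts : List (Q × Γ × Q × List Δ)) (q₀ qf : Q) :
    Q → List (Symbol Γ G.NT) → Q → List Δ → Prop
  | nil {p : Q} (hp : p ∈ SL ts q₀ qf) : DChain G ts q₀ qf p [] p []
  | cons {p m q : Q} {s : Symbol Γ G.NT} {sf : List (Symbol Γ G.NT)} {y₁ y₂ : List Δ}
      (hp : p ∈ SL ts q₀ qf) (hm : m ∈ SL ts q₀ qf)
      (hd : (tG G ts q₀ qf).Derives [Symbol.nonterminal (some (p, s, m))]
        (y₁.map Symbol.terminal))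
      (hc : DChain G ts q₀ qf m sf q y₂) :
      DChain G ts q₀ qf p (s :: sf) q (y₁ ++ y₂)

lemma DChain.left_mem {p sf q y} (h : DChain G ts q₀ qf p sf q y) : p ∈ SL ts q₀ qf := by
  cases h with
  | nil hp => exact hp
  | cons hp _ _ _ => exact hp

lemma DChain.right_mem {p sf q y} (h : DChain G ts q₀ qf p sf q y) : q ∈ SL ts q₀ qf := by
  induction h with
  | nil hp => exact hp
  | cons _ _ _ _ ih => exact ih

lemma DChain.append {p sf₁ m sf₂ q y₁ y₂} (h₁ : DChain G ts q₀ qf p sf₁ m y₁)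
    (h₂ : DChain G ts q₀ qf m sf₂ q y₂) :
    DChain G ts q₀ qf p (sf₁ ++ sf₂) q (y₁ ++ y₂) := by
  induction h₁ with
  | nil => simpa
  | cons hp hm hd _ ih =>
    rw [List.cons_append, List.append_assoc]
    exact .cons hp hm hd (ih h₂)

lemma DChain.split {p sf₁ sf₂ q y} (h : DChain G ts q₀ qf p (sf₁ ++ sf₂) q y) :
    ∃ m y₁ y₂, y = y₁ ++ y₂ ∧ DChain G ts q₀ qf p sf₁ m y₁ ∧ DChain G ts q₀ qf m sf₂ q y₂ := by
  induction sf₁ generalizing p y with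
  | nil => exact ⟨p, [], y, rfl, .nil h.left_mem, by simpa using h⟩
  | cons s t ih =>
    rw [List.cons_append] at h
    cases h with
    | cons hp hm hd hc =>
      obtain ⟨m', y₁, y₂, rfl, hc₁, hc₂⟩ := ih hc
      exact ⟨m', _ ++ y₁, y₂, by rw [List.append_assoc], .cons hp hm hd hc₁, hc₂⟩

lemma dchain_to_dec {p sf q y} (h : DChain G ts q₀ qf p sf q y) :
    ∃ l ∈ dec G ts q₀ qf sf p q,
      (tG G ts q₀ qf).Derives (l.map fun d => Symbol.nonterminal (some d))
        (y.map Symbol.terminal) := by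
  induction h with
  | @nil p hp =>
    refine ⟨[], ?_, by rfl⟩
    rw [dec]
    simp
  | @cons p m q' s sf y₁ y₂ hp hm hd _ ih =>
    obtain ⟨l', hl', hder⟩ := ih
    refine ⟨(p, s, m) :: l', ?_, ?_⟩
    · rw [dec]
      simp only [List.mem_flatMap, List.mem_map]
      exact ⟨m, hm, l', hl', rfl⟩
    · rw [List.map_cons, List.map_append]
      have h₁ := ContextFreeGrammar.Derives.append_right hd
        (l'.map fun d => Symbol.nonterminal (some d))
      exact h₁.trans (hder.append_left _)

lemma dchain_single {r : ContextFreeRule Γ G.NT} (hr : r ∈ G.rules) {m₁ m₂ : Q} {y : List Δ}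
    (h : DChain G ts q₀ qf m₁ r.output m₂ y) :
    (tG G ts q₀ qf).Derives [Symbol.nonterminal (some (m₁, Symbol.nonterminal r.input, m₂))]
      (y.map Symbol.terminal) := by
  obtain ⟨l, hl, hder⟩ := dchain_to_dec h
  refine (ContextFreeGrammar.Produces.single ?_).trans hder
  exact ⟨⟨some (m₁, Symbol.nonterminal r.input, m₂), l.map fun d => Symbol.nonterminal (some d)⟩,
    (mem_tG_rules_iff G ts q₀ qf _).2 (ntr_mem_tRules G ts q₀ qf hr h.left_mem h.right_mem hl),
    ContextFreeRule.Rewrites.input_output⟩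

lemma run_dchain {p : Q} {w : List Γ} {q : Q} {y : List Δ} (h : Run ts p w q y)
    (hp : p ∈ SL ts q₀ qf) :
    DChain G ts q₀ qf p (w.map Symbol.terminal) q y := by
  induction h with
  | nil => exact .nil hp
  | @cons p c q' o w' r y' ht hr ih =>
    refine .cons hp (mem_SL_right ht) ?_ (ih (mem_SL_right ht))
    exact ContextFreeGrammar.Produces.single
      ⟨⟨some (p, Symbol.terminal c, q'), o.map Symbol.terminal⟩,
        (mem_tG_rules_iff G ts q₀ qf _).2 (term_mem_tRules G ts q₀ qf ht),
        ContextFreeRule.Rewrites.input_output⟩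

lemma derives_dchain {sf : List (Symbol Γ G.NT)} {w : List Γ}
    (h : G.Derives sf (w.map Symbol.terminal)) :
    ∀ {p q : Q} {y : List Δ}, Run ts p w q y → p ∈ SL ts q₀ qf →
      DChain G ts q₀ qf p sf q y := by
  induction h using Relation.ReflTransGen.head_induction_on with
  | refl => exact fun hrun hp => run_dchain hrun hp
  | head step _ ih =>
    intro p q y hrun hp
    have hchain := ih hrun hp
    obtain ⟨r, hr, hrew⟩ := step
    obtain ⟨x, z, h₁, h₂⟩ := hrew.exists_parts
    subst h₁ h₂
    rw [List.append_assoc] at hchain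
    obtain ⟨m₁, yx, yrest, rfl, hcx, hcr⟩ := hchain.split
    obtain ⟨m₂, yo, yz, rfl, hco, hcz⟩ := hcr.split
    have hmid : DChain G ts q₀ qf m₁ [Symbol.nonterminal r.input] m₂ yo := by
      have := DChain.cons hco.left_mem hco.right_mem (dchain_single hr hco)
        (DChain.nil hco.right_mem)
      rwa [List.append_nil] at this
    rw [List.append_assoc]
    exact hcx.append (hmid.append hcz)

end Completeness

section Main

theorem tG_language {Q Γ Δ : Type} (G : ContextFreeGrammar.{0} Γ)
    (ts : List (Q × Γ × Q × List Δ)) (q₀ qf : Q) :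
    (tG G ts q₀ qf).language = {y | ∃ w ∈ G.language, Run ts q₀ w qf y} := by
  ext y
  constructor
  · intro hy
    have hreal : Real G ts q₀ qf [Symbol.nonterminal none] y :=
      derives_real ((ContextFreeGrammar.mem_language_iff _ _).1 hy)
    cases hreal with
    | nt hs h' =>
      rw [Real_nil_eq h', List.append_nil]
      exact hs
  · rintro ⟨w, hw, hrun⟩
    have hchain : DChain G ts q₀ qf q₀ [Symbol.nonterminal G.initial] qf y :=
      derives_dchain ((ContextFreeGrammar.mem_language_iff _ _).1 hw) hrun q₀_mem_SL
    rw [ContextFreeGrammar.mem_language_iff]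
    cases hchain with
    | cons hp hm hd hc =>
      cases hc with
      | nil =>
        rw [List.append_nil]
        refine (ContextFreeGrammar.Produces.single ?_).trans hd
        exact ⟨⟨none, [Symbol.nonterminal (some (q₀, Symbol.nonterminal G.initial, qf))]⟩,
          (mem_tG_rules_iff G ts q₀ qf _).2 (start_mem_tRules G ts q₀ qf),
          ContextFreeRule.Rewrites.input_output⟩

theorem isContextFree_transduce {Q Γ Δ : Type} {L : Language Γ} (hL : L.IsContextFree)
    (ts : List (Q × Γ × Q × List Δ)) (q₀ qf : Q) :
    Language.IsContextFree {y | ∃ w ∈ L, Run ts q₀ w qf y} := by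
  obtain ⟨G, hG⟩ := hL
  exact ⟨tG G ts q₀ qf, by rw [tG_language, hG]⟩

end Main
section Inst

variable {S : Type*} [Semigroup S] {α β : Type}

/-- The block of letters used for `b` in the given phase. -/
def blk (wt : β → List α) : Bool → β → List α
  | false, b => wt b
  | true, b => (wt b).reverse

lemma blk_ne_nil {wt : β → List α} {f : α → S} (hwt : ∀ b, (evalS f (wt b)).isSome)
    (ph : Bool) (b : β) : blk wt ph b ≠ [] := by
  have h : wt b ≠ [] := by
    intro hb
    have := hwt b
    rw [hb] at this
    simp [evalS] at this
  cases ph <;> simpa [blk]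

lemma evalS_catMap {S₀ : Subsemigroup S} {f : α → S} {g : β → S₀} {wt : β → List α}
    (hwt : ∀ b, evalS f (wt b) = some ((g b : S₀) : S)) :
    ∀ {u : List β} {s : S₀}, evalS g u = some s → evalS f (catMap wt u) = some (s : S) := by
  intro u
  induction u with
  | nil => intro s h; simp [evalS] at h
  | cons b rest ih =>
    intro s h
    cases rest with
    | nil =>
      have hb : evalS g [b] = some (g b) := rfl
      rw [hb] at h
      obtain rfl : g b = s := by injection h
      show evalS f (wt b ++ catMap wt []) = _
      rw [show catMap wt ([] : List β) = [] from rfl, List.append_nil]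
      exact hwt b
    | cons c t =>
      obtain ⟨srest, hsr⟩ : ∃ srest, evalS g (c :: t) = some srest :=
        evalS_of_ne_nil (List.cons_ne_nil c t)
      have hsplit : evalS g ([b] ++ c :: t) = some (g b * srest) :=
        evalS_append rfl hsr
      rw [show ([b] ++ c :: t : List β) = b :: c :: t from rfl, h] at hsplit
      obtain rfl : s = g b * srest := by injection hsplit
      show evalS f (wt b ++ catMap wt (c :: t)) = _
      rw [evalS_append (hwt b) (ih hsr)]
      rfl

/-- The KEY lemma: membership of block-substituted words in the word problem of `f`
matches the word problem of `g`. -/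
lemma key {S₀ : Subsemigroup S} {f : α → S} {g : β → S₀} {wt : β → List α}
    (hwt : ∀ b, evalS f (wt b) = some ((g b : S₀) : S)) (u q' : List β) :
    ((catMap wt u).map some ++ none ::
        (catMap (fun b => (wt b).reverse) q').map some ∈ wordProblem f) ↔
      (u.map some ++ none :: q'.map some ∈ wordProblem g) := by
  have hne : ∀ b, wt b ≠ [] := fun b => evalS_ne_nil (hwt b)
  constructor
  · rintro ⟨u₁, v₁, hu₁, hv₁, he, heq⟩
    obtain ⟨h1, h2⟩ := marker_decomp (none_not_mem_map_some _) (none_not_mem_map_some _) heq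
    have hinj : Function.Injective (List.map (some : α → Option α)) :=
      List.map_injective_iff.2 (Option.some_injective _)
    have h1' : catMap wt u = u₁ := hinj h1
    have h2' : catMap (fun b => (wt b).reverse) q' = v₁.reverse := hinj h2
    have hu : u ≠ [] := by
      intro h; rw [h] at h1'; exact hu₁ (h1' ▸ rfl)
    have hq' : q' ≠ [] := by
      intro h; rw [h] at h2'
      exact hv₁ (by simpa [catMap] using h2'.symm)
    have hv₁eq : v₁ = catMap wt q'.reverse := by
      rw [← catMap_reverse, h2', List.reverse_reverse]
    obtain ⟨su, hsu⟩ : ∃ su, evalS g u = some su := evalS_of_ne_nil hu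
    obtain ⟨sv, hsv⟩ : ∃ sv, evalS g q'.reverse = some sv :=
      evalS_of_ne_nil (by simpa using hq')
    have hfu : evalS f u₁ = some (su : S) := h1' ▸ evalS_catMap hwt hsu
    have hfv : evalS f v₁ = some (sv : S) := hv₁eq ▸ evalS_catMap hwt hsv
    rw [hfu, hfv] at he
    have hsusv : su = sv := Subtype.coe_injective (by injection he)
    exact ⟨u, q'.reverse, hu, by simpa using hq', by rw [hsu, hsv, hsusv],
      by rw [List.reverse_reverse]⟩
  · rintro ⟨u₂, v₂, hu₂, hv₂, he, heq⟩
    obtain ⟨h1, h2⟩ := marker_decomp (none_not_mem_map_some _) (none_not_mem_map_some _) heq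
    have hinj : Function.Injective (List.map (some : β → Option β)) :=
      List.map_injective_iff.2 (Option.some_injective _)
    have h1' : u = u₂ := hinj h1
    have h2' : q' = v₂.reverse := hinj h2
    subst h1' h2'
    obtain ⟨su, hsu⟩ : ∃ su, evalS g u = some su := evalS_of_ne_nil hu₂
    obtain ⟨sv, hsv⟩ : ∃ sv, evalS g v₂ = some sv := evalS_of_ne_nil hv₂
    have hsusv : su = sv := by rw [hsu, hsv] at he; injection he
    refine ⟨catMap wt u, catMap wt v₂, ?_, ?_, ?_, ?_⟩
    · rw [Ne, catMap_eq_nil_iff hne]; exact hu₂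
    · rw [Ne, catMap_eq_nil_iff hne]; exact hv₂
    · rw [evalS_catMap hwt hsu, evalS_catMap hwt hsv, hsusv]
    · have hcc : catMap (fun b => (wt b).reverse) v₂.reverse = (catMap wt v₂).reverse := by
        rw [← List.reverse_reverse (catMap (fun b => (wt b).reverse) v₂.reverse),
          catMap_reverse, List.reverse_reverse]
      rw [hcc]

end Inst
section TransInst

variable {α β : Type} [Fintype β]

/-- Transition alphabet abbreviation. -/
abbrev TransWP (α β : Type) : Type :=
  (Bool × List α) × Option α × (Bool × List α) × List (Option β)

def markerT (α β : Type) : TransWP α β := ((false, []), none, (true, []), [none])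

def startT (wt : β → List α) (ph : Bool) (b : β) : List (TransWP α β) :=
  match blk wt ph b with
  | [] => []
  | a :: rest => [((ph, []), some a, (ph, rest), [some b])]

def inT (wt : β → List α) (ph : Bool) (b : β) : List (TransWP α β) :=
  (blk wt ph b).tails.filterMap fun t =>
    match t with
    | [] => none
    | a :: rest => some ((ph, a :: rest), some a, (ph, rest), ([] : List (Option β)))

noncomputable def tsWP (wt : β → List α) : List (TransWP α β) :=
  markerT α β :: (Finset.univ : Finset β).toList.flatMap fun b =>
    [false, true].flatMap fun ph => startT wt ph b ++ inT wt ph b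

lemma mem_startT_iff {wt : β → List α} {ph : Bool} {b : β} {t : TransWP α β} :
    t ∈ startT wt ph b ↔
      ∃ a rest, blk wt ph b = a :: rest ∧ t = ((ph, []), some a, (ph, rest), [some b]) := by
  unfold startT
  split
  · next heq => simp [heq]
  · next a rest heq =>
    simp only [List.mem_singleton, heq]
    constructor
    · rintro rfl; exact ⟨a, rest, rfl, rfl⟩
    · rintro ⟨a', rest', h, rfl⟩
      obtain ⟨rfl, rfl⟩ : a = a' ∧ rest = rest' := by
        constructor <;> injection h <;> simp_all
      rfl

lemma mem_inT_iff {wt : β → List α} {ph : Bool} {b : β} {x : TransWP α β} :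
    x ∈ inT wt ph b ↔
      ∃ a rest, (a :: rest) <:+ blk wt ph b ∧
        x = ((ph, a :: rest), some a, (ph, rest), ([] : List (Option β))) := by
  unfold inT
  rw [List.mem_filterMap]
  constructor
  · rintro ⟨t, ht, hx⟩
    cases t with
    | nil => simp at hx
    | cons a rest =>
      exact ⟨a, rest, (List.mem_tails _ _).1 ht, (Option.some_injective _ hx).symm⟩
  · rintro ⟨a, rest, hsuf, rfl⟩
    exact ⟨a :: rest, (List.mem_tails _ _).2 hsuf, rfl⟩

lemma marker_mem_tsWP {wt : β → List α} : markerT α β ∈ tsWP wt :=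
  List.mem_cons_self

lemma start_mem_tsWP {wt : β → List α} {ph : Bool} {b : β} {a : α} {rest : List α}
    (h : blk wt ph b = a :: rest) :
    (((ph, []), some a, (ph, rest), [some b]) : TransWP α β) ∈ tsWP wt := by
  refine List.mem_cons_of_mem _ (List.mem_flatMap.2 ⟨b, by simp, List.mem_flatMap.2
    ⟨ph, by cases ph <;> simp, List.mem_append_left _ ?_⟩⟩)
  exact mem_startT_iff.2 ⟨a, rest, h, rfl⟩

lemma in_mem_tsWP {wt : β → List α} {ph : Bool} {b : β} {a : α} {rest : List α}
    (h : (a :: rest) <:+ blk wt ph b) :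
    (((ph, a :: rest), some a, (ph, rest), ([] : List (Option β))) : TransWP α β) ∈ tsWP wt := by
  refine List.mem_cons_of_mem _ (List.mem_flatMap.2 ⟨b, by simp, List.mem_flatMap.2
    ⟨ph, by cases ph <;> simp, List.mem_append_right _ ?_⟩⟩)
  exact mem_inT_iff.2 ⟨a, rest, h, rfl⟩

lemma tsWP_elim {wt : β → List α} {t : TransWP α β} (h : t ∈ tsWP wt) :
    t = markerT α β ∨
      (∃ ph b a rest, blk wt ph b = a :: rest ∧
        t = ((ph, []), some a, (ph, rest), [some b])) ∨
      (∃ ph a rest, t = ((ph, a :: rest), some a, (ph, rest), ([] : List (Option β)))) := by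
  rcases List.mem_cons.1 h with h | h
  · exact Or.inl h
  · obtain ⟨b, _, h⟩ := List.mem_flatMap.1 h
    obtain ⟨ph, _, h⟩ := List.mem_flatMap.1 h
    rcases List.mem_append.1 h with h | h
    · obtain ⟨a, rest, hb, rfl⟩ := mem_startT_iff.1 h
      exact Or.inr (Or.inl ⟨ph, b, a, rest, hb, rfl⟩)
    · obtain ⟨a, rest, _, rfl⟩ := mem_inT_iff.1 h
      exact Or.inr (Or.inr ⟨ph, a, rest, rfl⟩)

lemma run_consume (wt : β → List α) :
    ∀ {rest : List α} {ph : Bool} {b : β}, rest <:+ blk wt ph b →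
      Run (tsWP wt) (ph, rest) (rest.map some) (ph, []) ([] : List (Option β)) := by
  intro rest
  induction rest with
  | nil => intro ph b _; exact Run.nil _
  | cons a r ih =>
    intro ph b h
    have h2 : r <:+ blk wt ph b := (List.suffix_cons a r).trans h
    have := Run.cons (in_mem_tsWP h) (ih (b := b) h2)
    simpa using this

lemma run_block {wt : β → List α} (hne : ∀ ph b, blk wt ph b ≠ []) (ph : Bool) (b : β) :
    Run (tsWP wt) (ph, []) ((blk wt ph b).map some) (ph, []) [some b] := by
  cases hE : blk wt ph b with
  | nil => exact absurd hE (hne ph b)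
  | cons a rest =>
    have hr : rest <:+ blk wt ph b := by rw [hE]; exact List.suffix_cons a rest
    have := Run.cons (start_mem_tsWP hE) (run_consume wt hr)
    simpa [hE] using this

lemma run_cat {wt : β → List α} (hne : ∀ ph b, blk wt ph b ≠ []) (ph : Bool) :
    ∀ u : List β, Run (tsWP wt) (ph, [])
      ((catMap (blk wt ph) u).map some) (ph, []) (u.map some) := by
  intro u
  induction u with
  | nil => exact Run.nil _
  | cons b r ih =>
    have := (run_block hne ph b).append ih
    simpa [catMap] using this

lemma run_marker {wt : β → List α} :
    Run (tsWP wt) (false, ([] : List α)) [none] (true, []) [(none : Option β)] := by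
  have := Run.cons (marker_mem_tsWP (wt := wt)) (Run.nil ((true, []) : Bool × List α))
  simpa using this

lemma run_full {wt : β → List α} (hne : ∀ ph b, blk wt ph b ≠ []) (u q' : List β) :
    Run (tsWP wt) (false, [])
      ((catMap wt u).map some ++ none :: (catMap (fun b => (wt b).reverse) q').map some)
      (true, []) (u.map some ++ none :: q'.map some) := by
  have h1 := run_cat hne false u
  have h3 := run_cat hne true q'
  have hfalse : blk wt false = wt := rfl
  have htrue : blk wt true = fun b => (wt b).reverse := rfl
  rw [hfalse] at h1
  rw [htrue] at h3
  have := h1.append ((run_marker (wt := wt)).append h3)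
  simpa using this

/-- Invariant for runs ending in the accepting state. -/
def Phase (wt : β → List α) : Bool → List (Option α) → List (Option β) → Prop
  | true, w, y => ∃ q' : List β,
      w = (catMap (fun b => (wt b).reverse) q').map some ∧ y = q'.map some
  | false, w, y => ∃ u q' : List β,
      w = (catMap wt u).map some ++ none ::
        (catMap (fun b => (wt b).reverse) q').map some ∧
      y = u.map some ++ none :: q'.map some

lemma run_sound_aux {wt : β → List α} {p : Bool × List α} {w : List (Option α)}
    {r : Bool × List α} {y : List (Option β)} (h : Run (tsWP wt) p w r y) :
    r = (true, []) → ∀ ph rem, p = (ph, rem) →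
      ∃ w', w = rem.map some ++ w' ∧ Phase wt ph w' y := by
  induction h with
  | nil p' =>
    rintro rfl ph rem heq
    simp only [Prod.mk.injEq] at heq
    obtain ⟨rfl, rfl⟩ := heq
    exact ⟨[], rfl, [], rfl, rfl⟩
  | @cons p' c q' o w' r' y' ht hr ih =>
    rintro rfl ph rem rfl
    rcases tsWP_elim ht with hcase | ⟨ph', b, a, rest, hE, hcase⟩ | ⟨ph', a, rest, hcase⟩
    · simp only [markerT, Prod.mk.injEq] at hcase
      obtain ⟨⟨rfl, rfl⟩, rfl, rfl, rfl⟩ := hcase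
      obtain ⟨w'', hw, hP⟩ := ih rfl true [] rfl
      rw [List.map_nil, List.nil_append] at hw
      subst hw
      obtain ⟨qs, rfl, rfl⟩ := hP
      exact ⟨none :: (catMap (fun b => (wt b).reverse) qs).map some,
        rfl, [], qs, rfl, rfl⟩
    · simp only [Prod.mk.injEq] at hcase
      obtain ⟨⟨hph, rfl⟩, rfl, rfl, rfl⟩ := hcase
      subst hph
      obtain ⟨w'', hw, hP⟩ := ih rfl _ rest rfl
      subst hw
      cases ph with
      | true =>
        obtain ⟨qs, rfl, rfl⟩ := hP
        refine ⟨some a :: (rest.map some ++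
          (catMap (fun b => (wt b).reverse) qs).map some), rfl, b :: qs, ?_, rfl⟩
        have hb : blk wt true b = (wt b).reverse := rfl
        rw [catMap, List.map_append, ← hb, hE]
        simp
      | false =>
        obtain ⟨us, qs, rfl, rfl⟩ := hP
        refine ⟨some a :: (rest.map some ++ ((catMap wt us).map some ++ none ::
          (catMap (fun b => (wt b).reverse) qs).map some)), rfl, b :: us, qs, ?_, rfl⟩
        have hb : blk wt false b = wt b := rfl
        rw [catMap, List.map_append, ← hb, hE]
        simp
    · simp only [Prod.mk.injEq] at hcase
      obtain ⟨⟨hph, rfl⟩, rfl, rfl, rfl⟩ := hcase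
      subst hph
      obtain ⟨w'', hw, hP⟩ := ih rfl _ rest rfl
      subst hw
      exact ⟨w'', by simp, hP⟩

end TransInst
section Final

variable {S : Type*} [Semigroup S] {α β : Type} [Fintype β] {S₀ : Subsemigroup S}
  {f : α → S} {g : β → S₀} {wt : β → List α}

lemma transduce_eq (hwt : ∀ b, evalS f (wt b) = some ((g b : S₀) : S))
    (hne : ∀ ph b, blk wt ph b ≠ []) :
    {y | ∃ w ∈ wordProblem f, Run (tsWP wt) (false, []) w (true, []) y} = wordProblem g := by
  ext y
  simp only [Set.mem_setOf_eq]
  constructor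
  · rintro ⟨w, hw, hrun⟩
    obtain ⟨w', hw', hP⟩ := run_sound_aux hrun rfl false [] rfl
    rw [List.map_nil, List.nil_append] at hw'
    subst hw'
    obtain ⟨u, q', rfl, rfl⟩ := hP
    exact (key hwt u q').1 hw
  · rintro ⟨u, v, hu, hv, he, rfl⟩
    refine ⟨_, (key hwt u v.reverse).2 ⟨u, v, hu, hv, he, rfl⟩, ?_⟩
    exact run_full hne u v.reverse

/-- The translation of a word over `Option β` into a word over `Option α`. -/
def TT (wt : β → List α) : Bool → List (Option β) → List (Option α)
  | _, [] => []
  | _, none :: r => none :: TT wt true r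
  | ph, some b :: r => (blk wt ph b).map some ++ TT wt ph r

variable {σ : Type}

lemma dfa_evalFrom_append {γ τ : Type*} (M : DFA γ τ) (s : τ) (x y : List γ) :
    M.evalFrom s (x ++ y) = M.evalFrom (M.evalFrom s x) y := by
  simp [DFA.evalFrom, List.foldl_append]

/-- The DFA for the word problem of the subsemigroup. -/
def MW (M : DFA (Option α) σ) (wt : β → List α) : DFA (Option β) (σ × Bool) where
  step := fun sp c =>
    match c with
    | none => (M.step sp.1 none, true)
    | some b => (M.evalFrom sp.1 ((blk wt sp.2 b).map some), sp.2)
  start := (M.start, false)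
  accept := {sp | sp.1 ∈ M.accept ∧ sp.2 = true}

lemma MW_evalFrom (M : DFA (Option α) σ) :
    ∀ (x : List (Option β)) (s : σ) (ph : Bool),
      (MW M wt).evalFrom (s, ph) x =
        (M.evalFrom s (TT wt ph x), ph || x.any Option.isNone) := by
  intro x
  induction x with
  | nil => intro s ph; simp [TT, DFA.evalFrom]
  | cons c r ih =>
    intro s ph
    cases c with
    | none =>
      have h1 : (MW M wt).evalFrom (s, ph) (none :: r) =
          (MW M wt).evalFrom (M.step s none, true) r := rfl
      have h2 : ∀ l, M.evalFrom s (none :: l) = M.evalFrom (M.step s none) l := fun l => rfl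
      rw [h1, ih]
      simp [TT, h2]
    | some b =>
      have h1 : (MW M wt).evalFrom (s, ph) (some b :: r) =
          (MW M wt).evalFrom (M.evalFrom s ((blk wt ph b).map some), ph) r := rfl
      rw [h1, ih]
      simp [TT, dfa_evalFrom_append]

lemma TT_map_some : ∀ (u : List β) (r : List (Option β)) (ph : Bool),
    TT wt ph (u.map some ++ r) = (catMap (blk wt ph) u).map some ++ TT wt ph r := by
  intro u
  induction u with
  | nil => intro r ph; rfl
  | cons b t ih => intro r ph; simp [TT, catMap, ih, List.append_assoc]

lemma none_mem_TT {r : List (Option β)} : ∀ {ph : Bool}, none ∈ r → none ∈ TT wt ph r := by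
  induction r with
  | nil => intro ph h; simp at h
  | cons c t ih =>
    intro ph h
    cases c with
    | none => simp [TT]
    | some b =>
      simp only [List.mem_cons, reduceCtorEq, false_or] at h
      simp only [TT, List.mem_append]
      exact Or.inr (ih h)

lemma MW_accepts (hwt : ∀ b, evalS f (wt b) = some ((g b : S₀) : S))
    {M : DFA (Option α) σ} (hM : M.accepts = wordProblem f) :
    (MW M wt).accepts = wordProblem g := by
  have hfalse : blk wt false = wt := rfl
  have htrue : blk wt true = fun b => (wt b).reverse := rfl
  ext x
  have heval : (MW M wt).eval x = (M.evalFrom M.start (TT wt false x),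
      false || x.any Option.isNone) := MW_evalFrom M x M.start false
  have hmem : x ∈ (MW M wt).accepts ↔
      (TT wt false x ∈ M.accepts ∧ (x.any Option.isNone) = true) := by
    rw [DFA.mem_accepts]
    show (MW M wt).eval x ∈ (MW M wt).accept ↔ _
    rw [heval]
    simp [MW, DFA.mem_accepts, DFA.eval]
  rw [hmem, hM]
  constructor
  · rintro ⟨hWP, hany⟩
    have hnone : (none : Option β) ∈ x := by
      simp only [List.any_eq_true, Option.isNone_iff_eq_none] at hany
      obtain ⟨a, ha, rfl⟩ := hany
      exact ha
    obtain ⟨u, r, rfl⟩ := first_marker_decomp hnone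
    rw [TT_map_some, hfalse] at hWP
    have hTTr : TT wt false (none :: r) = none :: TT wt true r := rfl
    rw [hTTr] at hWP
    have hrnone : (none : Option β) ∉ r := by
      intro hin
      obtain ⟨u₁, v₁, hu₁, hv₁, he, heq⟩ := hWP
      obtain ⟨-, h2⟩ := marker_decomp (none_not_mem_map_some _) (none_not_mem_map_some _) heq
      have : (none : Option α) ∈ v₁.reverse.map some := h2 ▸ none_mem_TT hin
      exact none_not_mem_map_some _ this
    obtain ⟨q', rfl⟩ := eq_map_some_of_none_not_mem hrnone
    have hTTq : TT wt true (q'.map some) =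
        (catMap (fun b => (wt b).reverse) q').map some := by
      have := TT_map_some (wt := wt) q' [] true
      rw [htrue] at this
      simpa [TT] using this
    rw [hTTq] at hWP
    exact (key hwt u q').1 hWP
  · rintro ⟨u, v, hu, hv, he, rfl⟩
    constructor
    · rw [TT_map_some, hfalse]
      have hTTr : TT wt false (none :: v.reverse.map some) =
          none :: TT wt true (v.reverse.map some) := rfl
      rw [hTTr]
      have hTTq : TT wt true (v.reverse.map some) =
          (catMap (fun b => (wt b).reverse) v.reverse).map some := by
        have := TT_map_some (wt := wt) v.reverse [] true
        rw [htrue] at this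
        simpa [TT] using this
      rw [hTTq]
      exact (key hwt u v.reverse).2 ⟨u, v, hu, hv, he, rfl⟩
    · simp

end Final
end WPAux

/-- If the word problem of a semigroup `S` is context-free for some choice of
generators, then the word problem of every finitely generated subsemigroup of
`S` (with respect to any choice of generators of the subsemigroup) is
context-free; the same holds with `regular` in place of `context-free`. -/
theorem wordProblem_subsemigroup {S : Type*} [Semigroup S]
    {α : Type} [Fintype α] (f : α → S) (hf : IsChoice f)
    (S₀ : Subsemigroup S) {β : Type} [Fintype β] (g : β → S₀) (hg : IsChoice g) :
    ((wordProblem f).IsContextFree → (wordProblem g).IsContextFree) ∧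
    ((wordProblem f).IsRegular → (wordProblem g).IsRegular) := by
  classical
  have hws : ∀ b : β, ∃ w : List α, evalS f w = some ((g b : S₀) : S) := fun b => hf _
  choose wt hwt using hws
  have hne : ∀ ph b, WPAux.blk wt ph b ≠ [] :=
    WPAux.blk_ne_nil (f := f) (fun b => by rw [hwt b]; rfl)
  constructor
  · intro h
    rw [← WPAux.transduce_eq hwt hne]
    exact WPAux.isContextFree_transduce h (WPAux.tsWP wt) (false, []) (true, [])
  · rintro ⟨σ, hfin, M, hM⟩
    exact ⟨σ × Bool, @instFintypeProd σ Bool hfin _, WPAux.MW M wt, WPAux.MW_accepts hwt hM⟩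
end

section
/- For any choice of generators Σ⁺ → S of a finitely generated semigroup S, the word problem of S is a regular language if and only if S is finite. -/
section Aux

variable {α S : Type*} [Semigroup S] (f : α → S)

/-- accumulate a letter on the right -/
def pushL (f : α → S) : Option S → α → Option S
  | none, a => some (f a)
  | some s, a => some (s * f a)

/-- accumulate a letter on the left -/
def pushR (f : α → S) : Option S → α → Option S
  | none, a => some (f a)
  | some t, a => some (f a * t)

lemma foldl_pushL_some (s : S) (u : List α) :
    u.foldl (pushL f) (some s) = some (u.foldl (fun s b => s * f b) s) := by
  induction u generalizing s with
  | nil => rfl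
  | cons a as ih => simp [pushL, ih]

lemma foldl_pushL_none (u : List α) : u.foldl (pushL f) none = evalS f u := by
  cases u with
  | nil => rfl
  | cons a as => simp [evalS, pushL, foldl_pushL_some]

lemma mul_foldl (c s : S) (u : List α) :
    c * u.foldl (fun s b => s * f b) s = u.foldl (fun s b => s * f b) (c * s) := by
  induction u generalizing s with
  | nil => rfl
  | cons a as ih => simp only [List.foldl_cons, ih, mul_assoc]

lemma foldl_pushR_reverse (v : List α) :
    v.reverse.foldl (pushR f) none = evalS f v := by
  induction v with
  | nil => rfl
  | cons a as ih =>
    rw [List.reverse_cons, List.foldl_append, ih]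
    cases as with
    | nil => rfl
    | cons b bs => simp [evalS, pushR, mul_foldl]

/-- the DFA recognizing the word problem -/
def wpDFA (f : α → S) : DFA (Option α) (Option (Option S × Option (Option S))) where
  step
    | none, _ => none
    | some (l, none), some a => some (pushL f l a, none)
    | some (none, none), none => none
    | some (some s, none), none => some (some s, some none)
    | some (l, some r), some a => some (l, some (pushR f r a))
    | some (_, some _), none => none
  start := some (none, none)
  accept := { q | ∃ s : S, q = some (some s, some (some s)) }

lemma wpDFA_step_dead (c : Option α) : (wpDFA f).step none c = none := by
  cases c <;> rfl

lemma wpDFA_step_some1 (l : Option S) (a : α) :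
    (wpDFA f).step (some (l, none)) (some a) = some (pushL f l a, none) := by
  cases l <;> rfl

lemma wpDFA_step_hash0 : (wpDFA f).step (some (none, none)) none = none := by rfl

lemma wpDFA_step_hash (s : S) :
    (wpDFA f).step (some (some s, none)) none = some (some s, some none) := by rfl

lemma wpDFA_step_some2 (l r : Option S) (a : α) :
    (wpDFA f).step (some (l, some r)) (some a) = some (l, some (pushR f r a)) := by
  cases l <;> rfl

lemma wpDFA_step_hash2 (l r : Option S) :
    (wpDFA f).step (some (l, some r)) none = none := by
  cases l <;> rfl

lemma wpDFA_evalFrom_cons (q : Option (Option S × Option (Option S)))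
    (c : Option α) (x : List (Option α)) :
    (wpDFA f).evalFrom q (c :: x) = (wpDFA f).evalFrom ((wpDFA f).step q c) x := rfl

lemma wpDFA_phase1 (l : Option S) (u : List α) :
    (wpDFA f).evalFrom (some (l, none)) (u.map some) = some (u.foldl (pushL f) l, none) := by
  induction u generalizing l with
  | nil => rfl
  | cons a as ih =>
    rw [List.map_cons, List.foldl_cons, wpDFA_evalFrom_cons, wpDFA_step_some1]
    exact ih _

lemma wpDFA_phase2 (s : S) (r : Option S) (y : List α) :
    (wpDFA f).evalFrom (some (some s, some r)) (y.map some)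
      = some (some s, some (y.foldl (pushR f) r)) := by
  induction y generalizing r with
  | nil => rfl
  | cons a as ih =>
    rw [List.map_cons, List.foldl_cons, wpDFA_evalFrom_cons, wpDFA_step_some2]
    exact ih _

lemma wpDFA_dead (x : List (Option α)) : (wpDFA f).evalFrom none x = none := by
  induction x with
  | nil => rfl
  | cons c cs ih => rw [wpDFA_evalFrom_cons, wpDFA_step_dead]; exact ih

lemma wpDFA_eval_cases (x : List (Option α)) :
    (wpDFA f).eval x = none ∨
    (∃ u : List α, x = u.map some ∧
        (wpDFA f).eval x = some (u.foldl (pushL f) none, none)) ∨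
    (∃ (u y : List α) (s : S), x = u.map some ++ none :: y.map some ∧
        evalS f u = some s ∧
        (wpDFA f).eval x = some (some s, some (y.foldl (pushR f) none))) := by
  induction x using List.reverseRecOn with
  | nil => exact Or.inr (Or.inl ⟨[], rfl, rfl⟩)
  | append_singleton x c ih =>
    have hev : (wpDFA f).eval (x ++ [c]) = (wpDFA f).step ((wpDFA f).eval x) c :=
      DFA.eval_append_singleton _ _ _
    rcases ih with h | ⟨u, rfl, h⟩ | ⟨u, y, s, rfl, hu, h⟩
    · left; rw [hev, h]; exact wpDFA_step_dead f c
    · cases c with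
      | some a =>
        refine Or.inr (Or.inl ⟨u ++ [a], by simp, ?_⟩)
        rw [hev, h, List.foldl_append, wpDFA_step_some1]
        simp
      | none =>
        cases hl : u.foldl (pushL f) none with
        | none => left; rw [hev, h, hl]; exact wpDFA_step_hash0 f
        | some s =>
          refine Or.inr (Or.inr ⟨u, [], s, by simp, ?_, ?_⟩)
          · rw [← foldl_pushL_none, hl]
          · rw [hev, h, hl]; exact wpDFA_step_hash f s
    · cases c with
      | some a =>
        refine Or.inr (Or.inr ⟨u, y ++ [a], s, by simp, hu, ?_⟩)
        rw [hev, h, List.foldl_append, wpDFA_step_some2]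
        simp
      | none => left; rw [hev, h]; exact wpDFA_step_hash2 f _ _

lemma wpDFA_accepts : (wpDFA f).accepts = wordProblem f := by
  ext x
  rw [DFA.mem_accepts]
  constructor
  · intro hx
    obtain ⟨s, hs⟩ : ∃ s : S, (wpDFA f).eval x = some (some s, some (some s)) := hx
    rcases wpDFA_eval_cases f x with h | ⟨u, rfl, h⟩ | ⟨u, y, t, rfl, hu, h⟩
    · rw [h] at hs; exact absurd hs (by simp)
    · rw [h] at hs; simp at hs
    · rw [h] at hs
      obtain ⟨h1, h2⟩ : (t : Option S) = some s ∧ (some (y.foldl (pushR f) none) : Option (Option S)) = some (some s) := by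
        simpa using hs
      refine ⟨u, y.reverse, ?_, ?_, ?_, by simp⟩
      · rintro rfl; simp [evalS] at hu
      · rintro hy
        have : y = [] := by simpa using congrArg List.reverse hy
        subst this
        simp at h2
      · have hv : evalS f y.reverse = some s := by
          rw [← foldl_pushR_reverse, List.reverse_reverse]
          simpa using h2
        rw [hu, hv, h1]
  · rintro ⟨u, v, hu, hv, huv, rfl⟩
    obtain ⟨s, hs⟩ : ∃ s : S, evalS f u = some s := by
      cases u with
      | nil => exact absurd rfl hu
      | cons a as => exact ⟨_, rfl⟩
    have hvs : evalS f v = some s := huv ▸ hs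
    have key : (wpDFA f).eval (u.map some ++ none :: v.reverse.map some)
        = some (some s, some (some s)) := by
      rw [show u.map some ++ none :: v.reverse.map some
            = (u.map some ++ [none]) ++ v.reverse.map some by simp]
      rw [DFA.eval, DFA.evalFrom_of_append, DFA.evalFrom_append_singleton]
      have h1 : (wpDFA f).evalFrom (wpDFA f).start (u.map some) = some (some s, none) := by
        have := wpDFA_phase1 f none u
        rw [foldl_pushL_none, hs] at this
        exact this
      rw [h1]
      rw [wpDFA_step_hash]
      have := wpDFA_phase2 f s none v.reverse
      rw [foldl_pushR_reverse, hvs] at this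
      exact this
    exact ⟨s, key⟩

lemma map_some_append_inj {β : Type*} {u u' : List β} {y y' : List (Option β)}
    (h : u.map some ++ none :: y = u'.map some ++ none :: y') : u = u' ∧ y = y' := by
  induction u generalizing u' with
  | nil =>
    cases u' with
    | nil => simpa using h
    | cons b bs => simp at h
  | cons a as ih =>
    cases u' with
    | nil => simp at h
    | cons b bs =>
      simp only [List.map_cons, List.cons_append, List.cons.injEq] at h
      obtain ⟨h1, h2⟩ := h
      obtain ⟨rfl, rfl⟩ := ih h2
      exact ⟨by rw [Option.some.injEq] at h1; rw [h1], rfl⟩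

end Aux

/-- For any choice of generators of a finitely generated semigroup `S`, the word
problem of `S` is a regular language if and only if `S` is finite. -/
theorem wordProblem_regular_iff_finite {S : Type*} [Semigroup S]
    {α : Type} [Fintype α] (f : α → S) (hf : IsChoice f) :
    (wordProblem f).IsRegular ↔ Finite S := by
  constructor
  · rintro ⟨σ, instσ, M, hM⟩
    choose w hw using hf
    have hwne : ∀ s, w s ≠ [] := by
      intro s h
      have := hw s
      rw [h] at this
      simp [evalS] at this
    have hginj : Function.Injective
        (fun s => M.evalFrom M.start ((w s).map some ++ [none]) : S → σ) := by
      intro s t hst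
      simp only at hst
      have hmem : (w s).map some ++ none :: (w s).reverse.map some ∈ wordProblem f :=
        ⟨w s, w s, hwne s, hwne s, rfl, rfl⟩
      rw [← hM] at hmem
      rw [DFA.mem_accepts,
        show (w s).map some ++ none :: (w s).reverse.map some
          = ((w s).map some ++ [none]) ++ (w s).reverse.map some by simp,
        DFA.eval, DFA.evalFrom_of_append, hst] at hmem
      have hmem' : (w t).map some ++ none :: (w s).reverse.map some ∈ M.accepts := by
        rw [DFA.mem_accepts,
          show (w t).map some ++ none :: (w s).reverse.map some
            = ((w t).map some ++ [none]) ++ (w s).reverse.map some by simp,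
          DFA.eval, DFA.evalFrom_of_append]
        exact hmem
      rw [hM] at hmem'
      obtain ⟨u, v, hune, hvne, huv, heq⟩ := hmem'
      obtain ⟨h1, h2⟩ := map_some_append_inj heq
      have hveq : w s = v := by
        have hrev : (w s).reverse = v.reverse :=
          List.map_injective_iff.mpr (Option.some_injective _) h2
        simpa using congrArg List.reverse hrev
      rw [← h1, ← hveq, hw t, hw s] at huv
      exact (Option.some.inj huv).symm
    exact Finite.of_injective _ hginj
  · intro hfin
    have : Fintype S := Fintype.ofFinite S
    let e : S ≃ Fin (Fintype.card S) := Fintype.equivFin S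
    let g : Option (Option S × Option (Option S))
        ≃ Option (Option (Fin (Fintype.card S)) × Option (Option (Fin (Fintype.card S)))) :=
      Equiv.optionCongr ((e.optionCongr).prodCongr (e.optionCongr.optionCongr))
    exact ⟨_, inferInstance, DFA.reindex g (wpDFA f),
      by rw [DFA.accepts_reindex, wpDFA_accepts]⟩
end
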